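/- arXiv:2604.26502 — 7 statements merged into one kernel-verified Lean document; each statement's English description precedes it below -/
import Mathlib

section
/- Let K be a field, n ≥ 1, I ⊆ [n-1], and A_1, ..., A_k ∈ ASM^I(n). If A ∈ ASM(n) satisfies X_{A_1} ∪ ⋯ ∪ X_{A_k} = X_A, then A ∈ ASM^I(n). -/
/-- The rank (corner sum) matrix entry `r_A(i,j)` (1-based `i j`, zero when `i = 0` or `j = 0`). -/
def rk (n : ℕ) (A : Matrix (Fin n) (Fin n) ℤ) (i j : ℕ) : ℤ :=
  ∑ p : Fin n, ∑ q : Fin n, if p.1 < i ∧ q.1 < j then A p q else 0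

/-- `A` is an alternating sign matrix: entries in `{-1,0,1}`, the nonzero entries of each row
and column alternate in sign and sum to `1`; equivalently all partial row and column sums are
`0` or `1` and every full row and column sums to `1`. -/
def IsASM (n : ℕ) (A : Matrix (Fin n) (Fin n) ℤ) : Prop :=
  (∀ i j, A i j = -1 ∨ A i j = 0 ∨ A i j = 1) ∧
  (∀ i : Fin n, ∀ j : ℕ, j ≤ n →
      (∑ q : Fin n, if q.1 < j then A i q else 0) = 0 ∨
      (∑ q : Fin n, if q.1 < j then A i q else 0) = 1) ∧
  (∀ j : Fin n, ∀ i : ℕ, i ≤ n →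
      (∑ p : Fin n, if p.1 < i then A p j else 0) = 0 ∨
      (∑ p : Fin n, if p.1 < i then A p j else 0) = 1) ∧
  (∀ i : Fin n, (∑ q : Fin n, A i q) = 1) ∧
  (∀ j : Fin n, (∑ p : Fin n, A p j) = 1)

/-- `A ∈ ASM^I(n)`: `A` is an ASM and for every `i ∈ I` and `j ∈ [n]`,
`r_A(i,j) = r_A(i-1,j) + 1` or `r_A(i,j) = r_A(i+1,j)`. -/
def InASMI (n : ℕ) (I : Finset ℕ) (A : Matrix (Fin n) (Fin n) ℤ) : Prop :=
  IsASM n A ∧ ∀ i ∈ I, ∀ j, 1 ≤ j → j ≤ n →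
    rk n A i j = rk n A (i - 1) j + 1 ∨ rk n A i j = rk n A (i + 1) j

/-- Bruhat order on `ASM(n)`: `A ≤ B` iff `r_A(i,j) ≥ r_B(i,j)` for all `i,j ∈ [n]`. -/
def blE (n : ℕ) (A B : Matrix (Fin n) (Fin n) ℤ) : Prop :=
  ∀ i j, 1 ≤ i → i ≤ n → 1 ≤ j → j ≤ n → rk n B i j ≤ rk n A i j

/-- Permutation matrix of `w`. -/
def permMatrix (n : ℕ) (w : Equiv.Perm (Fin n)) : Matrix (Fin n) (Fin n) ℤ :=
  Matrix.of fun i j => if w i = j then 1 else 0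

/-- `w ∈ S_n^I`: `w(i) < w(i+1)` for all `i ∈ I` (indices 1-based). -/
def IsMinRep (n : ℕ) (I : Finset ℕ) (w : Equiv.Perm (Fin n)) : Prop :=
  ∀ p q : Fin n, (p.1 + 1) ∈ I → q.1 = p.1 + 1 → w p < w q

/-- Identity matrix. -/
def idMat (n : ℕ) : Matrix (Fin n) (Fin n) ℤ :=
  Matrix.of fun i j => if i = j then 1 else 0

/-- Rank of the top-left `i × j` submatrix of `Z` (for `i, j ≤ n`). -/
noncomputable def tlRank {K : Type*} [Field K] (n : ℕ) (Z : Matrix (Fin n) (Fin n) K)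
    (i j : ℕ) : ℕ :=
  (Matrix.of fun (p : Fin i) (q : Fin j) =>
      if h : p.1 < n ∧ q.1 < n then Z ⟨p.1, h.1⟩ ⟨q.1, h.2⟩ else 0).rank

/-- Membership in the ASM variety `X_A`: all top-left ranks of `Z` are bounded by `r_A`. -/
def memX {K : Type*} [Field K] (n : ℕ) (A : Matrix (Fin n) (Fin n) ℤ)
    (Z : Matrix (Fin n) (Fin n) K) : Prop :=
  ∀ i j, 1 ≤ i → i ≤ n → 1 ≤ j → j ≤ n → (tlRank n Z i j : ℤ) ≤ rk n A i j

/-!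
For each column `j`, an ASM `B` has a witness `Z ∈ X_B` whose top-left ranks in column `j` are
exactly `r_B(·, j)`: put a single `1` in every row where `r_B(·, j)` increases, placed so that
later jumps sit further left, which keeps `Z` in `X_B` because `r_B(a, ·)` grows by at most
one per column. Hence `X_B ⊆ X_A` forces `r_B ≤ r_A`. If `X_A = ⋃ X_{A_t}`, the
witness for `A` lies in some `X_{A_t}`, so `r_{A_t}(·, j)` is at most `r_A(·, j)` everywhere and
at least it in rows `i - 1` and `i + 1`; since rank matrices step by `0` or `1`, the `ASM^I`
condition of `A_t` at a row `i ∈ I` transfers to `A`.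
-/

open scoped Matrix

section RankMatrix

variable {n : ℕ} {B : Matrix (Fin n) (Fin n) ℤ}

theorem rk_transpose (B : Matrix (Fin n) (Fin n) ℤ) (i j : ℕ) : rk n Bᵀ i j = rk n B j i := by
  simp only [rk, Matrix.transpose_apply]
  rw [Finset.sum_comm]
  simp only [and_comm]

theorem IsASM.transpose (hB : IsASM n B) : IsASM n Bᵀ :=
  ⟨fun i j => hB.1 j i, hB.2.2.1, hB.2.1, hB.2.2.2.2, hB.2.2.2.1⟩

theorem rk_zero_left (B : Matrix (Fin n) (Fin n) ℤ) (j : ℕ) : rk n B 0 j = 0 := by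
  simp [rk]

theorem rk_succ_left (B : Matrix (Fin n) (Fin n) ℤ) (a j : ℕ) :
    rk n B (a + 1) j = rk n B a j + ∑ p, ∑ q, if p.1 = a ∧ q.1 < j then B p q else 0 := by
  simp only [rk, ← Finset.sum_add_distrib]
  refine Finset.sum_congr rfl fun p _ => Finset.sum_congr rfl fun q _ => ?_
  split_ifs <;> omega

theorem rk_succ_left_of_lt (B : Matrix (Fin n) (Fin n) ℤ) {a : ℕ} (ha : a < n) (j : ℕ) :
    rk n B (a + 1) j = rk n B a j + ∑ q, if q.1 < j then B ⟨a, ha⟩ q else 0 := by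
  rw [rk_succ_left, Finset.sum_eq_single (⟨a, ha⟩ : Fin n)]
  · simp
  · exact fun p _ hp => Finset.sum_eq_zero fun q _ => if_neg fun h => hp (Fin.ext h.1)
  · simp

theorem rk_succ_left_of_le (B : Matrix (Fin n) (Fin n) ℤ) {a : ℕ} (ha : n ≤ a) (j : ℕ) :
    rk n B (a + 1) j = rk n B a j := by
  rw [rk_succ_left, add_eq_left]
  exact Finset.sum_eq_zero fun p _ => Finset.sum_eq_zero fun q _ => if_neg (by omega)

theorem IsASM.rk_succ_left_eq_or (hB : IsASM n B) (a j : ℕ) :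
    rk n B (a + 1) j = rk n B a j ∨ rk n B (a + 1) j = rk n B a j + 1 := by
  by_cases ha : a < n
  · have hrow : (∑ q : Fin n, if q.1 < j then B ⟨a, ha⟩ q else 0) =
        ∑ q : Fin n, if q.1 < min j n then B ⟨a, ha⟩ q else 0 :=
      Finset.sum_congr rfl fun q _ => if_congr (by have := q.2; omega) rfl rfl
    rw [rk_succ_left_of_lt B ha, hrow]
    rcases hB.2.1 ⟨a, ha⟩ (min j n) (min_le_right _ _) with h | h <;> rw [h] <;> simp
  · exact Or.inl (rk_succ_left_of_le B (not_lt.1 ha) j)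

theorem IsASM.rk_succ_right_eq_or (hB : IsASM n B) (i b : ℕ) :
    rk n B i (b + 1) = rk n B i b ∨ rk n B i (b + 1) = rk n B i b + 1 := by
  simpa only [rk_transpose] using hB.transpose.rk_succ_left_eq_or b i

theorem IsASM.monotone_rk_left (hB : IsASM n B) (j : ℕ) : Monotone (rk n B · j) :=
  monotone_nat_of_le_succ fun a => by rcases hB.rk_succ_left_eq_or a j with h | h <;> omega

theorem IsASM.monotone_rk_right (hB : IsASM n B) (i : ℕ) : Monotone (rk n B i ·) :=
  monotone_nat_of_le_succ fun b => by rcases hB.rk_succ_right_eq_or i b with h | h <;> omega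

theorem IsASM.antitone_rk_sub_right (hB : IsASM n B) (i : ℕ) :
    Antitone fun b : ℕ => rk n B i b - b :=
  antitone_nat_of_succ_le fun b => by
    rcases hB.rk_succ_right_eq_or i b with h | h <;> push_cast <;> omega

theorem IsASM.rk_nonneg (hB : IsASM n B) (i j : ℕ) : 0 ≤ rk n B i j :=
  rk_zero_left B j ▸ hB.monotone_rk_left j (Nat.zero_le i)

theorem IsASM.rk_le_rk_add (hB : IsASM n B) (i b j : ℕ) :
    rk n B i j ≤ rk n B i b + max ((j : ℤ) - b) 0 := by
  rcases le_total j b with hjb | hbj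
  · have : rk n B i j ≤ rk n B i b := hB.monotone_rk_right i hjb
    omega
  · have : rk n B i j - j ≤ rk n B i b - b := hB.antitone_rk_sub_right i hbj
    omega

theorem IsASM.rk_le_right (hB : IsASM n B) (i j : ℕ) : rk n B i j ≤ j := by
  simpa [rk] using hB.rk_le_rk_add i 0 j

open Finset in
theorem IsASM.sum_range_jump_indicator (hB : IsASM n B) (a j : ℕ) (c : ℤ) :
    ∑ p ∈ range a, (if rk n B (p + 1) j = rk n B p j + 1 ∧ c < rk n B (p + 1) j then 1 else 0)
      = max (rk n B a j - c) 0 - max (-c) 0 := by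
  have step : ∀ p, (if rk n B (p + 1) j = rk n B p j + 1 ∧ c < rk n B (p + 1) j then 1 else 0)
      = max (rk n B (p + 1) j - c) 0 - max (rk n B p j - c) 0 := fun p => by
    rcases hB.rk_succ_left_eq_or p j with h | h <;> split_ifs <;> omega
  rw [sum_congr rfl fun p _ => step p, sum_range_sub fun p => max (rk n B p j - c) 0, rk_zero_left,
    zero_sub]

end RankMatrix

theorem Matrix.rank_eq_card_of_row_eq_single {m ι K : Type*} [Fintype m] [Fintype ι]
    [DecidableEq ι] [Field K] (M : Matrix m ι K) (R : Finset m) (c : R → ι)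
    (hc : Function.Injective c) (hR : ∀ p : R, M p = Pi.single (c p) 1)
    (h0 : ∀ p ∉ R, M p = 0) : M.rank = R.card := by
  have hli : LinearIndependent K fun p : R => (Pi.single (c p) 1 : ι → K) := by
    simpa [Function.comp_def] using (Pi.basisFun K ι).linearIndependent.comp c hc
  have hspan : Submodule.span K (Set.range M.row) =
      Submodule.span K (Set.range fun p : R => (Pi.single (c p) 1 : ι → K)) := by
    refine le_antisymm (Submodule.span_le.2 ?_) (Submodule.span_mono ?_)
    · rintro _ ⟨p, rfl⟩
      by_cases hp : p ∈ R
      · exact Submodule.subset_span ⟨⟨p, hp⟩, (hR ⟨p, hp⟩).symm⟩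
      · simp [Matrix.row, h0 p hp]
    · rintro _ ⟨p, rfl⟩
      exact ⟨p, hR p⟩
  rw [Matrix.rank_eq_finrank_span_row, hspan, finrank_span_eq_card hli, Fintype.card_coe]

section ColumnWitness

variable (K : Type*) [Field K]

def columnWitness (n : ℕ) (B : Matrix (Fin n) (Fin n) ℤ) (j : ℕ) : Matrix (Fin n) (Fin n) K :=
  Matrix.of fun p q =>
    if rk n B (p.1 + 1) j = rk n B p.1 j + 1 ∧ (q.1 : ℤ) + rk n B (p.1 + 1) j = j then 1 else 0

theorem IsASM.tlRank_columnWitness {n : ℕ} {B : Matrix (Fin n) (Fin n) ℤ} (hB : IsASM n B)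
    {a b : ℕ} (ha : a ≤ n) (hb : b ≤ n) (j : ℕ) :
    (tlRank n (columnWitness K n B j) a b : ℤ)
      = max (rk n B a j - (j - b)) 0 - max ((b : ℤ) - j) 0 := by
  classical
  -- the rank counts the rows `p < a` where `r_B(·, j)` jumps to a level above `j - b`
  set R : Finset (Fin a) := Finset.univ.filter fun p =>
    rk n B (p.1 + 1) j = rk n B p.1 j + 1 ∧ (j : ℤ) - b < rk n B (p.1 + 1) j
  have hcol : ∀ p : R, ((j : ℤ) - rk n B (p.1.1 + 1) j).toNat < b := fun p => by
    have hp := (Finset.mem_filter.1 p.2).2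
    have := hB.rk_le_right (p.1.1 + 1) j
    omega
  have hinj : Function.Injective fun p : R => (⟨_, hcol p⟩ : Fin b) := by
    intro p p' hpp'
    have hp := (Finset.mem_filter.1 p.2).2
    have hp' := (Finset.mem_filter.1 p'.2).2
    have hle := hB.rk_le_right (p.1.1 + 1) j
    have hle' := hB.rk_le_right (p'.1.1 + 1) j
    have hrk : rk n B (p.1.1 + 1) j = rk n B (p'.1.1 + 1) j := by
      simp only [Fin.mk.injEq] at hpp'
      omega
    rcases lt_trichotomy p.1.1 p'.1.1 with hlt | heq | hgt
    · have : rk n B (p.1.1 + 1) j ≤ rk n B p'.1.1 j := hB.monotone_rk_left j hlt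
      omega
    · exact Subtype.ext (Fin.ext heq)
    · have : rk n B (p'.1.1 + 1) j ≤ rk n B p.1.1 j := hB.monotone_rk_left j hgt
      omega
  have hrank := Matrix.rank_eq_card_of_row_eq_single (Matrix.of fun (p : Fin a) (q : Fin b) =>
      if h : p.1 < n ∧ q.1 < n then columnWitness K n B j ⟨p.1, h.1⟩ ⟨q.1, h.2⟩ else 0) R _ hinj ?_ ?_
  · have hcount := hB.sum_range_jump_indicator a j ((j : ℤ) - b)
    rw [neg_sub] at hcount
    rw [tlRank, hrank, Finset.card_filter, Nat.cast_sum, ← hcount,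
      ← Fin.sum_univ_eq_sum_range (fun p => if rk n B (p + 1) j = rk n B p j + 1 ∧
        (j : ℤ) - b < rk n B (p + 1) j then (1 : ℤ) else 0)]
    push_cast
    rfl
  · intro p
    funext q
    have hp := (Finset.mem_filter.1 p.2).2
    have hle := hB.rk_le_right (p.1.1 + 1) j
    simp only [Matrix.of_apply, dif_pos (And.intro (lt_of_lt_of_le p.1.2 ha) (lt_of_lt_of_le q.2 hb)),
      columnWitness, Pi.single_apply, Fin.ext_iff]
    exact if_congr (by omega) rfl rfl
  · intro p hp
    funext q
    simp only [R, Finset.mem_filter, Finset.mem_univ, true_and] at hp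
    simp only [Matrix.of_apply, dif_pos (And.intro (lt_of_lt_of_le p.2 ha) (lt_of_lt_of_le q.2 hb)),
      columnWitness, Pi.zero_apply]
    exact if_neg (by omega)

theorem IsASM.memX_columnWitness {n : ℕ} {B : Matrix (Fin n) (Fin n) ℤ} (hB : IsASM n B)
    (j : ℕ) : memX n B (columnWitness K n B j) := by
  intro a b _ ha _ hb
  rw [hB.tlRank_columnWitness K ha hb]
  have := hB.rk_le_rk_add a b j
  have := hB.rk_nonneg a b
  omega

variable {K}

theorem IsASM.rk_le_of_memX_columnWitness {n : ℕ} {A B : Matrix (Fin n) (Fin n) ℤ}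
    (hB : IsASM n B) {j : ℕ} (hj1 : 1 ≤ j) (hjn : j ≤ n)
    (hA : memX n A (columnWitness K n B j)) {a : ℕ} (ha : a ≤ n) : rk n B a j ≤ rk n A a j := by
  rcases Nat.eq_zero_or_pos a with rfl | ha1
  · simp [rk_zero_left]
  · have := hA a j ha1 ha hj1 hjn
    rw [hB.tlRank_columnWitness K ha hjn] at this
    have := hB.rk_nonneg a j
    omega

end ColumnWitness

theorem stmt9_general (K : Type*) [Field K] (n : ℕ)
    (I : Finset ℕ) (hI : I ⊆ Finset.Icc 1 (n - 1)) (k : ℕ)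
    (As : Fin k → Matrix (Fin n) (Fin n) ℤ) (hAs : ∀ t, InASMI n I (As t))
    (A : Matrix (Fin n) (Fin n) ℤ) (hA : IsASM n A)
    (hunion : ∀ Z : Matrix (Fin n) (Fin n) K, memX n A Z ↔ ∃ t, memX n (As t) Z) :
    InASMI n I A := by
  refine ⟨hA, fun i hi j hj1 hjn => ?_⟩
  obtain ⟨hi1, hin⟩ := Finset.mem_Icc.1 (hI hi)
  obtain ⟨t, ht⟩ := (hunion _).1 (hA.memX_columnWitness K j)
  have hAt := hAs t
  have hsub : memX n A (columnWitness K n (As t) j) :=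
    (hunion _).2 ⟨t, hAt.1.memX_columnWitness K j⟩
  have hle : rk n (As t) i j ≤ rk n A i j :=
    hAt.1.rk_le_of_memX_columnWitness hj1 hjn hsub (by omega)
  have hge_below : rk n A (i - 1) j ≤ rk n (As t) (i - 1) j :=
    hA.rk_le_of_memX_columnWitness hj1 hjn ht (by omega)
  have hge_above : rk n A (i + 1) j ≤ rk n (As t) (i + 1) j :=
    hA.rk_le_of_memX_columnWitness hj1 hjn ht (by omega)
  have hstep := hA.rk_succ_left_eq_or (i - 1) j
  rw [Nat.sub_add_cancel hi1] at hstep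
  have hmono : rk n A i j ≤ rk n A (i + 1) j := hA.monotone_rk_left j (Nat.le_succ i)
  rcases hAt.2 i hi j hj1 hjn with h | h <;> omega

/-- If `A_1, …, A_k ∈ ASM^I(n)` and `X_{A_1} ∪ ⋯ ∪ X_{A_k} = X_A` for some `A ∈ ASM(n)`,
then `A ∈ ASM^I(n)`. -/
theorem stmt9 (K : Type*) [Field K] (n : ℕ) (hn : 1 ≤ n)
    (I : Finset ℕ) (hI : I ⊆ Finset.Icc 1 (n - 1)) (k : ℕ) (hk : 1 ≤ k)
    (As : Fin k → Matrix (Fin n) (Fin n) ℤ) (hAs : ∀ t, InASMI n I (As t))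
    (A : Matrix (Fin n) (Fin n) ℤ) (hA : IsASM n A)
    (hunion : ∀ Z : Matrix (Fin n) (Fin n) K, memX n A Z ↔ ∃ t, memX n (As t) Z) :
    InASMI n I A :=
  stmt9_general K n I hI k As hAs A hA hunion
end

section
/- Let n ≥ 1, I ⊆ [n-1], and s, t ∈ [n-1]. Suppose {1, 2, ..., s} ⊆ I and {t, t+1, ..., n-1} ⊆ I. Then for every A ∈ ASM^I(n), A_{i,j} ≠ -1 whenever i ∈ {1,...,s} ∪ {t,...,n-1} ∪ {s+1, n} and j ∈ [n]. -/
lemma sum_lt_succ (n k : ℕ) (hk : k < n) (v : Fin n → ℤ) :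
    (∑ p : Fin n, if p.1 < k + 1 then v p else 0) =
      (∑ p : Fin n, if p.1 < k then v p else 0) + v ⟨k, hk⟩ := by
  have h0 : (∑ p : Fin n, if p = (⟨k, hk⟩ : Fin n) then v p else 0) = v ⟨k, hk⟩ :=
    Finset.sum_ite_eq' Finset.univ _ v |>.trans (by simp)
  rw [← h0, ← Finset.sum_add_distrib]
  apply Finset.sum_congr rfl
  intro p _
  have key : p = (⟨k, hk⟩ : Fin n) ↔ p.1 = k := by
    constructor
    · intro hp; exact congrArg Fin.val hp
    · intro hp; exact Fin.ext hp
  rcases lt_trichotomy p.1 k with h | h | h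
  · have h1 : p.1 < k + 1 := by omega
    have h3 : ¬ p = ⟨k, hk⟩ := by rw [key]; omega
    simp [h, h1, h3]
  · have h1 : p.1 < k + 1 := by omega
    have h2 : ¬ p.1 < k := by omega
    have h3 : p = ⟨k, hk⟩ := key.mpr h
    simp [h1, h2, h3]
  · have h1 : ¬ p.1 < k + 1 := by omega
    have h2 : ¬ p.1 < k := by omega
    have h3 : ¬ p = ⟨k, hk⟩ := by rw [key]; omega
    simp [h1, h2, h3]

lemma sum_indicator_eq (n : ℕ) : ∀ k, k ≤ n → (∑ p : Fin n, if p.1 < k then (1:ℤ) else 0) = k := by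
  intro k
  induction k with
  | zero => simp
  | succ k ih =>
    intro hk
    rw [sum_lt_succ n k (by omega), ih (by omega)]
    push_cast; ring

def rowP (n : ℕ) (A : Matrix (Fin n) (Fin n) ℤ) (p : Fin n) (j : ℕ) : ℤ :=
  ∑ q : Fin n, if q.1 < j then A p q else 0

lemma rowP_congr (n : ℕ) (A : Matrix (Fin n) (Fin n) ℤ) {a b : ℕ}
    (ha : a < n) (hb : b < n) (hab : a = b) (j : ℕ) :
    rowP n A ⟨a, ha⟩ j = rowP n A ⟨b, hb⟩ j := by
  subst hab; rfl

lemma rk_eq (n : ℕ) (A : Matrix (Fin n) (Fin n) ℤ) (i j : ℕ) :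
    rk n A i j = ∑ p : Fin n, if p.1 < i then rowP n A p j else 0 := by
  unfold rk rowP
  apply Finset.sum_congr rfl
  intro p _
  by_cases h : p.1 < i
  · simp [h]
  · simp [h]

lemma rk_succ (n : ℕ) (A : Matrix (Fin n) (Fin n) ℤ) (k : ℕ) (hk : k < n) (j : ℕ) :
    rk n A (k + 1) j = rk n A k j + rowP n A ⟨k, hk⟩ j := by
  rw [rk_eq, rk_eq]
  exact sum_lt_succ n k hk (fun p => rowP n A p j)


/-- If `{1,…,s} ⊆ I` and `{t,…,n-1} ⊆ I`, then for `A ∈ ASM^I(n)` no entry of `A` in a row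
with index in `{1,…,s} ∪ {t,…,n-1} ∪ {s+1, n}` equals `-1`. -/
theorem stmt12 (n : ℕ) (hn : 1 ≤ n) (I : Finset ℕ) (hI : I ⊆ Finset.Icc 1 (n - 1))
    (s t : ℕ) (hs : s ∈ Finset.Icc 1 (n - 1)) (ht : t ∈ Finset.Icc 1 (n - 1))
    (h1 : Finset.Icc 1 s ⊆ I) (h2 : Finset.Icc t (n - 1) ⊆ I)
    (A : Matrix (Fin n) (Fin n) ℤ) (hA : InASMI n I A) :
    ∀ p q : Fin n,
      (p.1 + 1 ≤ s ∨ (t ≤ p.1 + 1 ∧ p.1 + 1 ≤ n - 1) ∨ p.1 + 1 = s + 1 ∨ p.1 + 1 = n) →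
      A p q ≠ -1 := by
  obtain ⟨⟨hent, hrow, hcol, hrowsum, hcolsum⟩, hcond⟩ := hA
  have hsB := Finset.mem_Icc.mp hs
  have htB := Finset.mem_Icc.mp ht
  have hrow01 : ∀ (r : Fin n) (j : ℕ), j ≤ n → rowP n A r j = 0 ∨ rowP n A r j = 1 := hrow
  intro p q hp hne
  have hq2n : q.1 + 1 ≤ n := q.2
  have f_succ : ∀ r : Fin n, rowP n A r (q.1 + 1) = rowP n A r q.1 + A r q := by
    intro r
    have h := sum_lt_succ n q.1 q.2 (A r)
    simp only [Fin.eta] at h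
    exact h
  have hq1 : rowP n A p q.1 = 1 ∧ rowP n A p (q.1 + 1) = 0 := by
    have ha := hrow01 p q.1 (le_of_lt q.2)
    have hb := hrow01 p (q.1 + 1) hq2n
    have hc := f_succ p
    rw [hne] at hc
    constructor <;> omega
  have hq0 : 1 ≤ q.1 := by
    rcases Nat.eq_zero_or_pos q.1 with h | h
    · exfalso
      have h1' := hq1.1
      rw [h] at h1'
      unfold rowP at h1'
      simp at h1'
    · exact h
  -- the reformulated ASM^I condition: for i ∈ I (1-based),
  -- either the partial sum of (0-based) row i-1 up to column j is 1,
  -- or that of row i is 0.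
  have cond : ∀ i, i ∈ I → ∀ (hi1 : i - 1 < n) (hi2 : i < n), ∀ j, 1 ≤ j → j ≤ n →
      rowP n A ⟨i - 1, hi1⟩ j = 1 ∨ rowP n A ⟨i, hi2⟩ j = 0 := by
    intro i hiI hi1 hi2 j hj1 hj2
    have hiB := Finset.mem_Icc.mp (hI hiI)
    have hc := hcond i hiI j hj1 hj2
    have e1 : rk n A i j = rk n A (i - 1) j + rowP n A ⟨i - 1, hi1⟩ j := by
      have e0 := rk_succ n A (i - 1) hi1 j
      have hi' : i - 1 + 1 = i := by omega
      rw [hi'] at e0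
      exact e0
    have e2 : rk n A (i + 1) j = rk n A i j + rowP n A ⟨i, hi2⟩ j := rk_succ n A i hi2 j
    rcases hc with hc | hc
    · left; rw [e1] at hc; linarith
    · right; rw [e2] at hc; linarith
  -- Case: p is (0-based) row ≤ s (covers 1-based rows 1..s and s+1)
  have upper : p.1 ≤ s → False := by
    intro hps
    have chain : ∀ d, d ≤ p.1 → ∀ (h : p.1 - d < n), rowP n A ⟨p.1 - d, h⟩ q.1 = 1 := by
      intro d
      induction d with
      | zero =>
        intro _ h
        have he : (⟨p.1 - 0, h⟩ : Fin n) = p := Fin.ext (show p.1 - 0 = p.1 by omega)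
        rw [he]; exact hq1.1
      | succ d ih =>
        intro hd h
        have hk : p.1 - d < n := by omega
        have ihk := ih (by omega) hk
        have hmem : p.1 - d ∈ I := h1 (Finset.mem_Icc.mpr ⟨by omega, by omega⟩)
        have hc := cond (p.1 - d) hmem (by omega) hk q.1 hq0 (le_of_lt q.2)
        rcases hc with hc | hc
        · rw [rowP_congr n A _ h (by omega)] at hc
          exact hc
        · rw [hc] at ihk; norm_num at ihk
    have hallup : ∀ (r : Fin n), r.1 ≤ p.1 → rowP n A r q.1 = 1 := by
      intro r hr
      have hc := chain (p.1 - r.1) (by omega) (by omega)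
      rw [rowP_congr n A _ r.2 (by omega)] at hc
      exact hc
    have hS := hcol q (p.1 + 1) (by omega)
    have hsplit : (∑ r : Fin n, if r.1 < p.1 + 1 then A r q else 0)
        = (∑ r : Fin n, if r.1 < p.1 + 1 then rowP n A r (q.1 + 1) else 0)
          - (∑ r : Fin n, if r.1 < p.1 + 1 then rowP n A r q.1 else 0) := by
      rw [← Finset.sum_sub_distrib]
      apply Finset.sum_congr rfl
      intro r _
      have hf := f_succ r
      by_cases h : r.1 < p.1 + 1
      · simp only [if_pos h]; linarith
      · simp only [if_neg h]; ring
    have hUq : (∑ r : Fin n, if r.1 < p.1 + 1 then rowP n A r q.1 else 0) = (p.1 : ℤ) + 1 := by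
      have he : ∀ r : Fin n, r ∈ Finset.univ →
          (if r.1 < p.1 + 1 then rowP n A r q.1 else 0) = (if r.1 < p.1 + 1 then (1:ℤ) else 0) := by
        intro r _
        by_cases h : r.1 < p.1 + 1
        · simp only [if_pos h]; exact hallup r (by omega)
        · simp only [if_neg h]
      rw [Finset.sum_congr rfl he, sum_indicator_eq n (p.1 + 1) (by omega)]
      push_cast; ring
    have hU1 : (∑ r : Fin n, if r.1 < p.1 + 1 then rowP n A r (q.1 + 1) else 0) ≤ (p.1 : ℤ) := by
      rw [sum_lt_succ n p.1 p.2 (fun r => rowP n A r (q.1 + 1))]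
      have h0 : rowP n A (⟨p.1, p.2⟩ : Fin n) (q.1 + 1) = 0 := by
        simp only [Fin.eta]; exact hq1.2
      rw [h0, add_zero]
      calc (∑ r : Fin n, if r.1 < p.1 then rowP n A r (q.1 + 1) else 0)
          ≤ (∑ r : Fin n, if r.1 < p.1 then (1:ℤ) else 0) := by
            apply Finset.sum_le_sum
            intro r _
            by_cases h : r.1 < p.1
            · simp only [if_pos h]
              rcases hrow01 r (q.1 + 1) hq2n with h' | h' <;> rw [h'] <;> norm_num
            · simp only [if_neg h]
              exact le_rfl
        _ = (p.1 : ℤ) := sum_indicator_eq n p.1 (le_of_lt p.2)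
    rw [hsplit, hUq] at hS
    rcases hS with hS | hS <;> linarith
  -- Case: 1-based row of p is in [t, n-1]
  have lower : t ≤ p.1 + 1 → p.1 + 1 ≤ n - 1 → False := by
    intro hpt hpn
    have chain2 : ∀ k (hk : k < n), p.1 ≤ k → rowP n A ⟨k, hk⟩ (q.1 + 1) = 0 := by
      intro k
      induction k with
      | zero =>
        intro hk hpk
        have he : (⟨0, hk⟩ : Fin n) = p := Fin.ext (show 0 = p.1 by omega)
        rw [he]; exact hq1.2
      | succ k ih =>
        intro hk hpk
        rcases Nat.lt_or_ge p.1 (k + 1) with h | h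
        · have hkn : k < n := by omega
          have ihk := ih hkn (by omega)
          have hmem : k + 1 ∈ I := h2 (Finset.mem_Icc.mpr ⟨by omega, by omega⟩)
          have hc := cond (k + 1) hmem (by omega) hk (q.1 + 1) (by omega) hq2n
          rcases hc with hc | hc
          · rw [rowP_congr n A _ hkn (by omega)] at hc
            rw [hc] at ihk; norm_num at ihk
          · exact hc
        · have he : (⟨k + 1, hk⟩ : Fin n) = p := Fin.ext (show k + 1 = p.1 by omega)
          rw [he]; exact hq1.2
    have hT := hcol q p.1 (by omega)
    have hfull := hcolsum q
    have hE : (∑ r : Fin n, A r q) - (∑ r : Fin n, if r.1 < p.1 then A r q else 0)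
        = (∑ r : Fin n, (rowP n A r (q.1 + 1) - if r.1 < p.1 then rowP n A r (q.1 + 1) else 0))
          - (∑ r : Fin n, (rowP n A r q.1 - if r.1 < p.1 then rowP n A r q.1 else 0)) := by
      rw [← Finset.sum_sub_distrib, ← Finset.sum_sub_distrib]
      apply Finset.sum_congr rfl
      intro r _
      have hf := f_succ r
      by_cases h : r.1 < p.1
      · simp only [if_pos h]; ring
      · simp only [if_neg h]; linarith
    have hW : (∑ r : Fin n, (rowP n A r (q.1 + 1) - if r.1 < p.1 then rowP n A r (q.1 + 1) else 0)) = 0 := by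
      apply Finset.sum_eq_zero
      intro r _
      by_cases h : r.1 < p.1
      · simp [h]
      · simp only [if_neg h, sub_zero]
        have hc := chain2 r.1 r.2 (by omega)
        simpa using hc
    have hV : (1:ℤ) ≤ ∑ r : Fin n, (rowP n A r q.1 - if r.1 < p.1 then rowP n A r q.1 else 0) := by
      have hone : (∑ r : Fin n, if r = p then (1:ℤ) else 0) = 1 :=
        (Finset.sum_ite_eq' Finset.univ p (fun _ => (1:ℤ))).trans (by simp)
      rw [← hone]
      apply Finset.sum_le_sum
      intro r _
      by_cases hr : r = p
      · subst hr
        simp [hq1.1]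
      · simp only [if_neg hr]
        by_cases h : r.1 < p.1
        · simp [h]
        · simp only [if_neg h, sub_zero]
          rcases hrow01 r q.1 (le_of_lt q.2) with h' | h' <;> rw [h'] <;> norm_num
    rw [hfull, hW] at hE
    rcases hT with hT | hT <;> linarith
  -- Case: p is the last row
  have lastrow : p.1 + 1 = n → False := by
    intro hpn
    have hsp := sum_lt_succ n p.1 p.2 (fun r => A r q)
    simp only [Fin.eta] at hsp
    have hall : (∑ r : Fin n, if r.1 < p.1 + 1 then A r q else 0) = 1 := by
      rw [← hcolsum q]
      apply Finset.sum_congr rfl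
      intro r _
      rw [if_pos (by omega)]
    have hc1 := hcol q p.1 (by omega)
    rw [hall, hne] at hsp
    rcases hc1 with hc1 | hc1 <;> linarith
  rcases hp with h | h | h | h
  · exact upper (by omega)
  · exact lower h.1 h.2
  · exact upper (by omega)
  · exact lastrow h
end

section
/- Let n ≥ 2 and let I ⊆ [n-1] with |I| = n-2, say [n-1] = I ⊔ {a}. Then every A ∈ ASM^I(n) has no entry equal to -1, i.e., every element of ASM^I(n) is a permutation matrix; consequently ASM^I(n) equals the set of permutation matrices of elements of S_n^I. -/
namespace Stmt13Aux

variable {n : ℕ}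

lemma sum_if_succ (f : Fin n → ℤ) (i : ℕ) (hi : i < n) :
    (∑ p : Fin n, if p.1 < i + 1 then f p else 0)
      = (∑ p : Fin n, if p.1 < i then f p else 0) + f ⟨i, hi⟩ := by
  have h : ∀ p : Fin n, (if p.1 < i + 1 then f p else 0)
      = (if p.1 < i then f p else 0) + (if p = ⟨i, hi⟩ then f p else 0) := by
    intro p
    by_cases h1 : p = (⟨i, hi⟩ : Fin n)
    · subst h1; simp
    · have h2 : p.1 ≠ i := fun h => h1 (Fin.ext h)
      by_cases h3 : p.1 < i
      · simp [h3, h1, Nat.lt_succ_of_lt h3]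
      · have h4 : ¬ p.1 < i + 1 := by omega
        simp [h3, h1, h4]
  rw [Finset.sum_congr rfl fun p _ => h p, Finset.sum_add_distrib,
    Finset.sum_ite_eq' Finset.univ (⟨i, hi⟩ : Fin n) f]
  simp

lemma sum_if_ge (f : Fin n → ℤ) (i : ℕ) (hi : n ≤ i) :
    (∑ p : Fin n, if p.1 < i then f p else 0) = ∑ p : Fin n, f p :=
  Finset.sum_congr rfl fun p _ => if_pos (lt_of_lt_of_le p.2 hi)

/-- partial row sum -/
def rS (A : Matrix (Fin n) (Fin n) ℤ) (p : Fin n) (j : ℕ) : ℤ :=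
  ∑ q : Fin n, if q.1 < j then A p q else 0

/-- partial column sum -/
def cS (A : Matrix (Fin n) (Fin n) ℤ) (q : Fin n) (i : ℕ) : ℤ :=
  ∑ p : Fin n, if p.1 < i then A p q else 0

variable {A : Matrix (Fin n) (Fin n) ℤ}

lemma rS_zero (p : Fin n) : rS A p 0 = 0 := by simp [rS]

lemma rS_succ (p : Fin n) (j : ℕ) (hj : j < n) :
    rS A p (j + 1) = rS A p j + A p ⟨j, hj⟩ :=
  sum_if_succ (fun q => A p q) j hj

lemma cS_succ (q : Fin n) (i : ℕ) (hi : i < n) :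
    cS A q (i + 1) = cS A q i + A ⟨i, hi⟩ q :=
  sum_if_succ (fun p => A p q) i hi

lemma rk_eq (i j : ℕ) : rk n A i j = ∑ p : Fin n, if p.1 < i then rS A p j else 0 := by
  unfold rk rS
  refine Finset.sum_congr rfl fun p _ => ?_
  by_cases h : p.1 < i
  · simp [h]
  · simp [h]

lemma rk_succ (i j : ℕ) (hi : i < n) :
    rk n A (i + 1) j = rk n A i j + rS A ⟨i, hi⟩ j := by
  rw [rk_eq, rk_eq, sum_if_succ (fun p => rS A p j) i hi]

end Stmt13Aux
namespace Stmt13Aux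

variable {n : ℕ} {A : Matrix (Fin n) (Fin n) ℤ} {I : Finset ℕ}

lemma rS01 (hA : IsASM n A) (p : Fin n) (j : ℕ) (hj : j ≤ n) :
    rS A p j = 0 ∨ rS A p j = 1 := hA.2.1 p j hj

lemma cS01 (hA : IsASM n A) (q : Fin n) (i : ℕ) (hi : i ≤ n) :
    cS A q i = 0 ∨ cS A q i = 1 := hA.2.2.1 q i hi

lemma rS_full (hA : IsASM n A) (p : Fin n) : rS A p n = 1 := by
  rw [rS, sum_if_ge _ n le_rfl]; exact hA.2.2.2.1 p

lemma cS_full (hA : IsASM n A) (q : Fin n) : cS A q n = 1 := by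
  rw [cS, sum_if_ge _ n le_rfl]; exact hA.2.2.2.2 q

/-- one chain step: for `k+1 ∈ I`, row `k+1` partial sums are below row `k`'s (0-based). -/
lemma step (h : InASMI n I A) (k : ℕ) (hkn : k + 1 < n) (hk : k + 1 ∈ I)
    (j : ℕ) (hj : j ≤ n) :
    rS A ⟨k + 1, hkn⟩ j ≤ rS A ⟨k, by omega⟩ j := by
  rcases Nat.eq_zero_or_pos j with rfl | hj1
  · rw [rS_zero, rS_zero]
  have hcond := h.2 (k + 1) hk j hj1 hj
  have hkn' : k < n := by omega
  have e1 : rk n A (k + 1) j = rk n A k j + rS A ⟨k, hkn'⟩ j := rk_succ k j hkn'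
  have e2 : rk n A (k + 1 + 1) j = rk n A (k + 1) j + rS A ⟨k + 1, hkn⟩ j :=
    rk_succ (k + 1) j hkn
  have h1 := rS01 h.1 ⟨k, hkn'⟩ j hj
  have h2 := rS01 h.1 ⟨k + 1, hkn⟩ j hj
  simp only [Nat.add_sub_cancel] at hcond
  rcases hcond with hc | hc <;> omega

lemma chain (h : InASMI n I A) (r p : ℕ) (hrp : r ≤ p) (hp : p < n) (hr : r < n)
    (hI : ∀ k, r ≤ k → k < p → k + 1 ∈ I) (j : ℕ) (hj : j ≤ n) :
    rS A ⟨p, hp⟩ j ≤ rS A ⟨r, hr⟩ j := by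
  obtain ⟨d, rfl⟩ := Nat.exists_eq_add_of_le hrp
  induction d with
  | zero => exact le_rfl
  | succ d ih =>
      have hd' : r + d < n := by omega
      have h1 : rS A ⟨r + d + 1, by omega⟩ j ≤ rS A ⟨r + d, hd'⟩ j :=
        step h (r + d) (by omega) (hI (r + d) (by omega) (by omega)) j hj
      have h2 := ih (by omega) hd' (fun k hk hk' => hI k hk (by omega))
      calc rS A ⟨r + (d + 1), hp⟩ j = rS A ⟨r + d + 1, by omega⟩ j := rfl
        _ ≤ rS A ⟨r + d, hd'⟩ j := h1
        _ ≤ _ := h2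

end Stmt13Aux
namespace Stmt13Aux

variable {n : ℕ} {A : Matrix (Fin n) (Fin n) ℤ} {I : Finset ℕ}

lemma noNeg (hn : 2 ≤ n) {a : ℕ} (ha1 : 1 ≤ a) (ha2 : a ≤ n - 1)
    (hIff : ∀ x, x ∈ I ↔ 1 ≤ x ∧ x ≤ n - 1 ∧ x ≠ a)
    (h : InASMI n I A) (p q : Fin n) : A p q ≠ -1 := by
  intro hpq
  have hA := h.1
  have hq1 : q.1 + 1 ≤ n := q.2
  have hp1 : p.1 + 1 ≤ n := p.2
  -- row partial sums around the -1
  have hrs : rS A p (q.1 + 1) = rS A p q.1 + A p q := rS_succ p q.1 q.2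
  have hr0 := rS01 hA p q.1 (by omega)
  have hr1 := rS01 hA p (q.1 + 1) hq1
  have hsq : rS A p q.1 = 1 := by omega
  have hsq1 : rS A p (q.1 + 1) = 0 := by omega
  -- column partial sums around the -1
  have hcs : cS A q (p.1 + 1) = cS A q p.1 + A p q := cS_succ q p.1 p.2
  have hc0 := cS01 hA q p.1 (by omega)
  have hc1 := cS01 hA q (p.1 + 1) hp1
  have hcp : cS A q p.1 = 1 := by omega
  have hcp1 : cS A q (p.1 + 1) = 0 := by omega
  rcases lt_or_ge p.1 a with hpa | hpa
  · -- p is in the top chain: all rows r ≤ p have rS r q.1 = 1, hence A r q ≤ 0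
    have key : ∀ r : Fin n, r.1 < p.1 + 1 → A r q ≤ 0 := by
      intro r hr
      have hch := chain h r.1 p.1 (by omega) p.2 r.2
        (fun k hk hk' => (hIff (k + 1)).2 ⟨by omega, by omega, by omega⟩) q.1 (by omega)
      have hch' : rS A p q.1 ≤ rS A r q.1 := hch
      have hr0' := rS01 hA r q.1 (by omega)
      have hr1' := rS01 hA r (q.1 + 1) hq1
      have hrs' : rS A r (q.1 + 1) = rS A r q.1 + A r q := rS_succ r q.1 q.2
      omega
    have hsum := Finset.sum_eq_sum_sdiff_singleton_add (Finset.mem_univ p)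
      (fun r : Fin n => if r.1 < p.1 + 1 then A r q else 0)
    have hnp : ∑ r ∈ Finset.univ \ {p}, (if r.1 < p.1 + 1 then A r q else 0) ≤ 0 :=
      Finset.sum_nonpos fun r _ => by
        by_cases hr : r.1 < p.1 + 1
        · simpa [hr] using key r hr
        · simp [hr]
    have hpp : (if p.1 < p.1 + 1 then A p q else 0) = -1 := by simp [hpq]
    have : cS A q (p.1 + 1) ≤ -1 := by
      rw [cS, hsum, hpp]; omega
    omega
  · -- p is in the bottom chain: all rows r ≥ p have rS r (q.1+1) = 0, hence A r q ≤ 0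
    have key : ∀ r : Fin n, p.1 ≤ r.1 → A r q ≤ 0 := by
      intro r hr
      have hch := chain h p.1 r.1 hr r.2 p.2
        (fun k hk hk' => (hIff (k + 1)).2 ⟨by omega, by omega, by omega⟩) (q.1 + 1) hq1
      have hch' : rS A r (q.1 + 1) ≤ rS A p (q.1 + 1) := hch
      have hr0' := rS01 hA r q.1 (by omega)
      have hr1' := rS01 hA r (q.1 + 1) hq1
      have hrs' : rS A r (q.1 + 1) = rS A r q.1 + A r q := rS_succ r q.1 q.2
      omega
    have hcol : (∑ r : Fin n, A r q) = 1 := hA.2.2.2.2 q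
    have hsplit2 : (∑ r : Fin n, A r q)
        = cS A q p.1 + ∑ r : Fin n, (if p.1 ≤ r.1 then A r q else 0) := by
      rw [cS, ← Finset.sum_add_distrib]
      refine Finset.sum_congr rfl fun r _ => ?_
      rcases lt_or_ge r.1 p.1 with hr | hr
      · rw [if_pos hr, if_neg (by omega), add_zero]
      · rw [if_neg (by omega), if_pos hr, zero_add]
    have hsum := Finset.sum_eq_sum_sdiff_singleton_add (Finset.mem_univ p)
      (fun r : Fin n => if p.1 ≤ r.1 then A r q else 0)
    have hnp : ∑ r ∈ Finset.univ \ {p}, (if p.1 ≤ r.1 then A r q else 0) ≤ 0 :=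
      Finset.sum_nonpos fun r _ => by
        by_cases hr : p.1 ≤ r.1
        · simpa [hr] using key r hr
        · simp [hr]
    have hpp : (if p.1 ≤ p.1 then A p q else 0) = -1 := by simp [hpq]
    have : (∑ r : Fin n, (if p.1 ≤ r.1 then A r q else 0)) ≤ -1 := by
      rw [hsum, hpp]; omega
    omega

end Stmt13Aux
namespace Stmt13Aux

variable {n : ℕ} {I : Finset ℕ}

lemma rS_perm (w : Equiv.Perm (Fin n)) (p : Fin n) (j : ℕ) :
    rS (permMatrix n w) p j = if (w p).1 < j then 1 else 0 := by
  unfold rS permMatrix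
  rw [Finset.sum_eq_single (w p)]
  · simp
  · intro b _ hb
    simp [Ne.symm hb]
  · intro hb; exact absurd (Finset.mem_univ _) hb

lemma cS_perm (w : Equiv.Perm (Fin n)) (q : Fin n) (i : ℕ) :
    cS (permMatrix n w) q i = if (w.symm q).1 < i then 1 else 0 := by
  unfold cS permMatrix
  rw [Finset.sum_eq_single (w.symm q)]
  · simp
  · intro b _ hb
    have : w b ≠ q := fun h => hb (by simp [← h])
    simp [this]
  · intro hb; exact absurd (Finset.mem_univ _) hb

/-- permutation matrices of minimal representatives are in ASM^I -/
lemma perm_mem (hn : 2 ≤ n) (hIsub : ∀ x ∈ I, 1 ≤ x ∧ x ≤ n - 1)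
    (w : Equiv.Perm (Fin n)) (hw : IsMinRep n I w) : InASMI n I (permMatrix n w) := by
  constructor
  · refine ⟨?_, ?_, ?_, ?_, ?_⟩
    · intro i j
      by_cases h : w i = j <;> simp [permMatrix, h]
    · intro i j hj
      have h := rS_perm w i j
      unfold rS at h
      rw [h]
      by_cases hlt : (w i).1 < j
      · right; rw [if_pos hlt]
      · left; rw [if_neg hlt]
    · intro j i hi
      have h := cS_perm w j i
      unfold cS at h
      rw [h]
      by_cases hlt : (w.symm j).1 < i
      · right; rw [if_pos hlt]
      · left; rw [if_neg hlt]
    · intro i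
      simp [permMatrix, Finset.sum_ite_eq]
    · intro j
      have : ∀ p : Fin n, (if w p = j then (1:ℤ) else 0) = if p = w.symm j then 1 else 0 := by
        intro p
        congr 1
        simp [Equiv.eq_symm_apply, eq_comm]
      simp only [permMatrix, Matrix.of_apply]
      rw [Finset.sum_congr rfl fun p _ => this p, Finset.sum_ite_eq' Finset.univ (w.symm j)]
      simp
  · intro i hi j hj1 hjn
    obtain ⟨hi1, hi2⟩ := hIsub i hi
    have hin : i < n := by omega
    have hin' : i - 1 < n := by omega
    have e1 : rk n (permMatrix n w) i j
        = rk n (permMatrix n w) (i - 1) j + rS (permMatrix n w) ⟨i - 1, hin'⟩ j := by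
      have := rk_succ (A := permMatrix n w) (i - 1) j hin'
      rw [Nat.sub_add_cancel hi1] at this
      exact this
    have e2 : rk n (permMatrix n w) (i + 1) j
        = rk n (permMatrix n w) i j + rS (permMatrix n w) ⟨i, hin⟩ j :=
      rk_succ i j hin
    have hmono : w ⟨i - 1, hin'⟩ < w ⟨i, hin⟩ := by
      refine hw ⟨i - 1, hin'⟩ ⟨i, hin⟩ ?_ ?_
      · simpa [Nat.sub_add_cancel hi1] using hi
      · simp [Nat.sub_add_cancel hi1]
    by_cases hlt : (w ⟨i, hin⟩).1 < j
    · left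
      have : (w ⟨i - 1, hin'⟩).1 < j := lt_trans hmono hlt
      rw [e1, rS_perm, if_pos this]
    · right
      rw [e2, rS_perm, if_neg hlt, add_zero]

end Stmt13Aux
namespace Stmt13Aux

variable {n : ℕ} {A : Matrix (Fin n) (Fin n) ℤ} {I : Finset ℕ}

lemma to_perm (hn : 2 ≤ n) {a : ℕ} (ha1 : 1 ≤ a) (ha2 : a ≤ n - 1)
    (hIff : ∀ x, x ∈ I ↔ 1 ≤ x ∧ x ≤ n - 1 ∧ x ≠ a)
    (h : InASMI n I A) : ∃ w : Equiv.Perm (Fin n), IsMinRep n I w ∧ A = permMatrix n w := by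
  have hA := h.1
  have hneg : ∀ p q : Fin n, A p q ≠ -1 := noNeg hn ha1 ha2 hIff h
  have e01 : ∀ p q : Fin n, A p q = 0 ∨ A p q = 1 := by
    intro p q
    rcases hA.1 p q with h1 | h1 | h1
    · exact absurd h1 (hneg p q)
    · exact Or.inl h1
    · exact Or.inr h1
  have hex : ∀ p : Fin n, ∃ q, A p q = 1 := by
    intro p
    by_contra hc
    push_neg at hc
    have h0 : (∑ q : Fin n, A p q) = 0 :=
      Finset.sum_eq_zero fun q _ => (e01 p q).resolve_right (hc q)
    have h1 := hA.2.2.2.1 p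
    rw [h0] at h1
    exact absurd h1 (by norm_num)
  choose f hf using hex
  have inj : Function.Injective f := by
    intro p p' hpp'
    by_contra hne
    have hsub : ({p, p'} : Finset (Fin n)) ⊆ Finset.univ := Finset.subset_univ _
    have h2 : (∑ r ∈ ({p, p'} : Finset (Fin n)), A r (f p)) = 2 := by
      rw [Finset.sum_pair hne, hf p, hpp', hf p']
      norm_num
    have hle : (∑ r ∈ ({p, p'} : Finset (Fin n)), A r (f p)) ≤ ∑ r : Fin n, A r (f p) :=
      Finset.sum_le_sum_of_subset_of_nonneg hsub fun r _ _ => by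
        rcases e01 r (f p) with h1 | h1 <;> omega
    rw [h2, hA.2.2.2.2 (f p)] at hle
    norm_num at hle
  let w : Equiv.Perm (Fin n) := Equiv.ofBijective f (Finite.injective_iff_bijective.mp inj)
  have hwf : ∀ p, w p = f p := fun p => rfl
  have hAw : A = permMatrix n w := by
    ext p q
    rw [permMatrix, Matrix.of_apply, hwf]
    by_cases hq : f p = q
    · rw [if_pos hq, ← hq, hf p]
    · rw [if_neg hq]
      rcases e01 p q with h1 | h1
      · exact h1
      · exfalso
        have hne : q ≠ f p := fun hh => hq hh.symm
        have h2 : (∑ r ∈ ({q, f p} : Finset (Fin n)), A p r) = 2 := by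
          rw [Finset.sum_pair hne, hf p, h1]
          norm_num
        have hle : (∑ r ∈ ({q, f p} : Finset (Fin n)), A p r) ≤ ∑ r : Fin n, A p r :=
          Finset.sum_le_sum_of_subset_of_nonneg (Finset.subset_univ _) fun r _ _ => by
            rcases e01 p r with h1' | h1' <;> omega
        rw [h2, hA.2.2.2.1 p] at hle
        norm_num at hle
  refine ⟨w, ?_, hAw⟩
  intro p q hp hq
  have hqn : p.1 + 1 < n := by
    have := (hIff (p.1 + 1)).1 hp
    omega
  have hqeq : (⟨p.1 + 1, hqn⟩ : Fin n) = q := Fin.ext hq.symm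
  have hj : (w q).1 + 1 ≤ n := (w q).2
  have hst := step h p.1 hqn hp ((w q).1 + 1) hj
  rw [hqeq] at hst
  have hst' : rS A q ((w q).1 + 1) ≤ rS A p ((w q).1 + 1) := hst
  rw [hAw] at hst'
  rw [rS_perm, rS_perm, if_pos (by omega : (w q).1 < (w q).1 + 1)] at hst'
  have hlt : (w p).1 < (w q).1 + 1 := by
    by_contra hc
    rw [if_neg hc] at hst'
    norm_num at hst'
  have hne : w p ≠ w q := fun hh => by
    have := w.injective hh
    rw [this] at hq
    omega
  have : (w p).1 ≠ (w q).1 := fun hh => hne (Fin.ext hh)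
  exact Fin.lt_def.mpr (by omega)

end Stmt13Aux

open Stmt13Aux in
/-- If `|I| = n - 2`, say `[n-1] = I ⊔ {a}`, then no element of `ASM^I(n)` has an entry `-1`,
and `ASM^I(n)` is exactly the set of permutation matrices of elements of `S_n^I`. -/
theorem stmt13 (n : ℕ) (hn : 2 ≤ n) (I : Finset ℕ) (a : ℕ)
    (ha : a ∈ Finset.Icc 1 (n - 1)) (haI : a ∉ I)
    (hsplit : insert a I = Finset.Icc 1 (n - 1))
    (hcard : I.card = n - 2) :
    (∀ A, InASMI n I A → ∀ p q : Fin n, A p q ≠ -1) ∧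
    {A : Matrix (Fin n) (Fin n) ℤ | InASMI n I A} =
      {M : Matrix (Fin n) (Fin n) ℤ |
        ∃ w : Equiv.Perm (Fin n), IsMinRep n I w ∧ M = permMatrix n w} := by
  rw [Finset.mem_Icc] at ha
  obtain ⟨ha1, ha2⟩ := ha
  have hIff : ∀ x, x ∈ I ↔ 1 ≤ x ∧ x ≤ n - 1 ∧ x ≠ a := by
    intro x
    constructor
    · intro hx
      have hx' : x ∈ Finset.Icc 1 (n - 1) := hsplit ▸ Finset.mem_insert_of_mem hx
      rw [Finset.mem_Icc] at hx'
      exact ⟨hx'.1, hx'.2, fun h => haI (h ▸ hx)⟩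
    · rintro ⟨h1, h2, h3⟩
      have hx' : x ∈ insert a I := hsplit.symm ▸ Finset.mem_Icc.mpr ⟨h1, h2⟩
      rcases Finset.mem_insert.mp hx' with h | h
      · exact absurd h h3
      · exact h
  constructor
  · intro A hA p q
    exact noNeg hn ha1 ha2 hIff hA p q
  · ext A
    simp only [Set.mem_setOf_eq]
    constructor
    · intro hA
      exact to_perm hn ha1 ha2 hIff hA
    · rintro ⟨w, hw, rfl⟩
      exact perm_mem hn (fun x hx => ⟨((hIff x).1 hx).1, ((hIff x).1 hx).2.1⟩) w hw
end

section
/- Let n ≥ 1 and 1 ≤ t ≤ n, and set I = {t, t+1, ..., n-1} ⊆ [n-1]. The map sending A ∈ ASM^I(n) to the triangular array (m_{i,j})_{1 ≤ j ≤ i ≤ t-1}, where for each i ∈ [t-1] the row m_{i,1} < m_{i,2} < ⋯ < m_{i,i} lists the column indices c ∈ [n] with A_{1,c} + A_{2,c} + ⋯ + A_{i,c} = 1, is a bijection from ASM^I(n) onto the set of monotone triangles of size t-1 all of whose entries lie in {1, 2, ..., n}. -/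
/-- The partial column sum `A_{1,c} + ⋯ + A_{i,c}` (1-based column index `c`). -/
def colSum (n : ℕ) (A : Matrix (Fin n) (Fin n) ℤ) (i c : ℕ) : ℤ :=
  ∑ p : Fin n, ∑ q : Fin n, if p.1 < i ∧ q.1 + 1 = c then A p q else 0

/-- A monotone triangle of size `m` with all entries in `{1, …, N}`, encoded as a function
`f : ℕ → ℕ → ℕ` (with `f i j = m_{i,j}` for `1 ≤ j ≤ i ≤ m`, and `f i j = 0` outside this
range, so that the encoding is unique). -/
def IsMT (m N : ℕ) (f : ℕ → ℕ → ℕ) : Prop :=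
  (∀ i j, 1 ≤ j → j ≤ i → i ≤ m → 1 ≤ f i j ∧ f i j ≤ N) ∧
  (∀ i j, 1 ≤ j → j < i → i ≤ m → f i j ≤ f (i - 1) j ∧ f (i - 1) j ≤ f i (j + 1)) ∧
  (∀ i j, 1 ≤ j → j < i → i ≤ m → f i j < f i (j + 1)) ∧
  (∀ i j, ¬(1 ≤ j ∧ j ≤ i ∧ i ≤ m) → f i j = 0)

/-- `f` is the triangle associated with `A`: for each `i ∈ [t-1]`, row `i` of `f` lists
exactly the columns `c` with `A_{1,c} + ⋯ + A_{i,c} = 1`. -/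
def Corr (n t : ℕ) (A : Matrix (Fin n) (Fin n) ℤ) (f : ℕ → ℕ → ℕ) : Prop :=
  ∀ i, 1 ≤ i → i ≤ t - 1 → ∀ c, 1 ≤ c → c ≤ n →
    (colSum n A i c = 1 ↔ ∃ j, 1 ≤ j ∧ j ≤ i ∧ f i j = c)


/-!
An ASM is the same thing as its rank function `r = rk n A`: the functions on `[0,n]²` that vanish
on the axes, move in steps of `0` or `1` in each direction and satisfy `r i n = i`, `r n c = c`
are exactly the rank functions, and the matrix is recovered from `r` by second differences.
A column `c` has partial sum `1` down to row `i` exactly when `r i ·` jumps at `c`, so triangle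
row `i` is the jump set of `r i ·`, that is `r i c = #{j | m_{i,j} ≤ c}`. Under this
correspondence the unit steps of `r` between consecutive rows are exactly the interlacing of a
monotone triangle. For `i ∈ I = {t, …, n-1}`, downward induction from `r n c = c` turns the
defining condition of `ASM^I(n)` into `r i c = min (r (i-1) c + 1) c`, so all rows of `r` below
row `t-1` are determined by row `t-1`; conversely, extending the counting functions of any
monotone triangle by this rule gives a rank function satisfying the condition.
-/

open Finset

theorem sum_fin_ite_lt_eq_sum_range {M : Type*} [AddCommMonoid M] {n j : ℕ} (g : ℕ → M)
    (hj : j ≤ n) : (∑ q : Fin n, if q.1 < j then g q else 0) = ∑ q ∈ range j, g q := by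
  rw [Fin.sum_univ_eq_sum_range (fun q => if q < j then g q else 0), ← sum_filter]
  congr 1
  ext q
  simp only [mem_filter, mem_range]
  omega

section RankMatrix

variable {n : ℕ}

-- Extending `A` by zero to `ℕ × ℕ` turns all partial sums into sums over `range`.
def natEntry (A : Matrix (Fin n) (Fin n) ℤ) (p q : ℕ) : ℤ :=
  if h : p < n ∧ q < n then A ⟨p, h.1⟩ ⟨q, h.2⟩ else 0

variable (A : Matrix (Fin n) (Fin n) ℤ)

theorem sum_row_ite_lt_eq_sum_natEntry {p j : ℕ} (hp : p < n) (hj : j ≤ n) :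
    (∑ q : Fin n, if q.1 < j then A ⟨p, hp⟩ q else 0) = ∑ q ∈ range j, natEntry A p q := by
  simp [← sum_fin_ite_lt_eq_sum_range _ hj, natEntry, hp]

theorem sum_col_ite_lt_eq_sum_natEntry {q i : ℕ} (hq : q < n) (hi : i ≤ n) :
    (∑ p : Fin n, if p.1 < i then A p ⟨q, hq⟩ else 0) = ∑ p ∈ range i, natEntry A p q := by
  simp [← sum_fin_ite_lt_eq_sum_range _ hi, natEntry, hq]

theorem sum_row_eq_sum_natEntry {p : ℕ} (hp : p < n) :
    ∑ q : Fin n, A ⟨p, hp⟩ q = ∑ q ∈ range n, natEntry A p q := by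
  simp [← sum_row_ite_lt_eq_sum_natEntry A hp le_rfl]

theorem sum_col_eq_sum_natEntry {q : ℕ} (hq : q < n) :
    ∑ p : Fin n, A p ⟨q, hq⟩ = ∑ p ∈ range n, natEntry A p q := by
  simp [← sum_col_ite_lt_eq_sum_natEntry A hq le_rfl]

theorem rk_eq_sum_range {i j : ℕ} (hi : i ≤ n) (hj : j ≤ n) :
    rk n A i j = ∑ p ∈ range i, ∑ q ∈ range j, natEntry A p q := by
  rw [rk, ← sum_fin_ite_lt_eq_sum_range _ hi]
  refine sum_congr rfl fun p _ => ?_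
  split_ifs with hp <;> simp [hp, ← sum_fin_ite_lt_eq_sum_range _ hj, natEntry]

theorem colSum_eq_rk_sub (i c : ℕ) :
    colSum n A i (c + 1) = rk n A i (c + 1) - rk n A i c := by
  simp only [colSum, rk, ← sum_sub_distrib]
  refine sum_congr rfl fun p _ => sum_congr rfl fun q _ => ?_
  split_ifs <;> omega

variable {A}

namespace IsASM

theorem sum_natEntry_row_eq_zero_or_one (hA : IsASM n A) {p j : ℕ} (hp : p < n)
    (hj : j ≤ n) : ∑ q ∈ range j, natEntry A p q = 0 ∨ ∑ q ∈ range j, natEntry A p q = 1 :=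
  sum_row_ite_lt_eq_sum_natEntry A hp hj ▸ hA.2.1 ⟨p, hp⟩ j hj

theorem sum_natEntry_col_eq_zero_or_one (hA : IsASM n A) {q i : ℕ} (hq : q < n)
    (hi : i ≤ n) : ∑ p ∈ range i, natEntry A p q = 0 ∨ ∑ p ∈ range i, natEntry A p q = 1 :=
  sum_col_ite_lt_eq_sum_natEntry A hq hi ▸ hA.2.2.1 ⟨q, hq⟩ i hi

theorem sum_natEntry_row_eq_one (hA : IsASM n A) {p : ℕ} (hp : p < n) :
    ∑ q ∈ range n, natEntry A p q = 1 :=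
  sum_row_eq_sum_natEntry A hp ▸ hA.2.2.2.1 ⟨p, hp⟩

theorem sum_natEntry_col_eq_one (hA : IsASM n A) {q : ℕ} (hq : q < n) :
    ∑ p ∈ range n, natEntry A p q = 1 :=
  sum_col_eq_sum_natEntry A hq ▸ hA.2.2.2.2 ⟨q, hq⟩

end IsASM

end RankMatrix

structure IsRankFunction (n : ℕ) (R : ℕ → ℕ → ℤ) : Prop where
  zero_row : ∀ c ≤ n, R 0 c = 0
  zero_col : ∀ i ≤ n, R i 0 = 0
  row_step : ∀ i < n, ∀ c ≤ n, R (i + 1) c = R i c ∨ R (i + 1) c = R i c + 1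
  col_step : ∀ c < n, ∀ i ≤ n, R i (c + 1) = R i c ∨ R i (c + 1) = R i c + 1
  last_col : ∀ i ≤ n, R i n = i
  last_row : ∀ c ≤ n, R n c = c

theorem IsASM.isRankFunction {n : ℕ} {A : Matrix (Fin n) (Fin n) ℤ} (hA : IsASM n A) :
    IsRankFunction n (rk n A) where
  zero_row c hc := by simp [rk_eq_sum_range A (Nat.zero_le n) hc]
  zero_col i hi := by simp [rk_eq_sum_range A hi (Nat.zero_le n)]
  row_step i hi c hc := by
    rw [rk_eq_sum_range A hi hc, rk_eq_sum_range A hi.le hc, sum_range_succ]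
    rcases hA.sum_natEntry_row_eq_zero_or_one hi hc with h | h <;> simp [h]
  col_step c hc i hi := by
    rw [rk_eq_sum_range A hi hc, rk_eq_sum_range A hi hc.le]
    simp only [sum_range_succ, sum_add_distrib]
    rcases hA.sum_natEntry_col_eq_zero_or_one hc hi with h | h <;> simp [h]
  last_col i hi := by
    rw [rk_eq_sum_range A hi le_rfl,
      sum_congr rfl fun p hp => hA.sum_natEntry_row_eq_one ((mem_range.1 hp).trans_le hi)]
    simp
  last_row c hc := by
    rw [rk_eq_sum_range A le_rfl hc, sum_comm,
      sum_congr rfl fun q hq => hA.sum_natEntry_col_eq_one ((mem_range.1 hq).trans_le hc)]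
    simp

def ofRank (n : ℕ) (R : ℕ → ℕ → ℤ) : Matrix (Fin n) (Fin n) ℤ :=
  Matrix.of fun p q => R (p + 1) (q + 1) - R p (q + 1) - (R (p + 1) q - R p q)

theorem natEntry_ofRank {n : ℕ} {R : ℕ → ℕ → ℤ} {p q : ℕ} (hp : p < n) (hq : q < n) :
    natEntry (ofRank n R) p q = R (p + 1) (q + 1) - R p (q + 1) - (R (p + 1) q - R p q) := by
  simp [natEntry, ofRank, hp, hq]

theorem ofRank_rk {n : ℕ} (A : Matrix (Fin n) (Fin n) ℤ) : ofRank n (rk n A) = A := by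
  ext p q
  simp only [ofRank, Matrix.of_apply, rk_eq_sum_range A p.2 q.2, rk_eq_sum_range A p.2.le q.2,
    rk_eq_sum_range A p.2 q.2.le, rk_eq_sum_range A p.2.le q.2.le, sum_range_succ]
  simp [natEntry]

theorem eq_of_rk_eq {n : ℕ} {A B : Matrix (Fin n) (Fin n) ℤ}
    (h : ∀ i ≤ n, ∀ j ≤ n, rk n A i j = rk n B i j) : A = B := by
  rw [← ofRank_rk A, ← ofRank_rk B]
  ext p q
  simp only [ofRank, Matrix.of_apply, h _ p.2 _ q.2, h _ p.2.le _ q.2, h _ p.2 _ q.2.le,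
    h _ p.2.le _ q.2.le]

namespace IsRankFunction

variable {n : ℕ} {R : ℕ → ℕ → ℤ}

theorem mono_left (hR : IsRankFunction n R) {i i' c : ℕ} (h : i ≤ i') (hi' : i' ≤ n)
    (hc : c ≤ n) : R i c ≤ R i' c := by
  induction i', h using Nat.le_induction with
  | base => exact le_rfl
  | succ k hik ih =>
    rcases hR.row_step k hi' c hc with h | h <;> linarith [ih (by omega)]

theorem mono_right (hR : IsRankFunction n R) {i c c' : ℕ} (h : c ≤ c') (hc' : c' ≤ n)
    (hi : i ≤ n) : R i c ≤ R i c' := by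
  induction c', h using Nat.le_induction with
  | base => exact le_rfl
  | succ k hck ih =>
    rcases hR.col_step k hc' i hi with h | h <;> linarith [ih (by omega)]

theorem nonneg (hR : IsRankFunction n R) {i c : ℕ} (hi : i ≤ n) (hc : c ≤ n) : 0 ≤ R i c :=
  hR.zero_col i hi ▸ hR.mono_right (Nat.zero_le c) hc hi

theorem le_left (hR : IsRankFunction n R) {i c : ℕ} (hi : i ≤ n) (hc : c ≤ n) : R i c ≤ i :=
  hR.last_col i hi ▸ hR.mono_right hc le_rfl hi

theorem le_right (hR : IsRankFunction n R) {i c : ℕ} (hi : i ≤ n) (hc : c ≤ n) : R i c ≤ c :=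
  hR.last_row c hc ▸ hR.mono_left hi le_rfl hc

theorem sum_natEntry_ofRank_row (hR : IsRankFunction n R) {p j : ℕ} (hp : p < n) (hj : j ≤ n) :
    ∑ q ∈ range j, natEntry (ofRank n R) p q = R (p + 1) j - R p j := by
  rw [sum_congr rfl fun q hq => natEntry_ofRank hp ((mem_range.1 hq).trans_le hj),
    sum_range_sub (fun q => R (p + 1) q - R p q), hR.zero_col _ hp, hR.zero_col _ hp.le]
  ring

theorem sum_natEntry_ofRank_col (hR : IsRankFunction n R) {q i : ℕ} (hq : q < n) (hi : i ≤ n) :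
    ∑ p ∈ range i, natEntry (ofRank n R) p q = R i (q + 1) - R i q := by
  have hdiff : ∀ p ∈ range i, natEntry (ofRank n R) p q
      = (R (p + 1) (q + 1) - R (p + 1) q) - (R p (q + 1) - R p q) := fun p hp => by
    rw [natEntry_ofRank ((mem_range.1 hp).trans_le hi) hq]; ring
  rw [sum_congr rfl hdiff, sum_range_sub (fun p => R p (q + 1) - R p q), hR.zero_row _ hq,
    hR.zero_row _ hq.le]
  ring

theorem rk_ofRank (hR : IsRankFunction n R) {i j : ℕ} (hi : i ≤ n) (hj : j ≤ n) :
    rk n (ofRank n R) i j = R i j := by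
  rw [rk_eq_sum_range _ hi hj,
    sum_congr rfl fun p hp => hR.sum_natEntry_ofRank_row ((mem_range.1 hp).trans_le hi) hj,
    sum_range_sub (fun p => R p j), hR.zero_row j hj, sub_zero]

theorem isASM_ofRank (hR : IsRankFunction n R) : IsASM n (ofRank n R) := by
  refine ⟨fun p q => ?_, fun ⟨p, hp⟩ j hj => ?_, fun ⟨q, hq⟩ i hi => ?_, fun ⟨p, hp⟩ => ?_,
    fun ⟨q, hq⟩ => ?_⟩
  · have := hR.row_step p p.2 (q + 1) q.2
    have := hR.row_step p p.2 q q.2.le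
    simp only [ofRank, Matrix.of_apply]
    omega
  · rw [sum_row_ite_lt_eq_sum_natEntry _ hp hj, hR.sum_natEntry_ofRank_row hp hj]
    rcases hR.row_step p hp j hj with h | h <;> simp [h]
  · rw [sum_col_ite_lt_eq_sum_natEntry _ hq hi, hR.sum_natEntry_ofRank_col hq hi]
    rcases hR.col_step q hq i hi with h | h <;> simp [h]
  · rw [sum_row_eq_sum_natEntry _ hp, hR.sum_natEntry_ofRank_row hp le_rfl, hR.last_col _ hp,
      hR.last_col _ hp.le]
    push_cast; ring
  · rw [sum_col_eq_sum_natEntry _ hq, hR.sum_natEntry_ofRank_col hq le_rfl, hR.last_row _ hq,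
      hR.last_row _ hq.le]
    push_cast; ring

end IsRankFunction

def rowCount (f : ℕ → ℕ → ℕ) (i c : ℕ) : ℕ := #{j ∈ Icc 1 i | f i j ≤ c}

theorem rowCount_le_left (f : ℕ → ℕ → ℕ) (i c : ℕ) : rowCount f i c ≤ i := by
  simpa [rowCount] using card_filter_le (Icc 1 i) (fun j => f i j ≤ c)

theorem rowCount_le_rowCount_succ (f : ℕ → ℕ → ℕ) (i c : ℕ) :
    rowCount f i c ≤ rowCount f i (c + 1) :=
  card_le_card fun j hj => by
    simp only [mem_filter] at hj ⊢
    exact ⟨hj.1, by omega⟩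

namespace IsMT

variable {m N : ℕ} {f : ℕ → ℕ → ℕ} {i c : ℕ}

theorem strictMonoOn_row (hf : IsMT m N f) (hi : i ≤ m) : StrictMonoOn (f i) (Set.Icc 1 i) :=
  strictMonoOn_of_lt_succ Set.ordConnected_Icc fun j _ hj hj' => by
    simp only [Order.succ_eq_add_one, Set.mem_Icc] at hj hj' ⊢
    exact hf.2.2.1 i j hj.1 (by omega) hi

theorem interlace (hf : IsMT m N f) {j : ℕ} (hj : 1 ≤ j) (hji : j ≤ i) (hi : i + 1 ≤ m) :
    f (i + 1) j ≤ f i j ∧ f i j ≤ f (i + 1) (j + 1) := by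
  simpa using hf.2.1 (i + 1) j hj (by omega) hi

-- A Galois connection between row `i` of `f` and its counting function `rowCount f i`:
-- all the properties of `rowCount` below are read off from it.
theorem le_rowCount_iff (hf : IsMT m N f) {j : ℕ} (hj : 1 ≤ j) (hji : j ≤ i) (hi : i ≤ m) :
    j ≤ rowCount f i c ↔ f i j ≤ c := by
  have hmono := hf.strictMonoOn_row hi
  constructor
  · intro h
    by_contra! hc
    have hsub : {j' ∈ Icc 1 i | f i j' ≤ c} ⊆ Icc 1 (j - 1) := fun j' hj' => by
      simp only [mem_filter, mem_Icc] at hj' ⊢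
      have := (hmono.lt_iff_lt ⟨hj'.1.1, hj'.1.2⟩ ⟨hj, hji⟩).1 (by omega)
      omega
    have := card_le_card hsub
    simp only [Nat.card_Icc] at this
    unfold rowCount at h
    omega
  · intro h
    have hsub : Icc 1 j ⊆ {j' ∈ Icc 1 i | f i j' ≤ c} := fun j' hj' => by
      simp only [mem_filter, mem_Icc] at hj' ⊢
      exact ⟨⟨hj'.1, hj'.2.trans hji⟩,
        ((hmono.le_iff_le ⟨hj'.1, hj'.2.trans hji⟩ ⟨hj, hji⟩).2 hj'.2).trans h⟩
    simpa [rowCount] using card_le_card hsub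

theorem rowCount_le_right (hf : IsMT m N f) (hi : i ≤ m) : rowCount f i c ≤ c := by
  simpa [rowCount] using card_le_card_of_injOn (f i) (t := Icc 1 c)
    (fun j hj => by
      simp only [coe_filter, mem_Icc, Set.mem_ofPred_eq, coe_Icc, Set.mem_Icc] at hj ⊢
      exact ⟨(hf.1 i j hj.1.1 hj.1.2 hi).1, hj.2⟩)
    ((hf.strictMonoOn_row hi).injOn.mono fun j hj => by simp_all)

theorem rowCount_zero (hf : IsMT m N f) (hi : i ≤ m) : rowCount f i 0 = 0 :=
  Nat.le_zero.1 (hf.rowCount_le_right hi)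

theorem le_rowCount_add (hf : IsMT m N f) (hi : i ≤ m) : i ≤ rowCount f i c + (N - c) := by
  have hgt : #{j ∈ Icc 1 i | ¬ f i j ≤ c} ≤ N - c := by
    simpa using card_le_card_of_injOn (f i) (t := Ioc c N)
      (fun j hj => by
        simp only [coe_filter, mem_Icc, Set.mem_ofPred_eq, coe_Ioc, Set.mem_Ioc] at hj ⊢
        exact ⟨by omega, (hf.1 i j hj.1.1 hj.1.2 hi).2⟩)
      ((hf.strictMonoOn_row hi).injOn.mono fun j hj => by simp_all)
  have := card_filter_add_card_filter_not (s := Icc 1 i) (fun j => f i j ≤ c)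
  simp only [Nat.card_Icc] at this
  unfold rowCount
  omega

theorem rowCount_eq_of_bound (hf : IsMT m N f) (hi : i ≤ m) : rowCount f i N = i := by
  have := hf.le_rowCount_add (c := N) hi
  have := rowCount_le_left f i N
  omega

theorem rowCount_succ_le (hf : IsMT m N f) (hi : i ≤ m) :
    rowCount f i (c + 1) ≤ rowCount f i c + 1 := by
  set k := rowCount f i (c + 1)
  obtain hk | hk := lt_or_ge k 2
  · omega
  have hki := rowCount_le_left f i (c + 1)
  have hfk := (hf.le_rowCount_iff (by omega) hki hi).1 le_rfl
  have hlt := (hf.strictMonoOn_row hi) ⟨by omega, by omega⟩ ⟨by omega, hki⟩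
    (show k - 1 < k by omega)
  have := (hf.le_rowCount_iff (c := c) (j := k - 1) (by omega) (by omega) hi).2 (by omega)
  omega

theorem rowCount_le_rowCount_succ_row (hf : IsMT m N f) (hi : i + 1 ≤ m) :
    rowCount f i c ≤ rowCount f (i + 1) c := by
  set k := rowCount f i c
  obtain hk | hk := Nat.eq_zero_or_pos k
  · omega
  have hki := rowCount_le_left f i c
  have hfk := (hf.le_rowCount_iff hk hki (by omega)).1 le_rfl
  exact (hf.le_rowCount_iff hk (by omega) hi).2 ((hf.interlace hk hki hi).1.trans hfk)

theorem rowCount_succ_row_le (hf : IsMT m N f) (hi : i + 1 ≤ m) :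
    rowCount f (i + 1) c ≤ rowCount f i c + 1 := by
  set k := rowCount f (i + 1) c
  obtain hk | hk := lt_or_ge k 2
  · omega
  have hki := rowCount_le_left f (i + 1) c
  have hfk := (hf.le_rowCount_iff (by omega) hki hi).1 le_rfl
  have hle := (hf.interlace (j := k - 1) (by omega) (by omega) hi).2
  rw [Nat.sub_add_cancel (by omega)] at hle
  have := (hf.le_rowCount_iff (by omega) (by omega) (by omega)).2 (hle.trans hfk)
  omega

theorem rowCount_succ_eq_iff (hf : IsMT m N f) (hi : i ≤ m) :
    rowCount f i (c + 1) = rowCount f i c + 1 ↔ ∃ j, 1 ≤ j ∧ j ≤ i ∧ f i j = c + 1 := by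
  constructor
  · intro h
    have hki := rowCount_le_left f i (c + 1)
    have hle := (hf.le_rowCount_iff (by omega) hki hi).1 le_rfl
    have hgt := (hf.le_rowCount_iff (c := c) (by omega) hki hi).not.1 (by omega)
    exact ⟨_, by omega, hki, by omega⟩
  · rintro ⟨j, hj, hji, hfj⟩
    have hle := (hf.le_rowCount_iff hj hji hi (c := c + 1)).2 hfj.le
    have hgt := (hf.le_rowCount_iff hj hji hi (c := c)).not.2 (by omega)
    have := hf.rowCount_succ_le (c := c) hi
    omega

theorem eq_of_rowCount_eq {g : ℕ → ℕ → ℕ} (hf : IsMT m N f) (hg : IsMT m N g)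
    (h : ∀ i ≤ m, ∀ c ≤ N, rowCount f i c = rowCount g i c) : f = g := by
  funext i j
  by_cases hr : 1 ≤ j ∧ j ≤ i ∧ i ≤ m
  · obtain ⟨hj, hji, him⟩ := hr
    apply le_antisymm
    · rw [← hf.le_rowCount_iff hj hji him, h i him _ (hg.1 i j hj hji him).2,
        hg.le_rowCount_iff hj hji him]
    · rw [← hg.le_rowCount_iff hj hji him, ← h i him _ (hf.1 i j hj hji him).2,
        hf.le_rowCount_iff hj hji him]
  · rw [hf.2.2.2 i j hr, hg.2.2.2 i j hr]

end IsMT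

-- Below row `m` the rank function is forced by the `ASM^I` condition, see `InASMI.rk_eq_min_add`.
def extendRank (m : ℕ) (f : ℕ → ℕ → ℕ) (i c : ℕ) : ℤ :=
  if i ≤ m then rowCount f i c else min (rowCount f m c + (i - m : ℕ)) c

namespace IsMT

variable {m N : ℕ} {f : ℕ → ℕ → ℕ}

theorem extendRank_of_le (hf : IsMT m N f) {i c : ℕ} (hi : m ≤ i) :
    extendRank m f i c = min (rowCount f m c + (i - m : ℕ) : ℤ) c := by
  unfold extendRank
  split_ifs with h
  · have := hf.rowCount_le_right (c := c) le_rfl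
    rw [show i = m by omega]
    omega
  · rfl

theorem isRankFunction_extendRank (hf : IsMT m N f) (hmN : m < N) :
    IsRankFunction N (extendRank m f) where
  zero_row c _ := by simp [extendRank, rowCount]
  zero_col i _ := by
    unfold extendRank
    split_ifs with h
    · simp [hf.rowCount_zero h]
    · simp [hf.rowCount_zero le_rfl]
  row_step i _ c _ := by
    have := hf.rowCount_le_right (c := c) le_rfl
    obtain h | h := lt_or_ge i m
    · have := hf.rowCount_le_rowCount_succ_row (c := c) h
      have := hf.rowCount_succ_row_le (c := c) h
      simp only [extendRank, if_pos h.le]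
      omega
    · rw [hf.extendRank_of_le h, hf.extendRank_of_le (by omega)]
      omega
  col_step c _ i _ := by
    obtain h | h := le_or_gt i m
    · have := rowCount_le_rowCount_succ f i c
      have := hf.rowCount_succ_le (c := c) h
      simp only [extendRank, if_pos h]
      omega
    · have := rowCount_le_rowCount_succ f m c
      have := hf.rowCount_succ_le (c := c) le_rfl
      rw [hf.extendRank_of_le h.le, hf.extendRank_of_le h.le]
      omega
  last_col i hi := by
    obtain h | h := le_or_gt i m
    · simp [extendRank, h, hf.rowCount_eq_of_bound h]
    · rw [hf.extendRank_of_le h.le, hf.rowCount_eq_of_bound le_rfl]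
      omega
  last_row c hc := by
    have := hf.rowCount_le_right (c := c) le_rfl
    have := hf.le_rowCount_add (c := c) le_rfl
    rw [hf.extendRank_of_le hmN.le]
    omega

end IsMT

noncomputable def firstCol (R : ℕ → ℕ → ℤ) (i j : ℕ) : ℕ := sInf {c | (j : ℤ) ≤ R i c}

noncomputable def triangleOf (m : ℕ) (R : ℕ → ℕ → ℤ) (i j : ℕ) : ℕ :=
  if 1 ≤ j ∧ j ≤ i ∧ i ≤ m then firstCol R i j else 0

namespace IsRankFunction

variable {n : ℕ} {R : ℕ → ℕ → ℤ}

theorem firstCol_le_iff (hR : IsRankFunction n R) {i j c : ℕ} (hji : j ≤ i) (hin : i ≤ n)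
    (hcn : c ≤ n) : firstCol R i j ≤ c ↔ (j : ℤ) ≤ R i c := by
  have hn : n ∈ {c | (j : ℤ) ≤ R i c} := by
    simp only [Set.mem_ofPred_eq, hR.last_col i hin]; omega
  refine ⟨fun h => ?_, fun h => Nat.sInf_le h⟩
  exact (Nat.sInf_mem ⟨n, hn⟩ : (j : ℤ) ≤ R i (firstCol R i j)).trans
    (hR.mono_right h hcn hin)

theorem firstCol_le (hR : IsRankFunction n R) {i j : ℕ} (hji : j ≤ i) (hin : i ≤ n) :
    firstCol R i j ≤ n :=
  (hR.firstCol_le_iff hji hin le_rfl).2 (by rw [hR.last_col i hin]; omega)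

theorem one_le_firstCol (hR : IsRankFunction n R) {i j : ℕ} (hj : 1 ≤ j) (hji : j ≤ i)
    (hin : i ≤ n) : 1 ≤ firstCol R i j := by
  by_contra! h
  have := (hR.firstCol_le_iff hji hin (Nat.zero_le n)).1 (by omega)
  rw [hR.zero_col i hin] at this
  omega

theorem isMT_triangleOf (hR : IsRankFunction n R) {m : ℕ} (hmn : m ≤ n) :
    IsMT m n (triangleOf m R) := by
  refine ⟨fun i j hj hji him => ?_, fun i j hj hji him => ?_, fun i j hj hji him => ?_,
    fun i j h => if_neg h⟩
  · rw [triangleOf, if_pos ⟨hj, hji, him⟩]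
    exact ⟨hR.one_le_firstCol hj hji (by omega), hR.firstCol_le hji (by omega)⟩
  · rw [triangleOf, triangleOf, triangleOf, if_pos ⟨hj, hji.le, him⟩,
      if_pos ⟨hj, by omega, by omega⟩, if_pos ⟨by omega, hji, him⟩]
    have hup := hR.firstCol_le (i := i - 1) (j := j) (by omega) (by omega)
    have hup' := hR.firstCol_le (i := i) (j := j + 1) hji (by omega)
    constructor
    · rw [hR.firstCol_le_iff hji.le (by omega) hup]
      exact ((hR.firstCol_le_iff (by omega) (by omega) hup).1 le_rfl).trans
        (hR.mono_left (by omega) (by omega) hup)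
    · rw [hR.firstCol_le_iff (by omega) (by omega) hup']
      have := (hR.firstCol_le_iff hji (by omega) hup').1 le_rfl
      have := hR.row_step (i - 1) (by omega) _ hup'
      rw [Nat.sub_add_cancel (by omega)] at this
      push_cast at *
      omega
  · rw [triangleOf, triangleOf, if_pos ⟨hj, hji.le, him⟩, if_pos ⟨by omega, hji, him⟩]
    have hc1 := hR.one_le_firstCol (by omega) hji (by omega)
    have hcn := hR.firstCol_le hji (by omega)
    have hjc := (hR.firstCol_le_iff hji (by omega) hcn).1 le_rfl
    generalize firstCol R i (j + 1) = c at *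
    have hstep := hR.col_step (c - 1) (by omega) i (by omega)
    rw [Nat.sub_add_cancel hc1] at hstep
    have := (hR.firstCol_le_iff (i := i) (j := j) (c := c - 1) (by omega) (by omega) (by omega)).2
      (by push_cast at *; omega)
    omega

theorem rowCount_triangleOf (hR : IsRankFunction n R) {m i c : ℕ} (him : i ≤ m) (hmn : m ≤ n)
    (hcn : c ≤ n) : (rowCount (triangleOf m R) i c : ℤ) = R i c := by
  have h0 := hR.nonneg (i := i) (by omega) hcn
  have hi := hR.le_left (i := i) (by omega) hcn
  have hset : {j ∈ Icc 1 i | triangleOf m R i j ≤ c} = Icc 1 (R i c).toNat := by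
    ext j
    simp only [mem_filter, mem_Icc]
    constructor
    · rintro ⟨⟨hj, hji⟩, h⟩
      rw [triangleOf, if_pos ⟨hj, hji, him⟩, hR.firstCol_le_iff hji (by omega) hcn] at h
      omega
    · rintro ⟨hj, hjR⟩
      refine ⟨⟨hj, by omega⟩, ?_⟩
      rw [triangleOf, if_pos ⟨hj, by omega, him⟩, hR.firstCol_le_iff (by omega) (by omega) hcn]
      omega
  rw [rowCount, hset, Nat.card_Icc]
  omega

end IsRankFunction

theorem eq_of_unit_steps {n : ℕ} {g h : ℕ → ℤ} (h0 : g 0 = h 0)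
    (hg : ∀ c < n, g (c + 1) = g c ∨ g (c + 1) = g c + 1)
    (hh : ∀ c < n, h (c + 1) = h c ∨ h (c + 1) = h c + 1)
    (hstep : ∀ c < n, (g (c + 1) = g c + 1 ↔ h (c + 1) = h c + 1)) :
    ∀ c ≤ n, g c = h c := by
  intro c hc
  induction c with
  | zero => exact h0
  | succ c ih =>
    have := ih (by omega)
    have := hstep c hc
    rcases hg c hc with h1 | h1 <;> rcases hh c hc with h2 | h2 <;> simp_all

theorem corr_iff_rk_eq_rowCount {n t : ℕ} (htn : t ≤ n) {A : Matrix (Fin n) (Fin n) ℤ}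
    (hA : IsASM n A) {f : ℕ → ℕ → ℕ} (hf : IsMT (t - 1) n f) :
    Corr n t A f ↔ ∀ i ≤ t - 1, ∀ c ≤ n, rk n A i c = rowCount f i c := by
  have hR := hA.isRankFunction
  have hstep_iff : ∀ i c, colSum n A i (c + 1) = 1 ↔ rk n A i (c + 1) = rk n A i c + 1 :=
    fun i c => by rw [colSum_eq_rk_sub]; omega
  constructor
  · intro hcorr i hi
    obtain rfl | hi1 := Nat.eq_zero_or_pos i
    · intro c hc
      simp [hR.zero_row c hc, rowCount]
    refine eq_of_unit_steps (by simp [hR.zero_col i (by omega), hf.rowCount_zero hi])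
      (fun c hc => hR.col_step c hc i (by omega)) (fun c hc => ?_) (fun c hc => ?_)
    · have := rowCount_le_rowCount_succ f i c
      have := hf.rowCount_succ_le (c := c) hi
      omega
    · rw [← hstep_iff i, hcorr i hi1 hi (c + 1) (by omega) hc, ← hf.rowCount_succ_eq_iff hi]
      omega
  · intro h i hi1 hi c hc1 hcn
    obtain ⟨c, rfl⟩ : ∃ d, c = d + 1 := ⟨c - 1, by omega⟩
    rw [hstep_iff i, h i hi _ hcn, h i hi _ (by omega), ← hf.rowCount_succ_eq_iff hi]
    omega

namespace InASMI

variable {n t : ℕ} {A : Matrix (Fin n) (Fin n) ℤ}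

-- Downward induction from `rk n A n c = c`: in the alternative `rk i c = rk (i + 1) c` of the
-- `ASM^I` condition, the induction hypothesis forces `rk i c = c`.
theorem rk_eq_min_rk_pred_add_one (ht1 : 1 ≤ t) (hA : InASMI n (Icc t (n - 1)) A) {i c : ℕ}
    (hti : t ≤ i) (hin : i ≤ n) (hc1 : 1 ≤ c) (hcn : c ≤ n) :
    rk n A i c = min (rk n A (i - 1) c + 1) c := by
  have hR := hA.1.isRankFunction
  induction hin using Nat.decreasingInduction with
  | self =>
    have := hR.row_step (n - 1) (by omega) c hcn
    rw [Nat.sub_add_cancel (by omega)] at this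
    have := hR.last_row c hcn
    omega
  | of_succ i hi ih =>
    have hstep := hR.row_step (i - 1) (by omega) c hcn
    rw [Nat.sub_add_cancel (by omega)] at hstep
    have := hR.le_right (i := i) hi.le hcn
    rcases hA.2 i (mem_Icc.2 ⟨hti, by omega⟩) c hc1 hcn with h | h
    · omega
    · have := ih (by omega)
      simp only [Nat.add_sub_cancel] at this
      omega

theorem rk_eq_min_add (ht1 : 1 ≤ t) (hA : InASMI n (Icc t (n - 1)) A) {i c : ℕ}
    (hti : t - 1 ≤ i) (hin : i ≤ n) (hc1 : 1 ≤ c) (hcn : c ≤ n) :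
    rk n A i c = min (rk n A (t - 1) c + (i - (t - 1) : ℕ)) c := by
  have hR := hA.1.isRankFunction
  induction i, hti using Nat.le_induction with
  | base =>
    have := hR.le_right (i := t - 1) hin hcn
    simp only [Nat.sub_self, Nat.cast_zero, add_zero]
    omega
  | succ i hi ih =>
    rw [hA.rk_eq_min_rk_pred_add_one ht1 (by omega) hin hc1 hcn, Nat.add_sub_cancel,
      ih (by omega)]
    omega

theorem rk_eq_extendRank (ht1 : 1 ≤ t) (htn : t ≤ n) (hA : InASMI n (Icc t (n - 1)) A)
    {f : ℕ → ℕ → ℕ} (hf : IsMT (t - 1) n f) (hcorr : Corr n t A f) {i c : ℕ} (hin : i ≤ n)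
    (hcn : c ≤ n) : rk n A i c = extendRank (t - 1) f i c := by
  have hrow := (corr_iff_rk_eq_rowCount htn hA.1 hf).1 hcorr
  obtain hi | hi := le_or_gt i (t - 1)
  · rw [hrow i hi c hcn, extendRank, if_pos hi]
  obtain rfl | hc1 := Nat.eq_zero_or_pos c
  · rw [hA.1.isRankFunction.zero_col i hin,
      (hf.isRankFunction_extendRank (by omega)).zero_col i hin]
  rw [hA.rk_eq_min_add ht1 hi.le hin hc1 hcn, hf.extendRank_of_le hi.le, hrow _ le_rfl c hcn]

end InASMI

theorem IsMT.inASMI_ofRank_extendRank {n t : ℕ} (ht1 : 1 ≤ t) (htn : t ≤ n)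
    {f : ℕ → ℕ → ℕ} (hf : IsMT (t - 1) n f) :
    InASMI n (Icc t (n - 1)) (ofRank n (extendRank (t - 1) f)) := by
  have hR := hf.isRankFunction_extendRank (by omega)
  refine ⟨hR.isASM_ofRank, fun i hi c _ hcn => ?_⟩
  rw [mem_Icc] at hi
  rw [hR.rk_ofRank (by omega) hcn, hR.rk_ofRank (by omega) hcn, hR.rk_ofRank (by omega) hcn,
    hf.extendRank_of_le (by omega), hf.extendRank_of_le (by omega),
    hf.extendRank_of_le (by omega)]
  have := hf.rowCount_le_right (c := c) le_rfl
  omega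

theorem stmt14_general (n : ℕ) (t : ℕ) (ht1 : 1 ≤ t) (htn : t ≤ n)
    (I : Finset ℕ) (hI : I = Finset.Icc t (n - 1)) :
    (∀ A, InASMI n I A → ∃! f : ℕ → ℕ → ℕ, IsMT (t - 1) n f ∧ Corr n t A f) ∧
    (∀ f : ℕ → ℕ → ℕ, IsMT (t - 1) n f →
      ∃! A : Matrix (Fin n) (Fin n) ℤ, InASMI n I A ∧ Corr n t A f) := by
  subst hI
  refine ⟨fun A hA => ?_, fun f hf => ?_⟩
  · have hR := hA.1.isRankFunction
    have hrow := fun g (hg : IsMT (t - 1) n g) => corr_iff_rk_eq_rowCount htn hA.1 hg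
    have hmt := hR.isMT_triangleOf (m := t - 1) (by omega)
    refine ⟨triangleOf (t - 1) (rk n A), ⟨hmt, (hrow _ hmt).2 fun i hi c hc =>
      (hR.rowCount_triangleOf hi (by omega) hc).symm⟩, ?_⟩
    rintro g ⟨hg, hcorr⟩
    refine hg.eq_of_rowCount_eq hmt fun i hi c hc => ?_
    have := (hrow g hg).1 hcorr i hi c hc
    have := hR.rowCount_triangleOf hi (by omega) hc
    omega
  · have hR := hf.isRankFunction_extendRank (by omega)
    have hA := hf.inASMI_ofRank_extendRank ht1 htn
    refine ⟨_, ⟨hA, (corr_iff_rk_eq_rowCount htn hA.1 hf).2 fun i hi c hc => ?_⟩, ?_⟩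
    · rw [hR.rk_ofRank (by omega) hc, extendRank, if_pos hi]
    rintro B ⟨hB, hcorr⟩
    exact eq_of_rk_eq fun i hi c hc => by
      rw [hB.rk_eq_extendRank ht1 htn hf hcorr hi hc, hR.rk_ofRank hi hc]

/-- For `I = {t, t+1, …, n-1}`, the map recording, for each `i ≤ t-1`, the columns whose
partial sum down to row `i` equals `1`, is a bijection from `ASM^I(n)` onto the set of
monotone triangles of size `t-1` with entries in `{1,…,n}`. -/
theorem stmt14 (n : ℕ) (hn : 1 ≤ n) (t : ℕ) (ht1 : 1 ≤ t) (htn : t ≤ n)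
    (I : Finset ℕ) (hI : I = Finset.Icc t (n - 1)) :
    (∀ A, InASMI n I A → ∃! f : ℕ → ℕ → ℕ, IsMT (t - 1) n f ∧ Corr n t A f) ∧
    (∀ f : ℕ → ℕ → ℕ, IsMT (t - 1) n f →
      ∃! A : Matrix (Fin n) (Fin n) ℤ, InASMI n I A ∧ Corr n t A f) :=
  stmt14_general n t ht1 htn I hI
end

section
/- For every n ≥ 2, taking I = {3, 4, ..., n-1} ⊆ [n-1] (which is empty when n ≤ 3), the cardinality of ASM^I(n) equals (n-1)·n·(n+4)/6. -/
def rowPS (n : ℕ) (A : Matrix (Fin n) (Fin n) ℤ) (p : Fin n) (j : ℕ) : ℤ :=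
  ∑ q : Fin n, if q.1 < j then A p q else 0

def colPS (n : ℕ) (A : Matrix (Fin n) (Fin n) ℤ) (q : Fin n) (i : ℕ) : ℤ :=
  ∑ p : Fin n, if p.1 < i then A p q else 0

variable {n : ℕ} {A : Matrix (Fin n) (Fin n) ℤ}

lemma rk_zero_i (j : ℕ) : rk n A 0 j = 0 := by simp [rk]

lemma rk_zero_j (i : ℕ) : rk n A i 0 = 0 := by simp [rk]

lemma rowPS_zero (p : Fin n) : rowPS n A p 0 = 0 := by simp [rowPS]

lemma colPS_zero (q : Fin n) : colPS n A q 0 = 0 := by simp [colPS]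

lemma rowPS_succ {j : ℕ} (hj : j < n) (p : Fin n) :
    rowPS n A p (j + 1) = rowPS n A p j + A p ⟨j, hj⟩ := by
  have h : A p ⟨j, hj⟩ = ∑ q : Fin n, if q = ⟨j, hj⟩ then A p q else 0 := by
    rw [Fintype.sum_ite_eq' (⟨j, hj⟩ : Fin n) (A p)]
  rw [h]
  unfold rowPS
  rw [← Finset.sum_add_distrib]
  refine Finset.sum_congr rfl fun q _ => ?_
  rcases eq_or_ne q (⟨j, hj⟩ : Fin n) with h1 | h1
  · subst h1; simp
  · have : q.1 ≠ j := fun hc => h1 (Fin.ext hc)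
    split_ifs <;> omega

lemma colPS_succ {i : ℕ} (hi : i < n) (q : Fin n) :
    colPS n A q (i + 1) = colPS n A q i + A ⟨i, hi⟩ q := by
  have h : A ⟨i, hi⟩ q = ∑ p : Fin n, if p = ⟨i, hi⟩ then A p q else 0 := by
    rw [Fintype.sum_ite_eq' (⟨i, hi⟩ : Fin n) (fun p => A p q)]
  rw [h]
  unfold colPS
  rw [← Finset.sum_add_distrib]
  refine Finset.sum_congr rfl fun p _ => ?_
  rcases eq_or_ne p (⟨i, hi⟩ : Fin n) with h1 | h1
  · subst h1; simp
  · have : p.1 ≠ i := fun hc => h1 (Fin.ext hc)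
    split_ifs <;> omega

lemma rk_succ_i {i : ℕ} (hi : i < n) (j : ℕ) :
    rk n A (i + 1) j = rk n A i j + rowPS n A ⟨i, hi⟩ j := by
  have h : rowPS n A ⟨i, hi⟩ j
      = ∑ p : Fin n, if p = ⟨i, hi⟩ then (∑ q : Fin n, if q.1 < j then A p q else 0) else 0 := by
    rw [Fintype.sum_ite_eq' (⟨i, hi⟩ : Fin n) (fun p => ∑ q : Fin n, if q.1 < j then A p q else 0)]
    rfl
  rw [h]
  unfold rk
  rw [← Finset.sum_add_distrib]
  refine Finset.sum_congr rfl fun p _ => ?_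
  rcases eq_or_ne p (⟨i, hi⟩ : Fin n) with h1 | h1
  · subst h1
    simp only [if_pos rfl]
    rw [show (∑ q : Fin n, if (i < i + 1 ∧ q.1 < j) then A ⟨i,hi⟩ q else 0)
        = ∑ q : Fin n, if q.1 < j then A ⟨i,hi⟩ q else 0 from
      Finset.sum_congr rfl fun q _ => by split_ifs <;> omega]
    rw [show (∑ q : Fin n, if (i < i ∧ q.1 < j) then A ⟨i,hi⟩ q else 0) = 0 from
      Finset.sum_eq_zero fun q _ => by split_ifs <;> omega]
    simp
  · have hne : p.1 ≠ i := fun hc => h1 (Fin.ext hc)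
    rw [if_neg h1, add_zero]
    refine Finset.sum_congr rfl fun q _ => ?_
    split_ifs <;> omega

lemma rk_succ_j {j : ℕ} (hj : j < n) (i : ℕ) :
    rk n A i (j + 1) = rk n A i j + colPS n A ⟨j, hj⟩ i := by
  have h : colPS n A ⟨j, hj⟩ i
      = ∑ q : Fin n, if q = ⟨j, hj⟩ then (∑ p : Fin n, if p.1 < i then A p q else 0) else 0 := by
    rw [Fintype.sum_ite_eq' (⟨j, hj⟩ : Fin n) (fun q => ∑ p : Fin n, if p.1 < i then A p q else 0)]
    rfl
  rw [h, show rk n A i (j+1) = ∑ q : Fin n, ∑ p : Fin n, if (p.1 < i ∧ q.1 < j + 1) then A p q else 0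
      from Finset.sum_comm,
    show rk n A i j = ∑ q : Fin n, ∑ p : Fin n, if (p.1 < i ∧ q.1 < j) then A p q else 0
      from Finset.sum_comm]
  rw [← Finset.sum_add_distrib]
  refine Finset.sum_congr rfl fun q _ => ?_
  rcases eq_or_ne q (⟨j, hj⟩ : Fin n) with h1 | h1
  · subst h1
    rw [if_pos rfl, ← Finset.sum_add_distrib]
    refine Finset.sum_congr rfl fun p _ => ?_
    simp only [Fin.val_mk]
    split_ifs <;> omega
  · have hne : q.1 ≠ j := fun hc => h1 (Fin.ext hc)
    rw [if_neg h1, add_zero]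
    refine Finset.sum_congr rfl fun p _ => ?_
    split_ifs <;> omega


section ASMfacts
variable (hA : IsASM n A)
include hA

lemma rowPS_mem (p : Fin n) {j : ℕ} (hj : j ≤ n) :
    rowPS n A p j = 0 ∨ rowPS n A p j = 1 := hA.2.1 p j hj

lemma colPS_mem (q : Fin n) {i : ℕ} (hi : i ≤ n) :
    colPS n A q i = 0 ∨ colPS n A q i = 1 := hA.2.2.1 q i hi

lemma rowPS_full (p : Fin n) : rowPS n A p n = 1 := by
  have : rowPS n A p n = ∑ q : Fin n, A p q :=
    Finset.sum_congr rfl fun q _ => if_pos q.2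
  rw [this]; exact hA.2.2.2.1 p

lemma colPS_full (q : Fin n) : colPS n A q n = 1 := by
  have : colPS n A q n = ∑ p : Fin n, A p q :=
    Finset.sum_congr rfl fun p _ => if_pos p.2
  rw [this]; exact hA.2.2.2.2 q

lemma rk_n_j : ∀ j ≤ n, rk n A n j = j := by
  intro j
  induction j with
  | zero => intro _; simp [rk_zero_j]
  | succ j ih =>
    intro hj
    have hj' : j < n := hj
    rw [rk_succ_j hj', ih (le_of_lt hj'), colPS_full hA]
    push_cast; ring

lemma rk_i_n : ∀ i ≤ n, rk n A i n = i := by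
  intro i
  induction i with
  | zero => intro _; simp [rk_zero_i]
  | succ i ih =>
    intro hi
    have hi' : i < n := hi
    rw [rk_succ_i hi', ih (le_of_lt hi'), rowPS_full hA]
    push_cast; ring

lemma rk_mono_i {j : ℕ} (hj : j ≤ n) :
    ∀ i i', i ≤ i' → i' ≤ n → rk n A i j ≤ rk n A i' j := by
  intro i i' hii'
  induction i' , hii' using Nat.le_induction with
  | base => intro _; exact le_refl _
  | succ i' hii' ih =>
    intro hi'
    have h1 : i' < n := hi'
    rw [rk_succ_i h1]
    have := rowPS_mem hA ⟨i', h1⟩ hj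
    have := ih (le_of_lt h1)
    omega

lemma rk_mono_j {i : ℕ} :
    ∀ j j', j ≤ j' → j' ≤ n → i ≤ n → rk n A i j ≤ rk n A i j' := by
  intro j j' hjj'
  induction j' , hjj' using Nat.le_induction with
  | base => intro _ _; exact le_refl _
  | succ j' hjj' ih =>
    intro hj' hi
    have h1 : j' < n := hj'
    rw [rk_succ_j h1]
    have := colPS_mem hA ⟨j', h1⟩ hi
    have := ih (le_of_lt h1) hi
    omega

end ASMfacts

def rfun (u a v i j : ℕ) : ℤ :=
  if i = 0 then 0
  else if i = 1 then (if a ≤ j then 1 else 0)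
  else min (j : ℤ) ((if u ≤ j then (1:ℤ) else 0) + (if v ≤ j then 1 else 0) + i - 2)

def Mmat (n u a v : ℕ) : Matrix (Fin n) (Fin n) ℤ :=
  Matrix.of fun p q =>
    rfun u a v (p.1+1) (q.1+1) - rfun u a v (p.1+1) q.1
      - rfun u a v p.1 (q.1+1) + rfun u a v p.1 q.1

section Forward
variable {u a v : ℕ} (hn : 2 ≤ n) (hu1 : 1 ≤ u) (hua : u ≤ a) (hav : a ≤ v)
  (huv : u < v) (hvn : v ≤ n)
include hn hu1 hua hav huv hvn

lemma rfun_zero_j (i : ℕ) : rfun u a v i 0 = 0 := by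
  simp only [rfun]; split_ifs <;> first | omega | exact ‹False›.elim

lemma rfun_zero_i (j : ℕ) : rfun u a v 0 j = 0 := by
  simp only [rfun]; norm_num

lemma rfun_rowstep {i j : ℕ} (hi : i < n) (hj : j ≤ n) :
    rfun u a v (i+1) j - rfun u a v i j = 0 ∨ rfun u a v (i+1) j - rfun u a v i j = 1 := by
  rcases i with _ | _ | i <;> simp only [rfun] <;> split_ifs <;>
    first | omega | exact ‹False›.elim

lemma rfun_colstep {i j : ℕ} (hi : i ≤ n) (hj : j < n) :
    rfun u a v i (j+1) - rfun u a v i j = 0 ∨ rfun u a v i (j+1) - rfun u a v i j = 1 := by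
  rcases i with _ | _ | i <;> simp only [rfun] <;> split_ifs <;>
    first | omega | exact ‹False›.elim

lemma rfun_row_full {i : ℕ} (hi : i < n) :
    rfun u a v (i+1) n - rfun u a v i n = 1 := by
  rcases i with _ | _ | i <;> simp only [rfun] <;> split_ifs <;>
    first | omega | exact ‹False›.elim

lemma rfun_col_full {j : ℕ} (hj : j < n) :
    rfun u a v n (j+1) - rfun u a v n j = 1 := by
  simp only [rfun]; split_ifs <;> first | omega | exact ‹False›.elim

lemma rowPS_Mmat (p : Fin n) : ∀ j ≤ n,
    rowPS n (Mmat n u a v) p j = rfun u a v (p.1+1) j - rfun u a v p.1 j := by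
  intro j
  induction j with
  | zero =>
    intro _
    rw [rowPS_zero, rfun_zero_j hn hu1 hua hav huv hvn,
      rfun_zero_j hn hu1 hua hav huv hvn]; ring
  | succ j ih =>
    intro hj
    have hj' : j < n := hj
    rw [rowPS_succ hj', ih (le_of_lt hj')]
    have he : Mmat n u a v p ⟨j, hj'⟩ =
        rfun u a v (p.1+1) (j+1) - rfun u a v (p.1+1) j
          - rfun u a v p.1 (j+1) + rfun u a v p.1 j := rfl
    rw [he]; ring

lemma colPS_Mmat (q : Fin n) : ∀ i ≤ n,
    colPS n (Mmat n u a v) q i = rfun u a v i (q.1+1) - rfun u a v i q.1 := by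
  intro i
  induction i with
  | zero =>
    intro _
    rw [colPS_zero, rfun_zero_i hn hu1 hua hav huv hvn,
      rfun_zero_i hn hu1 hua hav huv hvn]; ring
  | succ i ih =>
    intro hi
    have hi' : i < n := hi
    rw [colPS_succ hi', ih (le_of_lt hi')]
    have he : Mmat n u a v ⟨i, hi'⟩ q =
        rfun u a v (i+1) (q.1+1) - rfun u a v (i+1) q.1
          - rfun u a v i (q.1+1) + rfun u a v i q.1 := rfl
    rw [he]; ring

lemma rk_Mmat : ∀ i ≤ n, ∀ j ≤ n, rk n (Mmat n u a v) i j = rfun u a v i j := by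
  intro i
  induction i with
  | zero => intro _ j _; rw [rk_zero_i, rfun_zero_i hn hu1 hua hav huv hvn]
  | succ i ih =>
    intro hi j hj
    have hi' : i < n := hi
    rw [rk_succ_i hi', ih (le_of_lt hi') j hj,
      rowPS_Mmat hn hu1 hua hav huv hvn ⟨i, hi'⟩ j hj]
    simp only [Fin.val_mk]; ring

lemma Mmat_mem : InASMI n (Finset.Icc 3 (n-1)) (Mmat n u a v) := by
  constructor
  · refine ⟨?_, ?_, ?_, ?_, ?_⟩
    · intro p q
      have he : Mmat n u a v p q =
          (rfun u a v (p.1+1) (q.1+1) - rfun u a v p.1 (q.1+1))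
            - (rfun u a v (p.1+1) q.1 - rfun u a v p.1 q.1) := by
        show rfun u a v (p.1+1) (q.1+1) - rfun u a v (p.1+1) q.1
          - rfun u a v p.1 (q.1+1) + rfun u a v p.1 q.1 = _
        ring
      have h1 := rfun_rowstep hn hu1 hua hav huv hvn (i := p.1) (j := q.1+1) p.2 q.2
      have h2 := rfun_rowstep hn hu1 hua hav huv hvn (i := p.1) (j := q.1) p.2 (le_of_lt q.2)
      rw [he]; omega
    · intro p j hj
      have := rowPS_Mmat hn hu1 hua hav huv hvn p j hj
      unfold rowPS at this
      rw [this]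
      exact rfun_rowstep hn hu1 hua hav huv hvn p.2 hj
    · intro q i hi
      have := colPS_Mmat hn hu1 hua hav huv hvn q i hi
      unfold colPS at this
      rw [this]
      exact rfun_colstep hn hu1 hua hav huv hvn hi q.2
    · intro p
      have h0 : (∑ q : Fin n, Mmat n u a v p q) = rowPS n (Mmat n u a v) p n :=
        (Finset.sum_congr rfl fun q _ => (if_pos q.2).symm)
      rw [h0, rowPS_Mmat hn hu1 hua hav huv hvn p n le_rfl]
      exact rfun_row_full hn hu1 hua hav huv hvn p.2
    · intro q
      have h0 : (∑ p : Fin n, Mmat n u a v p q) = colPS n (Mmat n u a v) q n :=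
        (Finset.sum_congr rfl fun p _ => (if_pos p.2).symm)
      rw [h0, colPS_Mmat hn hu1 hua hav huv hvn q n le_rfl]
      exact rfun_col_full hn hu1 hua hav huv hvn q.2
  · intro i hi j hj1 hjn
    rw [Finset.mem_Icc] at hi
    have h3 : 3 ≤ i := hi.1
    have hin : i ≤ n - 1 := hi.2
    have e1 : rk n (Mmat n u a v) i j = rfun u a v i j :=
      rk_Mmat hn hu1 hua hav huv hvn i (by omega) j hjn
    have e2 : rk n (Mmat n u a v) (i-1) j = rfun u a v (i-1) j :=
      rk_Mmat hn hu1 hua hav huv hvn (i-1) (by omega) j hjn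
    have e3 : rk n (Mmat n u a v) (i+1) j = rfun u a v (i+1) j :=
      rk_Mmat hn hu1 hua hav huv hvn (i+1) (by omega) j hjn
    rw [e1, e2, e3]
    simp only [rfun]
    split_ifs <;> first | omega | exact ‹False›.elim

end Forward



section Surj

lemma surj (hn : 2 ≤ n) (hA : InASMI n (Finset.Icc 3 (n-1)) A) :
    ∃ u a v, 1 ≤ u ∧ u ≤ a ∧ a ≤ v ∧ u < v ∧ v ≤ n ∧ A = Mmat n u a v := by
  have hASM := hA.1
  have h0n : 0 < n := by omega
  have h1n : 1 < n := by omega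
  have hrk1 : ∀ j, rk n A 1 j = rowPS n A ⟨0, h0n⟩ j := by
    intro j
    have := rk_succ_i (A := A) h0n j
    rw [rk_zero_i] at this
    simpa using this
  have hrk2 : ∀ j, rk n A 2 j = rk n A 1 j + rowPS n A ⟨1, h1n⟩ j := by
    intro j
    exact rk_succ_i (A := A) h1n j
  have ha_mem : ∀ j ≤ n, rk n A 1 j = 0 ∨ rk n A 1 j = 1 := by
    intro j hj; rw [hrk1]; exact rowPS_mem hASM _ hj
  have ht_a : ∀ j ≤ n, rk n A 2 j = rk n A 1 j ∨ rk n A 2 j = rk n A 1 j + 1 := by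
    intro j hj
    have := rowPS_mem hASM ⟨1, h1n⟩ hj
    rw [hrk2]; omega
  have ha_n : rk n A 1 n = 1 := by
    have := rk_i_n hASM 1 (by omega); simpa using this
  have ht_n : rk n A 2 n = 2 := by
    have := rk_i_n hASM 2 hn; simpa using this
  have ht_step : ∀ j, j < n → rk n A 2 (j+1) ≤ rk n A 2 j + 1 := by
    intro j hj
    have e := rk_succ_j (A := A) hj 2
    have hc := colPS_mem hASM ⟨j, hj⟩ (i := 2) hn
    omega
  -- the column index of the 1 in row 1
  obtain ⟨α, hα1, hαn, haf⟩ :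
      ∃ a, 1 ≤ a ∧ a ≤ n ∧ ∀ j ≤ n, rk n A 1 j = if a ≤ j then 1 else 0 := by
    have hex : ∃ j, 1 ≤ rk n A 1 j := ⟨n, by rw [ha_n]⟩
    refine ⟨Nat.find hex, ?_, Nat.find_min' hex (by rw [ha_n]), ?_⟩
    · rcases Nat.eq_zero_or_pos (Nat.find hex) with h | h
      · exfalso
        have := Nat.find_spec hex
        rw [h, rk_zero_j] at this
        omega
      · omega
    · intro j hj
      split_ifs with h
      · have h1 := Nat.find_spec hex
        have h2 := rk_mono_j (i := 1) hASM _ j h hj (by omega)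
        have h3 := ha_mem j hj
        omega
      · have h1 := Nat.find_min hex (m := j) (by omega)
        have h2 := ha_mem j hj
        omega
  -- the two jump columns of row-sum 2
  obtain ⟨u, v, hu1, huv, hvn, htf⟩ :
      ∃ u v, 1 ≤ u ∧ u < v ∧ v ≤ n ∧ ∀ j ≤ n,
        rk n A 2 j = (if u ≤ j then (1:ℤ) else 0) + (if v ≤ j then 1 else 0) := by
    have hbd : ∀ j ≤ n, 0 ≤ rk n A 2 j ∧ rk n A 2 j ≤ 2 := by
      intro j hj
      have h1 := ha_mem j hj
      have h2 := ht_a j hj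
      omega
    have hexu : ∃ j, 1 ≤ rk n A 2 j := ⟨n, by rw [ht_n]; norm_num⟩
    have hexv : ∃ j, 2 ≤ rk n A 2 j := ⟨n, by rw [ht_n]⟩
    have hun : Nat.find hexu ≤ n := Nat.find_min' hexu (by rw [ht_n]; norm_num)
    have hvn : Nat.find hexv ≤ n := Nat.find_min' hexv (by rw [ht_n])
    have huv0 : Nat.find hexu ≤ Nat.find hexv := by
      apply Nat.find_min' hexu
      have := Nat.find_spec hexv
      omega
    have hu1 : 1 ≤ Nat.find hexu := by
      rcases Nat.eq_zero_or_pos (Nat.find hexu) with h | h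
      · exfalso
        have := Nat.find_spec hexu
        rw [h, rk_zero_j] at this
        omega
      · omega
    have huv : Nat.find hexu < Nat.find hexv := by
      rcases Nat.lt_or_ge (Nat.find hexu) (Nat.find hexv) with h | h
      · exact h
      have heq : Nat.find hexu = Nat.find hexv := le_antisymm huv0 h
      exfalso
      have h1 := Nat.find_spec hexv
      have h2 : rk n A 2 (Nat.find hexu - 1) = 0 := by
        have hnot := Nat.find_min hexu (m := Nat.find hexu - 1) (by omega)
        have := hbd (Nat.find hexu - 1) (by omega)
        omega
      have h3 := ht_step (Nat.find hexu - 1) (by omega)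
      rw [show Nat.find hexu - 1 + 1 = Nat.find hexu by omega] at h3
      rw [← heq] at h1
      omega
    refine ⟨Nat.find hexu, Nat.find hexv, hu1, huv, hvn, ?_⟩
    intro j hj
    have hb := hbd j hj
    split_ifs with h1 h2
    · have hv2 := Nat.find_spec hexv
      have := rk_mono_j (i := 2) hASM _ j h2 hj hn
      omega
    · have hu2 := Nat.find_spec hexu
      have hmono := rk_mono_j (i := 2) hASM _ j h1 hj hn
      have hnot := Nat.find_min hexv (m := j) (by omega)
      omega
    · exfalso; omega
    · have hnot := Nat.find_min hexu (m := j) (by omega)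
      omega
  -- ordering of the parameters
  have huα : u ≤ α := by
    by_contra h
    push_neg at h
    have h1 := haf α hαn
    have h2 := htf α hαn
    have h3 := ht_a α hαn
    rw [if_pos le_rfl] at h1
    rw [if_neg (by omega), if_neg (by omega)] at h2
    omega
  have hαv : α ≤ v := by
    by_contra h
    push_neg at h
    have h1 := haf v hvn
    have h2 := htf v hvn
    have h3 := ht_a v hvn
    rw [if_neg (by omega)] at h1
    rw [if_pos (by omega), if_pos le_rfl] at h2
    omega
  -- antitone rows condition
  have hAnti : ∀ p : ℕ, 2 ≤ p → p + 1 ≤ n - 1 → ∀ j, 1 ≤ j → j ≤ n →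
      ∀ (hp : p < n) (hp1 : p + 1 < n),
      rowPS n A ⟨p, hp⟩ j = 1 ∨ rowPS n A ⟨p+1, hp1⟩ j = 0 := by
    intro p hp2 hpn j hj1 hjn hp hp1
    have hmem : p + 1 ∈ Finset.Icc 3 (n-1) := by
      rw [Finset.mem_Icc]; omega
    have hcond := hA.2 (p+1) hmem j hj1 hjn
    rw [show p + 1 - 1 = p by omega] at hcond
    have e1 := rk_succ_i (A := A) hp j
    have e2 := rk_succ_i (A := A) hp1 j
    rcases hcond with h | h
    · left; omega
    · right; omega
  have hDmem : ∀ (p : ℕ) (hp : p < n), ∀ j ≤ n,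
      rowPS n A ⟨p, hp⟩ j = 0 ∨ rowPS n A ⟨p, hp⟩ j = 1 := fun p hp j hj =>
    rowPS_mem hASM _ hj
  -- zero propagation
  have hZeros : ∀ j ≤ n, ∀ p, 2 ≤ p → ∀ (hp : p < n), rowPS n A ⟨p, hp⟩ j = 0 →
      ∀ q, p ≤ q → ∀ (hq : q < n), rowPS n A ⟨q, hq⟩ j = 0 := by
    intro j hj p hp2 hp h0 q hpq
    induction q, hpq using Nat.le_induction with
    | base => intro _; exact h0
    | succ q hq ih =>
      intro hq1
      rcases Nat.eq_zero_or_pos j with hj0 | hj1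
      · subst hj0; exact rowPS_zero _
      have hqn : q < n := by omega
      have := hAnti q (by omega) (by omega) j hj1 hj hqn hq1
      have hihq := ih hqn
      rcases this with h | h
      · rw [hihq] at h; omega
      · exact h
  -- all-ones lower bound
  have hOnes : ∀ j ≤ n, ∀ i, 2 ≤ i → i ≤ n →
      (∀ p, 2 ≤ p → p < i → ∀ (hp : p < n), rowPS n A ⟨p, hp⟩ j = 1) →
      rk n A i j = rk n A 2 j + ((i:ℤ) - 2) := by
    intro j hj i hi2 hin
    induction i, hi2 using Nat.le_induction with
    | base => intro _; push_cast; ring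
    | succ i hi ih =>
      intro hall
      have hin' : i < n := by omega
      have h1 := ih (by omega) (fun p hp2 hpi hp => hall p hp2 (by omega) hp)
      have h2 := hall i (by omega) (by omega) hin'
      have e := rk_succ_i (A := A) hin' j
      rw [e, h1, h2]; push_cast; ring
  -- upper bound
  have hUb : ∀ j ≤ n, ∀ i, 2 ≤ i → i ≤ n →
      rk n A i j ≤ rk n A 2 j + ((i:ℤ) - 2) := by
    intro j hj i hi2 hin
    induction i, hi2 using Nat.le_induction with
    | base => push_cast; omega
    | succ i hi ih =>
      have hin' : i < n := by omega
      have h1 := ih (by omega)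
      have h2 := hDmem i hin' j hj
      have e := rk_succ_i (A := A) hin' j
      push_cast
      push_cast at h1
      omega
  -- main formula for i ≥ 2
  have hMain : ∀ i, 2 ≤ i → i ≤ n → ∀ j ≤ n,
      rk n A i j = min (j:ℤ) (rk n A 2 j + ((i:ℤ) - 2)) := by
    intro i hi2 hin j hj
    have hub1 := hUb j hj i hi2 hin
    have hub2 : rk n A i j ≤ (j:ℤ) := by
      have h1 := rk_mono_i hASM hj i n hin le_rfl
      have h2 := rk_n_j hASM j hj
      omega
    by_cases hall : ∀ p, 2 ≤ p → p < i → ∀ (hp : p < n), rowPS n A ⟨p, hp⟩ j = 1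
    · have h1 := hOnes j hj i hi2 hin hall
      omega
    · push_neg at hall
      obtain ⟨p, hp2, hpi, hp, hne⟩ := hall
      have hp0 : rowPS n A ⟨p, hp⟩ j = 0 := by
        rcases hDmem p hp j hj with h | h
        · exact h
        · exact absurd h hne
      have hconst : ∀ k, i ≤ k → k ≤ n → rk n A k j = rk n A i j := by
        intro k hik
        induction k, hik using Nat.le_induction with
        | base => intro _; rfl
        | succ k hk ih =>
          intro hk1
          have hkn : k < n := by omega
          have hz := hZeros j hj p hp2 hp hp0 k (by omega) hkn
          have e := rk_succ_i (A := A) hkn j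
          rw [e, hz, ih (by omega)]; ring
      have h1 := hconst n hin le_rfl
      have h2 := rk_n_j hASM j hj
      omega
  -- full rank formula
  refine ⟨u, α, v, hu1, huα, hαv, huv, hvn, ?_⟩
  have hrk_formula : ∀ i ≤ n, ∀ j ≤ n, rk n A i j = rfun u α v i j := by
    intro i hi j hj
    rcases i with _ | _ | i
    · rw [rk_zero_i]; simp [rfun]
    · rw [haf j hj]; simp [rfun]
    · have h1 := hMain (i+2) (by omega) hi j hj
      rw [htf j hj] at h1
      rw [h1]
      simp only [rfun]
      split_ifs <;> first | omega | exact ‹False›.elim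
  apply Matrix.ext
  intro p q
  rcases p with ⟨pv, hp⟩
  rcases q with ⟨qv, hq⟩
  have e1 := rk_succ_i (A := A) hp (qv+1)
  have e2 := rk_succ_i (A := A) hp qv
  have e3 := rowPS_succ (A := A) hq ⟨pv, hp⟩
  have f1 := hrk_formula (pv+1) (by omega) (qv+1) (by omega)
  have f2 := hrk_formula (pv+1) (by omega) qv (by omega)
  have f3 := hrk_formula pv (by omega) (qv+1) (by omega)
  have f4 := hrk_formula pv (by omega) qv (by omega)
  have he : Mmat n u α v ⟨pv, hp⟩ ⟨qv, hq⟩ =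
      rfun u α v (pv+1) (qv+1) - rfun u α v (pv+1) qv
        - rfun u α v pv (qv+1) + rfun u α v pv qv := rfl
  rw [he]
  omega

end Surj



section Inj

set_option maxHeartbeats 1000000 in
lemma Mmat_inj (hn : 2 ≤ n) {u a v u' a' v' : ℕ}
    (hu1 : 1 ≤ u) (hua : u ≤ a) (hav : a ≤ v) (huv : u < v) (hvn : v ≤ n)
    (hu1' : 1 ≤ u') (hua' : u' ≤ a') (hav' : a' ≤ v') (huv' : u' < v') (hvn' : v' ≤ n)
    (h : Mmat n u a v = Mmat n u' a' v') : u = u' ∧ a = a' ∧ v = v' := by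
  have key : ∀ i ≤ n, ∀ j ≤ n, rfun u a v i j = rfun u' a' v' i j := by
    intro i hi j hj
    rw [← rk_Mmat hn hu1 hua hav huv hvn i hi j hj, h,
      rk_Mmat hn hu1' hua' hav' huv' hvn' i hi j hj]
  have han : a ≤ n := le_trans hav hvn
  have han' : a' ≤ n := le_trans hav' hvn'
  have ha1 : a = a' := by
    have h1 := key 1 (by omega) a han
    have h2 := key 1 (by omega) a' han'
    simp only [rfun] at h1 h2
    split_ifs at h1 h2 <;> first | omega | exact ‹False›.elim
  have hu : u = u' := by
    have h1 := key 2 hn u (by omega)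
    have h2 := key 2 hn u' (by omega)
    simp only [rfun] at h1 h2
    split_ifs at h1 h2 <;> first | omega | exact ‹False›.elim
  have hv : v = v' := by
    have h1 := key 2 hn v (by omega)
    have h2 := key 2 hn v' (by omega)
    simp only [rfun] at h1 h2
    split_ifs at h1 h2 <;> first | omega | exact ‹False›.elim
  exact ⟨hu, ha1, hv⟩

end Inj

def Tri (n : ℕ) : Finset (Σ _ : ℕ, Σ _ : ℕ, ℕ) :=
  (Finset.Icc 1 n).sigma fun v => (Finset.Icc 1 v).sigma fun a => Finset.Icc 1 (min a (v-1))

lemma mem_Tri {n v a u : ℕ} :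
    (⟨v, a, u⟩ : Σ _ : ℕ, Σ _ : ℕ, ℕ) ∈ Tri n ↔
      (1 ≤ v ∧ v ≤ n) ∧ (1 ≤ a ∧ a ≤ v) ∧ (1 ≤ u ∧ u ≤ min a (v-1)) := by
  simp [Tri, Finset.mem_sigma, Finset.mem_Icc]

lemma gaussIcc : ∀ w : ℕ, 2 * (∑ a ∈ Finset.Icc 1 w, a) = w * (w+1) := by
  intro w
  induction w with
  | zero => simp
  | succ w ih =>
    rw [Finset.sum_Icc_succ_top (by omega : 1 ≤ w + 1), Nat.mul_add, ih]
    ring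

lemma sumMin (w : ℕ) : 2 * (∑ a ∈ Finset.Icc 1 (w+1), min a w) = w * (w+3) := by
  rw [Finset.sum_Icc_succ_top (by omega : 1 ≤ w + 1)]
  have h1 : (∑ a ∈ Finset.Icc 1 w, min a w) = ∑ a ∈ Finset.Icc 1 w, a := by
    refine Finset.sum_congr rfl fun a ha => ?_
    rw [Finset.mem_Icc] at ha
    omega
  rw [Nat.mul_add, h1, gaussIcc w]
  have hm : min (w+1) w = w := by omega
  rw [hm]; ring

lemma sumCubic : ∀ n : ℕ, (∑ v ∈ Finset.Icc 1 n, 3 * ((v-1) * (v+2))) = (n-1) * n * (n+4) := by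
  intro n
  induction n with
  | zero => simp
  | succ n ih =>
    rw [Finset.sum_Icc_succ_top (by omega : 1 ≤ n + 1), ih]
    rcases n with _ | m
    · simp
    · simp only [Nat.add_sub_cancel]
      ring

lemma card_Tri (n : ℕ) : 6 * (Tri n).card = (n-1) * n * (n+4) := by
  rw [Tri, Finset.card_sigma, Finset.mul_sum]
  have h1 : ∀ v ∈ Finset.Icc 1 n,
      6 * ((Finset.Icc 1 v).sigma fun a => Finset.Icc 1 (min a (v-1))).card
        = 3 * ((v-1) * (v+2)) := by
    intro v hv
    rw [Finset.mem_Icc] at hv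
    obtain ⟨w, rfl⟩ : ∃ w, v = w + 1 := ⟨v - 1, by omega⟩
    rw [Finset.card_sigma]
    have h2 : (∑ a ∈ Finset.Icc 1 (w+1), (Finset.Icc 1 (min a (w+1-1))).card)
        = ∑ a ∈ Finset.Icc 1 (w+1), min a w := by
      refine Finset.sum_congr rfl fun a ha => ?_
      rw [Nat.card_Icc]
      omega
    rw [h2]
    have h3 := sumMin w
    have h4 : 3 * ((w+1-1) * (w+1+2)) = 3 * (w * (w+3)) := by
      simp only [Nat.add_sub_cancel]; try ring
    rw [h4]
    omega
  rw [Finset.sum_congr rfl h1]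
  exact sumCubic n

/-- For `I = {3, 4, …, n-1}`, `|ASM^I(n)| = (n-1)·n·(n+4)/6`. -/
theorem stmt15 (n : ℕ) (hn : 2 ≤ n) :
    {A : Matrix (Fin n) (Fin n) ℤ | InASMI n (Finset.Icc 3 (n - 1)) A}.ncard =
      (n - 1) * n * (n + 4) / 6 := by
  have hset : {A : Matrix (Fin n) (Fin n) ℤ | InASMI n (Finset.Icc 3 (n - 1)) A}
      = ↑((Tri n).image (fun x => Mmat n x.2.2 x.2.1 x.1)) := by
    ext A
    simp only [Set.mem_setOf_eq, Finset.coe_image, Set.mem_image, Finset.mem_coe]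
    constructor
    · intro hA
      obtain ⟨u, a, v, hu1, hua, hav, huv, hvn, rfl⟩ := surj hn hA
      have hmem : (⟨v, a, u⟩ : Σ _ : ℕ, Σ _ : ℕ, ℕ) ∈ Tri n := by
        rw [mem_Tri]
        exact ⟨⟨by omega, hvn⟩, ⟨by omega, hav⟩, ⟨hu1, by omega⟩⟩
      exact ⟨⟨v, a, u⟩, hmem, rfl⟩
    · rintro ⟨⟨v, a, u⟩, hx, rfl⟩
      rw [mem_Tri] at hx
      obtain ⟨⟨hv1, hvn⟩, ⟨ha1, hav⟩, ⟨hu1, hu2⟩⟩ := hx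
      show InASMI n (Finset.Icc 3 (n-1)) (Mmat n u a v)
      exact Mmat_mem hn hu1 (by omega) hav (by omega) hvn
  rw [hset, Set.ncard_coe_finset]
  have hinj : Set.InjOn (fun x : Σ _ : ℕ, Σ _ : ℕ, ℕ => Mmat n x.2.2 x.2.1 x.1) ↑(Tri n) := by
    rintro ⟨v, a, u⟩ hx ⟨v', a', u'⟩ hy h
    rw [Finset.mem_coe, mem_Tri] at hx hy
    obtain ⟨⟨hv1, hvn⟩, ⟨ha1, hav⟩, ⟨hu1, hu2⟩⟩ := hx
    obtain ⟨⟨hv1', hvn'⟩, ⟨ha1', hav'⟩, ⟨hu1', hu2'⟩⟩ := hy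
    obtain ⟨h1, h2, h3⟩ := Mmat_inj hn hu1 (by omega) hav (by omega) hvn
      hu1' (by omega) hav' (by omega) hvn' h
    subst h1; subst h2; subst h3
    rfl
  rw [Finset.card_image_of_injOn hinj]
  have h6 := card_Tri n
  omega
end

section
/- For every n ≥ 3, taking I = {4, 5, ..., n-1} ⊆ [n-1] (which is empty when n ≤ 4), the cardinality of ASM^I(n) equals (n-2)·(n-1)·n·(n+1)·(n² + 14n + 54)/360. -/
namespace S16

/-- entries of `A` extended by zero to all of `ℕ × ℕ`. -/
def ae (n : ℕ) (A : Matrix (Fin n) (Fin n) ℤ) (p q : ℕ) : ℤ :=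
  if h : p < n ∧ q < n then A ⟨p, h.1⟩ ⟨q, h.2⟩ else 0

lemma ae_left {n A p q} (h : n ≤ p) : ae n A p q = 0 := by
  unfold ae; rw [dif_neg]; omega

lemma ae_right {n A p q} (h : n ≤ q) : ae n A p q = 0 := by
  unfold ae; rw [dif_neg]; omega

lemma sum_ite_fin {n : ℕ} (f : ℕ → ℤ) (hf : ∀ x, n ≤ x → f x = 0) (i : ℕ) :
    (∑ p : Fin n, if p.1 < i then f p.1 else 0) = ∑ p ∈ Finset.range i, f p := by
  rw [Fin.sum_univ_eq_sum_range (fun p => if p < i then f p else 0)]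
  rcases le_total n i with h | h
  · rw [← Finset.sum_subset (Finset.range_subset_range.2 h)
      (fun x _ hnx => hf x (by simpa using hnx))]
    exact Finset.sum_congr rfl fun x hx =>
      if_pos (lt_of_lt_of_le (Finset.mem_range.1 hx) h)
  · rw [← Finset.sum_subset (Finset.range_subset_range.2 h)
      (fun x _ hnx => by rw [if_neg]; simpa using hnx)]
    exact Finset.sum_congr rfl fun x hx => if_pos (Finset.mem_range.1 hx)

lemma rk_eq_sum (n : ℕ) (A : Matrix (Fin n) (Fin n) ℤ) (i j : ℕ) :
    rk n A i j = ∑ p ∈ Finset.range i, ∑ q ∈ Finset.range j, ae n A p q := by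
  unfold rk
  have h1 : ∀ p : Fin n, (∑ q : Fin n, if p.1 < i ∧ q.1 < j then A p q else 0)
      = if p.1 < i then (∑ q ∈ Finset.range j, ae n A p.1 q) else 0 := by
    intro p
    by_cases hp : p.1 < i
    · simp only [hp, true_and, if_pos]
      rw [← sum_ite_fin (f := fun q => ae n A p.1 q) (fun x hx => ae_right hx) j]
      refine Finset.sum_congr rfl fun q _ => ?_
      by_cases hq : q.1 < j
      · rw [if_pos hq, if_pos hq]
        unfold ae
        rw [dif_pos ⟨p.2, q.2⟩]
      · rw [if_neg hq, if_neg hq]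
    · simp [hp]
  rw [Finset.sum_congr rfl fun p _ => h1 p]
  exact sum_ite_fin (f := fun p => ∑ q ∈ Finset.range j, ae n A p q)
    (fun x hx => by
      refine Finset.sum_eq_zero fun q _ => ae_left hx) i

/-- partial sum of (0-based) row `t`, over columns `< j`. -/
def rowP (n : ℕ) (A : Matrix (Fin n) (Fin n) ℤ) (t j : ℕ) : ℤ :=
  ∑ q ∈ Finset.range j, ae n A t q

/-- partial sum of (0-based) column `c`, over rows `< i`. -/
def colP (n : ℕ) (A : Matrix (Fin n) (Fin n) ℤ) (c i : ℕ) : ℤ :=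
  ∑ p ∈ Finset.range i, ae n A p c

lemma rk_succ_left (n A i j) : rk n A (i+1) j = rk n A i j + rowP n A i j := by
  rw [rk_eq_sum, rk_eq_sum, Finset.sum_range_succ]; rfl

lemma rk_succ_right (n A i j) : rk n A i (j+1) = rk n A i j + colP n A j i := by
  rw [rk_eq_sum, rk_eq_sum]
  rw [show (∑ p ∈ Finset.range i, ∑ q ∈ Finset.range (j+1), ae n A p q)
      = ∑ p ∈ Finset.range i, ((∑ q ∈ Finset.range j, ae n A p q) + ae n A p j) from
    Finset.sum_congr rfl fun p _ => Finset.sum_range_succ _ _]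
  rw [Finset.sum_add_distrib]; rfl

lemma rk_zero_left (n A j) : rk n A 0 j = 0 := by simp [rk_eq_sum]

lemma rk_zero_right (n A i) : rk n A i 0 = 0 := by simp [rk_eq_sum]

end S16

namespace S16

variable {n : ℕ} {A : Matrix (Fin n) (Fin n) ℤ}

lemma ae_eq (p q : Fin n) : ae n A p.1 q.1 = A p q := by
  unfold ae; rw [dif_pos ⟨p.2, q.2⟩]

section ASMfacts
variable (hA : IsASM n A)
include hA

lemma rowP_mem (t : ℕ) {j : ℕ} (hj : j ≤ n) :
    rowP n A t j = 0 ∨ rowP n A t j = 1 := by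
  by_cases ht : t < n
  · have := hA.2.1 ⟨t, ht⟩ j hj
    have e1 : (∑ q : Fin n, if q.1 < j then A ⟨t, ht⟩ q else 0)
        = ∑ q : Fin n, if q.1 < j then ae n A t q.1 else 0 :=
      Finset.sum_congr rfl fun q _ => by simp [ae_eq ⟨t, ht⟩ q]
    rw [e1, sum_ite_fin (f := fun q => ae n A t q) (fun x hx => ae_right hx) j] at this
    exact this
  · left; exact Finset.sum_eq_zero fun q _ => ae_left (by omega)

lemma colP_mem (c : ℕ) {i : ℕ} (hi : i ≤ n) :
    colP n A c i = 0 ∨ colP n A c i = 1 := by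
  by_cases hc : c < n
  · have := hA.2.2.1 ⟨c, hc⟩ i hi
    have e1 : (∑ p : Fin n, if p.1 < i then A p ⟨c, hc⟩ else 0)
        = ∑ p : Fin n, if p.1 < i then ae n A p.1 c else 0 :=
      Finset.sum_congr rfl fun p _ => by simp [ae_eq p ⟨c, hc⟩]
    rw [e1, sum_ite_fin (f := fun p => ae n A p c) (fun x hx => ae_left hx) i] at this
    exact this
  · left; exact Finset.sum_eq_zero fun q _ => ae_right (by omega)

lemma rowP_full {t : ℕ} (ht : t < n) : rowP n A t n = 1 := by
  have := hA.2.2.2.1 ⟨t, ht⟩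
  rw [show (∑ q : Fin n, A ⟨t, ht⟩ q) = ∑ q : Fin n, ae n A t q.1 from
    Finset.sum_congr rfl fun q _ => (ae_eq ⟨t, ht⟩ q).symm] at this
  rwa [Fin.sum_univ_eq_sum_range (fun q => ae n A t q)] at this

lemma colP_full {c : ℕ} (hc : c < n) : colP n A c n = 1 := by
  have := hA.2.2.2.2 ⟨c, hc⟩
  rw [show (∑ p : Fin n, A p ⟨c, hc⟩) = ∑ p : Fin n, ae n A p.1 c from
    Finset.sum_congr rfl fun p _ => (ae_eq p ⟨c, hc⟩).symm] at this
  rwa [Fin.sum_univ_eq_sum_range (fun p => ae n A p c)] at this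

lemma rk_le {i : ℕ} (hi : i ≤ n) (j : ℕ) : rk n A i j ≤ j := by
  induction j with
  | zero => simp [rk_zero_right]
  | succ j ih =>
    rw [rk_succ_right]
    rcases le_or_gt n j with h | h
    · have : colP n A j i = 0 := Finset.sum_eq_zero fun q _ => ae_right h
      push_cast; omega
    · have := colP_mem hA j hi
      push_cast; omega

lemma rk_nonneg {j : ℕ} (hj : j ≤ n) (i : ℕ) : 0 ≤ rk n A i j := by
  induction i with
  | zero => simp [rk_zero_left]
  | succ i ih =>
    rw [rk_succ_left]
    have := rowP_mem hA i hj
    omega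

lemma rk_mono_right {i j j' : ℕ} (hi : i ≤ n) (h : j ≤ j') :
    rk n A i j ≤ rk n A i j' := by
  induction j', h using Nat.le_induction with
  | base => exact le_rfl
  | succ j' hjj ih =>
    rw [rk_succ_right]
    rcases le_or_gt n j' with hh | hh
    · have : colP n A j' i = 0 := Finset.sum_eq_zero fun q _ => ae_right hh
      omega
    · have := colP_mem hA j' hi
      omega

lemma rk_unit_right {i j : ℕ} (hi : i ≤ n) : rk n A i (j+1) ≤ rk n A i j + 1 := by
  rw [rk_succ_right]
  rcases le_or_gt n j with h | h
  · have : colP n A j i = 0 := Finset.sum_eq_zero fun q _ => ae_right h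
    omega
  · have := colP_mem hA j hi
    omega

lemma rk_full_left {j : ℕ} (hj : j ≤ n) : rk n A n j = j := by
  induction j with
  | zero => simp [rk_zero_right]
  | succ j ih =>
    rw [rk_succ_right, ih (by omega), colP_full hA (by omega)]
    push_cast; ring

lemma rk_full_right {i : ℕ} (hi : i ≤ n) : rk n A i n = i := by
  induction i with
  | zero => simp [rk_zero_left]
  | succ i ih =>
    rw [rk_succ_left, ih (by omega), rowP_full hA (by omega)]
    push_cast; ring

end ASMfacts

end S16

namespace S16

variable {n : ℕ} {A : Matrix (Fin n) (Fin n) ℤ}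

section Key

variable (hA : IsASM n A)
  (hC : ∀ i ∈ Finset.Icc 4 (n-1), ∀ j, 1 ≤ j → j ≤ n →
    rk n A i j = rk n A (i - 1) j + 1 ∨ rk n A i j = rk n A (i + 1) j)
include hA hC

/-- once a row (index ≥ 3, 0-based) has partial sum 0 at column j, all lower rows do too. -/
lemma zero_tail {j : ℕ} (hj1 : 1 ≤ j) (hj : j ≤ n) {t : ℕ} (ht3 : 3 ≤ t) (htn : t ≤ n - 1)
    (h0 : rowP n A t j = 0) : ∀ u, t ≤ u → u ≤ n - 1 → rowP n A u j = 0 := by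
  intro u hu
  induction u, hu using Nat.le_induction with
  | base => exact fun _ => h0
  | succ u huu ih =>
    intro hun
    have h1 := ih (by omega)
    have h2 := hC (u+1) (by simp; omega) j hj1 hj
    rcases h2 with h2 | h2
    · exfalso
      rw [show u + 1 - 1 = u from by omega] at h2
      rw [rk_succ_left] at h2
      omega
    · rw [rk_succ_left n A (u+1) j] at h2
      omega

lemma key_min {j : ℕ} (hj : j ≤ n) :
    ∀ i, 3 ≤ i → i ≤ n → rk n A i j = min (rk n A 3 j + ((i : ℤ) - 3)) (j : ℤ) := by
  intro i hi3
  induction i, hi3 using Nat.le_induction with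
  | base =>
    intro h3n
    have h1 : rk n A 3 j ≤ (j : ℤ) := rk_le hA h3n j
    simp; omega
  | succ i hi ih =>
    intro hin
    have hmin := ih (by omega)
    have hle : rk n A (i+1) j ≤ (j : ℤ) := rk_le hA hin j
    have hrs := rk_succ_left n A i j
    rcases Nat.eq_zero_or_pos j with rfl | hj1
    · simp only [rk_zero_right] at *
      simp; omega
    rcases le_or_gt (j : ℤ) (rk n A 3 j + ((i : ℤ) - 3)) with hcase | hcase
    · -- rk i j = j already
      have h1 : rk n A i j = (j : ℤ) := by omega
      have h2 : rk n A i j ≤ rk n A (i+1) j := by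
        have := rowP_mem hA i hj; omega
      omega
    · -- rk i j < j; show the step is 1
      have h1 : rk n A i j = rk n A 3 j + ((i:ℤ) - 3) := by omega
      have hrP := rowP_mem hA i hj
      rcases hrP with hrP | hrP
      · exfalso
        have htail : ∀ u, i ≤ u → u ≤ n - 1 → rowP n A u j = 0 :=
          zero_tail hA hC hj1 hj (by omega) (by omega) hrP
        -- conclude rk n A n j = rk n A i j < j, contradiction
        have hconst : ∀ u, i ≤ u → u ≤ n → rk n A u j = rk n A i j := by
          intro u hu
          induction u, hu using Nat.le_induction with
          | base => exact fun _ => rfl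
          | succ u huu ih2 =>
            intro hun
            rw [rk_succ_left, htail u (by omega) (by omega), ih2 (by omega)]
            ring
        have := hconst n (by omega) le_rfl
        rw [rk_full_left hA hj] at this
        omega
      · rw [hrs, h1, hrP]
        omega

end Key

end S16

namespace S16

variable {n : ℕ}

/-- general conversions between `Fin`-indexed conditional sums and `rowP`/`colP`. -/
lemma rowSum_eq (A : Matrix (Fin n) (Fin n) ℤ) (t : Fin n) (j : ℕ) :
    (∑ q : Fin n, if q.1 < j then A t q else 0) = rowP n A t.1 j := by
  have e1 : (∑ q : Fin n, if q.1 < j then A t q else 0)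
      = ∑ q : Fin n, if q.1 < j then ae n A t.1 q.1 else 0 :=
    Finset.sum_congr rfl fun q _ => by simp [ae_eq t q]
  rw [e1, sum_ite_fin (f := fun q => ae n A t.1 q) (fun x hx => ae_right hx) j]
  rfl

lemma colSum_eq (A : Matrix (Fin n) (Fin n) ℤ) (c : Fin n) (i : ℕ) :
    (∑ p : Fin n, if p.1 < i then A p c else 0) = colP n A c.1 i := by
  have e1 : (∑ p : Fin n, if p.1 < i then A p c else 0)
      = ∑ p : Fin n, if p.1 < i then ae n A p.1 c.1 else 0 :=
    Finset.sum_congr rfl fun p _ => by simp [ae_eq p c]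
  rw [e1, sum_ite_fin (f := fun p => ae n A p c.1) (fun x hx => ae_left hx) i]
  rfl

lemma rowSum_full_eq (A : Matrix (Fin n) (Fin n) ℤ) (t : Fin n) :
    (∑ q : Fin n, A t q) = rowP n A t.1 n := by
  rw [← rowSum_eq A t n]
  exact Finset.sum_congr rfl fun q _ => (if_pos q.2).symm

lemma colSum_full_eq (A : Matrix (Fin n) (Fin n) ℤ) (c : Fin n) :
    (∑ p : Fin n, A p c) = colP n A c.1 n := by
  rw [← colSum_eq A c n]
  exact Finset.sum_congr rfl fun p _ => (if_pos p.2).symm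

/-- The reconstructed rank function determined by a tuple. -/
def rho (b c1 c2 d1 d2 d3 : ℕ) : ℕ → ℕ → ℤ
  | 0, _ => 0
  | 1, j => if b ≤ j then 1 else 0
  | 2, j => (if c1 ≤ j then 1 else 0) + (if c2 ≤ j then 1 else 0)
  | (i+3), j => min ((if d1 ≤ j then 1 else 0) + (if d2 ≤ j then 1 else 0)
      + (if d3 ≤ j then 1 else 0) + (i : ℤ)) (j : ℤ)

/-- validity of a tuple. -/
structure OK (n b c1 c2 d1 d2 d3 : ℕ) : Prop where
  h1 : 1 ≤ d1
  h2 : d1 < d2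
  h3 : d2 < d3
  h4 : d3 ≤ n
  h5 : d1 ≤ c1
  h6 : c1 ≤ d2
  h7 : d2 ≤ c2
  h8 : c1 < c2
  h9 : c2 ≤ d3
  h10 : c1 ≤ b
  h11 : b ≤ c2

variable {b c1 c2 d1 d2 d3 : ℕ}

lemma rho_ge3 {i : ℕ} (h : 3 ≤ i) (j : ℕ) :
    rho b c1 c2 d1 d2 d3 i j = min ((if d1 ≤ j then 1 else 0) + (if d2 ≤ j then 1 else 0)
      + (if d3 ≤ j then 1 else 0) + ((i : ℤ) - 3)) (j : ℤ) := by
  obtain ⟨k, rfl⟩ : ∃ k, i = k + 3 := ⟨i - 3, by omega⟩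
  show min _ _ = _
  push_cast
  ring_nf

section RhoFacts
variable (hOK : OK n b c1 c2 d1 d2 d3)
include hOK

lemma rho_j0 (i : ℕ) : rho b c1 c2 d1 d2 d3 i 0 = 0 := by
  obtain ⟨g1, g2, g3, g4, g5, g6, g7, g8, g9, g10, g11⟩ := hOK
  match i with
  | 0 => rfl
  | 1 => simp only [rho]; rw [if_neg]; omega
  | 2 => simp only [rho]; rw [if_neg, if_neg] <;> omega
  | (i+3) => simp only [rho, min_def]; split_ifs <;> omega

lemma rho_stepi (i j : ℕ) :
    0 ≤ rho b c1 c2 d1 d2 d3 (i+1) j - rho b c1 c2 d1 d2 d3 i j ∧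
    rho b c1 c2 d1 d2 d3 (i+1) j - rho b c1 c2 d1 d2 d3 i j ≤ 1 := by
  obtain ⟨g1, g2, g3, g4, g5, g6, g7, g8, g9, g10, g11⟩ := hOK
  match i with
  | 0 => simp only [zero_add, rho]; split_ifs <;> omega
  | 1 => simp only [Nat.reduceAdd, rho]; split_ifs <;> omega
  | 2 => simp only [Nat.reduceAdd, rho, min_def]
         split_ifs <;> omega
  | (i+3) =>
      rw [show i + 3 + 1 = (i+1) + 3 from by omega]
      simp only [rho, min_def]
      split_ifs <;> omega

lemma rho_stepj (i j : ℕ) :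
    0 ≤ rho b c1 c2 d1 d2 d3 i (j+1) - rho b c1 c2 d1 d2 d3 i j ∧
    rho b c1 c2 d1 d2 d3 i (j+1) - rho b c1 c2 d1 d2 d3 i j ≤ 1 := by
  obtain ⟨g1, g2, g3, g4, g5, g6, g7, g8, g9, g10, g11⟩ := hOK
  match i with
  | 0 => simp only [rho]; omega
  | 1 => simp only [rho]; split_ifs <;> omega
  | 2 => simp only [rho]; split_ifs <;> omega
  | (i+3) => simp only [rho, min_def]; split_ifs <;> omega

lemma rho_i_n {i : ℕ} (hi : i ≤ n) : rho b c1 c2 d1 d2 d3 i n = i := by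
  obtain ⟨g1, g2, g3, g4, g5, g6, g7, g8, g9, g10, g11⟩ := hOK
  match i with
  | 0 => simp [rho]
  | 1 => simp only [rho]; rw [if_pos] <;> omega
  | 2 => simp only [rho]; rw [if_pos, if_pos] <;> omega
  | (i+3) => simp only [rho, min_def]; split_ifs <;> omega

lemma rho_n_j {j : ℕ} (hj : j ≤ n) : rho b c1 c2 d1 d2 d3 n j = j := by
  obtain ⟨g1, g2, g3, g4, g5, g6, g7, g8, g9, g10, g11⟩ := hOK
  rw [rho_ge3 (show 3 ≤ n by omega)]
  rw [min_def]; split_ifs <;> omega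

end RhoFacts

/-- the decoded matrix of a tuple. -/
def dec (n b c1 c2 d1 d2 d3 : ℕ) : Matrix (Fin n) (Fin n) ℤ :=
  Matrix.of fun p q =>
    (rho b c1 c2 d1 d2 d3 (p.1+1) (q.1+1) - rho b c1 c2 d1 d2 d3 p.1 (q.1+1))
      - (rho b c1 c2 d1 d2 d3 (p.1+1) q.1 - rho b c1 c2 d1 d2 d3 p.1 q.1)

lemma ae_dec {p q : ℕ} (hp : p < n) (hq : q < n) :
    ae n (dec n b c1 c2 d1 d2 d3) p q
      = (rho b c1 c2 d1 d2 d3 (p+1) (q+1) - rho b c1 c2 d1 d2 d3 p (q+1))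
        - (rho b c1 c2 d1 d2 d3 (p+1) q - rho b c1 c2 d1 d2 d3 p q) := by
  unfold ae
  rw [dif_pos ⟨hp, hq⟩]
  rfl

section DecFacts
variable (hOK : OK n b c1 c2 d1 d2 d3)
include hOK

lemma rowP_dec {t j : ℕ} (ht : t < n) (hj : j ≤ n) :
    rowP n (dec n b c1 c2 d1 d2 d3) t j
      = rho b c1 c2 d1 d2 d3 (t+1) j - rho b c1 c2 d1 d2 d3 t j := by
  unfold rowP
  rw [Finset.sum_congr rfl (fun q hq => ae_dec ht (by
    have := Finset.mem_range.1 hq; omega))]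
  rw [Finset.sum_range_sub (f := fun q => rho b c1 c2 d1 d2 d3 (t+1) q
      - rho b c1 c2 d1 d2 d3 t q) j]
  rw [rho_j0 hOK, rho_j0 hOK]
  ring

lemma colP_dec {c i : ℕ} (hc : c < n) (hi : i ≤ n) :
    colP n (dec n b c1 c2 d1 d2 d3) c i
      = rho b c1 c2 d1 d2 d3 i (c+1) - rho b c1 c2 d1 d2 d3 i c := by
  unfold colP
  have e1 : ∀ p ∈ Finset.range i, ae n (dec n b c1 c2 d1 d2 d3) p c
      = (rho b c1 c2 d1 d2 d3 (p+1) (c+1) - rho b c1 c2 d1 d2 d3 (p+1) c)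
        - (rho b c1 c2 d1 d2 d3 p (c+1) - rho b c1 c2 d1 d2 d3 p c) := by
    intro p hp
    rw [ae_dec (by have := Finset.mem_range.1 hp; omega) hc]
    ring
  rw [Finset.sum_congr rfl e1]
  rw [Finset.sum_range_sub (f := fun p => rho b c1 c2 d1 d2 d3 p (c+1)
      - rho b c1 c2 d1 d2 d3 p c) i]
  simp [rho]

lemma rk_dec {i j : ℕ} (hi : i ≤ n) (hj : j ≤ n) :
    rk n (dec n b c1 c2 d1 d2 d3) i j = rho b c1 c2 d1 d2 d3 i j := by
  rw [rk_eq_sum]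
  have e1 : ∀ p ∈ Finset.range i, (∑ q ∈ Finset.range j, ae n (dec n b c1 c2 d1 d2 d3) p q)
      = rho b c1 c2 d1 d2 d3 (p+1) j - rho b c1 c2 d1 d2 d3 p j := by
    intro p hp
    have hpn : p < n := by have := Finset.mem_range.1 hp; omega
    rw [Finset.sum_congr rfl (fun q hq => ae_dec hpn (by
      have := Finset.mem_range.1 hq; omega))]
    rw [Finset.sum_range_sub (f := fun q => rho b c1 c2 d1 d2 d3 (p+1) q
        - rho b c1 c2 d1 d2 d3 p q) j]
    rw [rho_j0 hOK, rho_j0 hOK]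
    ring
  rw [Finset.sum_congr rfl e1]
  rw [Finset.sum_range_sub (f := fun p => rho b c1 c2 d1 d2 d3 p j) i]
  simp [rho]

lemma dec_mem : InASMI n (Finset.Icc 4 (n-1)) (dec n b c1 c2 d1 d2 d3) := by
  constructor
  · refine ⟨?_, ?_, ?_, ?_, ?_⟩
    · intro i j
      have h1 := rho_stepj hOK (i.1+1) j.1
      have h2 := rho_stepj hOK i.1 j.1
      have : dec n b c1 c2 d1 d2 d3 i j
          = (rho b c1 c2 d1 d2 d3 (i.1+1) (j.1+1) - rho b c1 c2 d1 d2 d3 (i.1+1) j.1)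
            - (rho b c1 c2 d1 d2 d3 i.1 (j.1+1) - rho b c1 c2 d1 d2 d3 i.1 j.1) := by
        show ((_ - _) - (_ - _) : ℤ) = _
        ring
      rw [this]
      omega
    · intro i j hj
      rw [rowSum_eq, rowP_dec hOK i.2 hj]
      have := rho_stepi hOK i.1 j
      omega
    · intro c i hi
      rw [colSum_eq, colP_dec hOK c.2 hi]
      have := rho_stepj hOK i c.1
      omega
    · intro i
      rw [rowSum_full_eq, rowP_dec hOK i.2 le_rfl]
      rw [rho_i_n hOK (by omega), rho_i_n hOK (by omega)]
      push_cast; ring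
    · intro c
      rw [colSum_full_eq, colP_dec hOK c.2 le_rfl]
      rw [rho_n_j hOK (by omega), rho_n_j hOK (by omega)]
      push_cast; ring
  · intro i hi j hj1 hjn
    obtain ⟨g1, g2, g3, g4, g5, g6, g7, g8, g9, g10, g11⟩ := hOK
    have hi' := Finset.mem_Icc.1 hi
    have hOK' : OK n b c1 c2 d1 d2 d3 := ⟨g1,g2,g3,g4,g5,g6,g7,g8,g9,g10,g11⟩
    rw [rk_dec hOK' (by omega) hjn, rk_dec hOK' (by omega) hjn, rk_dec hOK' (by omega) hjn]
    rw [rho_ge3 (show 3 ≤ i by omega), rho_ge3 (show 3 ≤ i - 1 by omega),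
      rho_ge3 (show 3 ≤ i + 1 by omega)]
    rw [min_def, min_def, min_def]
    split_ifs <;> omega

end DecFacts

end S16

namespace S16

variable {n : ℕ} {A : Matrix (Fin n) (Fin n) ℤ}

section Forward

variable (hA : IsASM n A)
include hA

lemma rk_unit_left {i j : ℕ} (hj : j ≤ n) : rk n A (i+1) j ≤ rk n A i j + 1 := by
  rw [rk_succ_left]
  rcases le_or_gt n i with h | h
  · have : rowP n A i j = 0 := Finset.sum_eq_zero fun q _ => ae_left h
    omega
  · have := rowP_mem hA i hj
    omega

lemma rk_mono_left {i j : ℕ} (hj : j ≤ n) : rk n A i j ≤ rk n A (i+1) j := by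
  rw [rk_succ_left]
  rcases le_or_gt n i with h | h
  · have : rowP n A i j = 0 := Finset.sum_eq_zero fun q _ => ae_left h
    omega
  · have := rowP_mem hA i hj
    omega

lemma pos_facts {i k : ℕ} (hk : 1 ≤ k) (hki : k ≤ i) (hi : i ≤ n) :
    ∃ m, 1 ≤ m ∧ m ≤ n ∧ rk n A i m = k ∧
      (∀ j, j ≤ n → ((k:ℤ) ≤ rk n A i j ↔ m ≤ j)) := by
  have hex : ∃ j, (k:ℤ) ≤ rk n A i j :=
    ⟨n, by rw [rk_full_right hA hi]; exact_mod_cast hki⟩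
  refine ⟨Nat.find hex, ?_, ?_, ?_, ?_⟩
  · rcases Nat.eq_zero_or_pos (Nat.find hex) with h0 | h0
    · exfalso
      have := Nat.find_spec hex
      rw [h0, rk_zero_right] at this
      omega
    · omega
  · exact Nat.find_le (by rw [rk_full_right hA hi]; exact_mod_cast hki)
  · have hlow := Nat.find_spec hex
    have h0 : 1 ≤ Nat.find hex := by
      rcases Nat.eq_zero_or_pos (Nat.find hex) with h0 | h0
      · exfalso
        have := Nat.find_spec hex
        rw [h0, rk_zero_right] at this
        omega
      · omega
    have hup : rk n A i (Nat.find hex) ≤ rk n A i (Nat.find hex - 1) + 1 := by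
      have h := rk_unit_right (i := i) (j := Nat.find hex - 1) hA hi
      rwa [show Nat.find hex - 1 + 1 = Nat.find hex from by omega] at h
    have hmin : ¬ ((k:ℤ) ≤ rk n A i (Nat.find hex - 1)) :=
      Nat.find_min hex (by omega)
    omega
  · intro j hj
    constructor
    · intro hkj
      exact Nat.find_min' hex hkj
    · intro hmj
      calc (k:ℤ) ≤ rk n A i (Nat.find hex) := Nat.find_spec hex
        _ ≤ rk n A i j := rk_mono_right hA hi hmj

lemma rk_bd (t : ℕ) {j : ℕ} (hj : j ≤ n) :
    0 ≤ rk n A t j ∧ rk n A t j ≤ t := by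
  constructor
  · exact rk_nonneg hA hj t
  · induction t with
    | zero => simp [rk_zero_left]
    | succ t ih =>
      have := rk_unit_left hA (i := t) hj
      omega

end Forward

lemma forward (hA : IsASM n A)
    (hC : ∀ i ∈ Finset.Icc 4 (n-1), ∀ j, 1 ≤ j → j ≤ n →
      rk n A i j = rk n A (i - 1) j + 1 ∨ rk n A i j = rk n A (i + 1) j)
    (hn : 3 ≤ n) :
    ∃ b c1 c2 d1 d2 d3, OK n b c1 c2 d1 d2 d3 ∧ A = dec n b c1 c2 d1 d2 d3 := by
  obtain ⟨b, hb1, hbn, hbv, hbiff⟩ := pos_facts hA le_rfl (by omega : 1 ≤ 1) (by omega)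
  obtain ⟨c1, hc11, hc1n, hc1v, hc1iff⟩ := pos_facts hA le_rfl (by omega : 1 ≤ 2) (by omega)
  obtain ⟨c2, hc21, hc2n, hc2v, hc2iff⟩ :=
    pos_facts hA (by omega : 1 ≤ 2) (le_rfl : 2 ≤ 2) (by omega)
  obtain ⟨d1, hd11, hd1n, hd1v, hd1iff⟩ :=
    pos_facts hA le_rfl (by omega : 1 ≤ 3) (by omega)
  obtain ⟨d2, hd21, hd2n, hd2v, hd2iff⟩ :=
    pos_facts hA (by omega : 1 ≤ 2) (by omega : 2 ≤ 3) (by omega)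
  obtain ⟨d3, hd31, hd3n, hd3v, hd3iff⟩ :=
    pos_facts hA (by omega : 1 ≤ 3) (le_rfl : 3 ≤ 3) (by omega)
  -- step comparisons between consecutive rank rows
  have step12 : ∀ j, j ≤ n → rk n A 1 j ≤ rk n A 2 j ∧ rk n A 2 j ≤ rk n A 1 j + 1 :=
    fun j hj => ⟨rk_mono_left hA hj, rk_unit_left hA hj⟩
  have step23 : ∀ j, j ≤ n → rk n A 2 j ≤ rk n A 3 j ∧ rk n A 3 j ≤ rk n A 2 j + 1 :=
    fun j hj => ⟨rk_mono_left hA hj, rk_unit_left hA hj⟩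
  have hOK : OK n b c1 c2 d1 d2 d3 := by
    refine ⟨hd11, ?_, ?_, hd3n, ?_, ?_, ?_, ?_, ?_, ?_, ?_⟩
    · -- d1 < d2
      by_contra h
      have := (hd2iff d1 hd1n).2 (by omega)
      omega
    · -- d2 < d3
      by_contra h
      have := (hd3iff d2 hd2n).2 (by omega)
      omega
    · -- d1 ≤ c1
      have := (step23 c1 hc1n).1
      exact (hd1iff c1 hc1n).1 (by omega)
    · -- c1 ≤ d2
      have := (step23 d2 hd2n).2
      exact (hc1iff d2 hd2n).1 (by omega)
    · -- d2 ≤ c2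
      have := (step23 c2 hc2n).1
      exact (hd2iff c2 hc2n).1 (by omega)
    · -- c1 < c2
      by_contra h
      have := (hc2iff c1 hc1n).2 (by omega)
      omega
    · -- c2 ≤ d3
      have := (step23 d3 hd3n).2
      exact (hc2iff d3 hd3n).1 (by omega)
    · -- c1 ≤ b
      have := (step12 b hbn).1
      exact (hc1iff b hbn).1 (by omega)
    · -- b ≤ c2
      have := (step12 c2 hc2n).2
      exact (hbiff c2 hc2n).1 (by omega)
  -- rank values agree with rho
  have hrk_rho : ∀ i, i ≤ n → ∀ j, j ≤ n →
      rk n A i j = rho b c1 c2 d1 d2 d3 i j := by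
    intro i hi j hj
    match i with
    | 0 => simp [rk_zero_left, rho]
    | 1 =>
      have hbd := rk_bd hA 1 hj
      have h1 := hbiff j hj
      simp only [rho]
      split_ifs with h
      · have := h1.2 h; omega
      · have : ¬ ((1:ℤ) ≤ rk n A 1 j) := fun hx => h (h1.1 hx)
        omega
    | 2 =>
      have hbd := rk_bd hA 2 hj
      have h1 := hc1iff j hj
      have h2 := hc2iff j hj
      simp only [rho]
      by_cases u1 : c1 ≤ j
      · by_cases u2 : c2 ≤ j
        · have := h1.2 u1; have := h2.2 u2
          rw [if_pos u1, if_pos u2]; omega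
        · have := h1.2 u1
          have w : ¬ ((2:ℤ) ≤ rk n A 2 j) := fun hx => u2 (h2.1 hx)
          rw [if_pos u1, if_neg u2]; omega
      · have u2 : ¬ c2 ≤ j := fun hx => u1 (le_trans hOK.h8.le hx)
        have w : ¬ ((1:ℤ) ≤ rk n A 2 j) := fun hx => u1 (h1.1 hx)
        rw [if_neg u1, if_neg u2]; omega
    | (i+3) =>
      have hkey := key_min hA hC hj (i+3) (by omega) hi
      have hbd := rk_bd hA 3 hj
      have h1 := hd1iff j hj
      have h2 := hd2iff j hj
      have h3 := hd3iff j hj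
      have hval3 : rk n A 3 j = (if d1 ≤ j then (1:ℤ) else 0) + (if d2 ≤ j then 1 else 0)
          + (if d3 ≤ j then 1 else 0) := by
        by_cases u1 : d1 ≤ j
        · by_cases u2 : d2 ≤ j
          · by_cases u3 : d3 ≤ j
            · have := h3.2 u3
              rw [if_pos u1, if_pos u2, if_pos u3]; omega
            · have := h2.2 u2
              have w : ¬ ((3:ℤ) ≤ rk n A 3 j) := fun hx => u3 (h3.1 hx)
              rw [if_pos u1, if_pos u2, if_neg u3]; omega
          · have u3 : ¬ d3 ≤ j := fun hx => u2 (le_trans hOK.h3.le hx)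
            have := h1.2 u1
            have w : ¬ ((2:ℤ) ≤ rk n A 3 j) := fun hx => u2 (h2.1 hx)
            rw [if_pos u1, if_neg u2, if_neg u3]; omega
        · have u2 : ¬ d2 ≤ j := fun hx => u1 (le_trans hOK.h2.le hx)
          have u3 : ¬ d3 ≤ j := fun hx => u1 (le_trans (hOK.h2.le.trans hOK.h3.le) hx)
          have w : ¬ ((1:ℤ) ≤ rk n A 3 j) := fun hx => u1 (h1.1 hx)
          rw [if_neg u1, if_neg u2, if_neg u3]; omega
      rw [hkey, rho_ge3 (by omega), hval3]
  -- conclude A = dec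
  refine ⟨b, c1, c2, d1, d2, d3, hOK, ?_⟩
  apply Matrix.ext
  intro p q
  have h1 := rk_succ_left n A p.1 (q.1+1)
  have h2 := rk_succ_left n A p.1 q.1
  have h3 : rowP n A p.1 (q.1+1) = rowP n A p.1 q.1 + ae n A p.1 q.1 :=
    Finset.sum_range_succ _ _
  have h4 : ae n A p.1 q.1 = A p q := ae_eq p q
  have r1 := hrk_rho (p.1+1) (by omega) (q.1+1) (by omega)
  have r2 := hrk_rho p.1 (by omega) (q.1+1) (by omega)
  have r3 := hrk_rho (p.1+1) (by omega) q.1 (by omega)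
  have r4 := hrk_rho p.1 (by omega) q.1 (by omega)
  have hdq : dec n b c1 c2 d1 d2 d3 p q
      = (rho b c1 c2 d1 d2 d3 (p.1+1) (q.1+1) - rho b c1 c2 d1 d2 d3 p.1 (q.1+1))
        - (rho b c1 c2 d1 d2 d3 (p.1+1) q.1 - rho b c1 c2 d1 d2 d3 p.1 q.1) := rfl
  rw [hdq]
  linarith [h1, h2, h3, h4, r1, r2, r3, r4]

end S16

namespace S16

variable {n : ℕ}

set_option maxHeartbeats 1600000 in
lemma dec_inj {b c1 c2 d1 d2 d3 b' c1' c2' d1' d2' d3' : ℕ}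
    (h : OK n b c1 c2 d1 d2 d3) (h' : OK n b' c1' c2' d1' d2' d3')
    (he : dec n b c1 c2 d1 d2 d3 = dec n b' c1' c2' d1' d2' d3') :
    b = b' ∧ c1 = c1' ∧ c2 = c2' ∧ d1 = d1' ∧ d2 = d2' ∧ d3 = d3' := by
  have hr : ∀ i, i ≤ n → ∀ j, j ≤ n →
      rho b c1 c2 d1 d2 d3 i j = rho b' c1' c2' d1' d2' d3' i j := by
    intro i hi j hj
    rw [← rk_dec h hi hj, ← rk_dec h' hi hj, he]
  obtain ⟨g1, g2, g3, g4, g5, g6, g7, g8, g9, g10, g11⟩ := h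
  obtain ⟨k1, k2, k3, k4, k5, k6, k7, k8, k9, k10, k11⟩ := h'
  have hb1 : b' ≤ b := by
    have e := hr 1 (by omega) b (by omega)
    simp only [rho] at e
    by_contra hc
    rw [if_pos le_rfl, if_neg (by omega)] at e
    omega
  have hb2 : b ≤ b' := by
    have e := hr 1 (by omega) b' (by omega)
    simp only [rho] at e
    by_contra hc
    rw [if_pos le_rfl, if_neg (by omega)] at e
    omega
  have hc1a : c1' ≤ c1 := by
    have e := hr 2 (by omega) c1 (by omega)
    simp only [rho] at e
    by_contra hc
    rw [if_pos le_rfl, if_neg (by omega), if_neg (by omega), if_neg (by omega)] at e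
    omega
  have hc1b : c1 ≤ c1' := by
    have e := hr 2 (by omega) c1' (by omega)
    simp only [rho] at e
    by_contra hc
    rw [if_pos le_rfl, if_neg (by omega), if_neg (by omega), if_neg (by omega)] at e
    omega
  have hc2a : c2' ≤ c2 := by
    have e := hr 2 (by omega) c2 (by omega)
    simp only [rho] at e
    by_contra hc
    rw [if_pos (by omega), if_pos le_rfl, if_neg (by omega)] at e
    split_ifs at e <;> omega
  have hc2b : c2 ≤ c2' := by
    have e := hr 2 (by omega) c2' (by omega)
    simp only [rho] at e
    by_contra hc
    rw [if_pos (by omega), if_pos le_rfl, if_neg (by omega)] at e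
    split_ifs at e <;> omega
  have hd1a : d1' ≤ d1 := by
    have e := hr 3 (by omega) d1 (by omega)
    simp only [rho, min_def] at e
    by_contra hc
    split_ifs at e <;> omega
  have hd1b : d1 ≤ d1' := by
    have e := hr 3 (by omega) d1' (by omega)
    simp only [rho, min_def] at e
    by_contra hc
    split_ifs at e <;> omega
  have hd2a : d2' ≤ d2 := by
    have e := hr 3 (by omega) d2 (by omega)
    simp only [rho, min_def] at e
    by_contra hc
    split_ifs at e <;> omega
  have hd2b : d2 ≤ d2' := by
    have e := hr 3 (by omega) d2' (by omega)
    simp only [rho, min_def] at e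
    by_contra hc
    split_ifs at e <;> omega
  have hd3a : d3' ≤ d3 := by
    have e := hr 3 (by omega) d3 (by omega)
    simp only [rho, min_def] at e
    by_contra hc
    split_ifs at e <;> omega
  have hd3b : d3 ≤ d3' := by
    have e := hr 3 (by omega) d3' (by omega)
    simp only [rho, min_def] at e
    by_contra hc
    split_ifs at e <;> omega
  exact ⟨by omega, by omega, by omega, by omega, by omega, by omega⟩


/-- the tuple type: `⟨d3, d2, d1, c1, c2, b⟩`. -/
abbrev Tup : Type := Σ _ : ℕ, Σ _ : ℕ, Σ _ : ℕ, Σ _ : ℕ, Σ _ : ℕ, ℕ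

def TT (n : ℕ) : Finset Tup :=
  (Finset.Icc 3 n).sigma fun d3 =>
  (Finset.Icc 2 (d3-1)).sigma fun d2 =>
  (Finset.Icc 1 (d2-1)).sigma fun d1 =>
  (Finset.Icc d1 d2).sigma fun c1 =>
  (Finset.Icc (max d2 (c1+1)) d3).sigma fun c2 =>
  Finset.Icc c1 c2

def decT (n : ℕ) (t : Tup) : Matrix (Fin n) (Fin n) ℤ :=
  dec n t.2.2.2.2.2 t.2.2.2.1 t.2.2.2.2.1 t.2.2.1 t.2.1 t.1

lemma mem_TT {t : Tup} :
    t ∈ TT n ↔ OK n t.2.2.2.2.2 t.2.2.2.1 t.2.2.2.2.1 t.2.2.1 t.2.1 t.1 := by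
  obtain ⟨d3, d2, d1, c1, c2, b⟩ := t
  simp only [TT, Finset.mem_sigma, Finset.mem_Icc, max_le_iff]
  constructor
  · rintro ⟨⟨h1, h2⟩, ⟨h3, h4⟩, ⟨h5, h6⟩, ⟨h7, h8⟩, ⟨⟨h9, h10⟩, h11⟩, h12, h13⟩
    exact ⟨by omega, by omega, by omega, by omega, by omega, by omega,
      by omega, by omega, by omega, by omega, by omega⟩
  · rintro ⟨g1, g2, g3, g4, g5, g6, g7, g8, g9, g10, g11⟩
    refine ⟨⟨by omega, by omega⟩, ⟨by omega, by omega⟩, ⟨by omega, by omega⟩,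
      ⟨by omega, by omega⟩, ⟨⟨by omega, by omega⟩, by omega⟩, by omega, by omega⟩

lemma main_set (hn : 3 ≤ n) :
    {A : Matrix (Fin n) (Fin n) ℤ | InASMI n (Finset.Icc 4 (n-1)) A}
      = ↑((TT n).image (decT n)) := by
  ext A
  simp only [Set.mem_setOf_eq, Finset.coe_image, Set.mem_image, Finset.mem_coe]
  constructor
  · rintro ⟨hA, hC⟩
    obtain ⟨b, c1, c2, d1, d2, d3, hOK, rfl⟩ := forward hA hC hn
    exact ⟨⟨d3, d2, d1, c1, c2, b⟩, mem_TT.2 hOK, rfl⟩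
  · rintro ⟨t, ht, rfl⟩
    exact dec_mem (mem_TT.1 ht)

lemma ncard_eq (hn : 3 ≤ n) :
    {A : Matrix (Fin n) (Fin n) ℤ | InASMI n (Finset.Icc 4 (n-1)) A}.ncard
      = (TT n).card := by
  rw [main_set hn, Set.ncard_coe_finset]
  apply Finset.card_image_of_injOn
  intro t ht t' ht' he
  have h := mem_TT.1 ht
  have h' := mem_TT.1 ht'
  obtain ⟨e1, e2, e3, e4, e5, e6⟩ := dec_inj h h' he
  obtain ⟨d3, d2, d1, c1, c2, b⟩ := t
  obtain ⟨d3', d2', d1', c1', c2', b'⟩ := t'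
  simp only at e1 e2 e3 e4 e5 e6
  subst e1; subst e2; subst e3; subst e4; subst e5; subst e6
  rfl

lemma card_TT :
    (TT n).card = ∑ d3 ∈ Finset.Icc 3 n, ∑ d2 ∈ Finset.Icc 2 (d3-1),
      ∑ d1 ∈ Finset.Icc 1 (d2-1), ∑ c1 ∈ Finset.Icc d1 d2,
      ∑ c2 ∈ Finset.Icc (max d2 (c1+1)) d3, (Finset.Icc c1 c2).card := by
  simp [TT, Finset.card_sigma]

end S16

namespace S16

variable {n : ℕ}

noncomputable section Count

def Q1 (c1 d2 d3 : ℚ) : ℚ :=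
  1 + (3/2)*d3 + (1/2)*d3^2 - (1/2)*d2 - (1/2)*d2^2 - c1 - c1*d3 + c1*d2

def Q2 (d2 d3 : ℚ) : ℚ := (3/2)*d3 + (1/2)*d3^2 - (3/2)*d2 - d2*d3 + (1/2)*d2^2

def QT (d1 e d2 d3 : ℚ) : ℚ :=
  1 + (3/2)*d3 + (1/2)*d3^2 - (1/2)*d2 - (1/2)*d2^2
  + (1/2)*e + e*d3 + (1/2)*e*d3^2 - (1/2)*e*d2^2 - (1/2)*e^2 - (1/2)*e^2*d3 + (1/2)*e^2*d2
  - (3/2)*d1 - 2*d1*d3 - (1/2)*d1*d3^2 + d1*d2 + (1/2)*d1*d2^2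
  + (1/2)*d1^2 + (1/2)*d1^2*d3 - (1/2)*d1^2*d2

def Q3 (d1 d2 d3 : ℚ) : ℚ :=
  (3/2)*d3 + (1/2)*d3^2 + d2*d3 + (1/2)*d2*d3^2 - d2^2 - (1/2)*d2^2*d3
  - (3/2)*d1 - 2*d1*d3 - (1/2)*d1*d3^2 + d1*d2 + (1/2)*d1*d2^2
  + (1/2)*d1^2 + (1/2)*d1^2*d3 - (1/2)*d1^2*d2

def QP4 (m d2 d3 : ℚ) : ℚ :=
  (-2/3)*m + (7/12)*m*d3 + (1/4)*m*d3^2 + (5/12)*m*d2 + m*d2*d3 + (1/2)*m*d2*d3^2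
  - (3/4)*m*d2^2 - (1/2)*m*d2^2*d3 - (1/2)*m^2 - (3/4)*m^2*d3 - (1/4)*m^2*d3^2
  + (1/4)*m^2*d2 + (1/4)*m^2*d2^2 + (1/6)*m^3 + (1/6)*m^3*d3 - (1/6)*m^3*d2

def Q4 (d2 d3 : ℚ) : ℚ :=
  (-3/2)*d3 - (1/2)*d3^2 + (5/6)*d2 + (19/12)*d2*d3 + (1/4)*d2*d3^2 - (7/12)*d2^2
  + (1/4)*d2^2*d3 + (1/4)*d2^2*d3^2 - (1/3)*d2^3 - (1/3)*d2^3*d3 + (1/12)*d2^4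

def QP5 (m d3 : ℚ) : ℚ :=
  (19/60)*m - (2/3)*m*d3 - (1/3)*m*d3^2 + (1/24)*m^2 + (5/6)*m^2*d3 + (1/4)*m^2*d3^2
  - (1/3)*m^3 - (1/12)*m^3*d3 + (1/12)*m^3*d3^2 - (1/24)*m^4 - (1/12)*m^4*d3 + (1/60)*m^5

def Q5 (d3 : ℚ) : ℚ := (59/60)*d3 - (9/8)*d3^2 + (1/8)*d3^4 + (1/60)*d3^5

def Q6 (x : ℚ) : ℚ :=
  (3/10)*x - (13/180)*x^2 - (1/3)*x^3 + (5/72)*x^4 + (1/30)*x^5 + (1/360)*x^6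

lemma sumE1 {c1 d2 d3 : ℕ} (hc : c1 ≤ d2) (h : d2 ≤ d3) :
    ∑ c2 ∈ Finset.Icc d2 d3, ((Finset.Icc c1 c2).card : ℚ) = Q1 c1 d2 d3 := by
  induction d3, h using Nat.le_induction with
  | base =>
    rw [Finset.Icc_self, Finset.sum_singleton, Nat.card_Icc,
      Nat.cast_sub (by omega : c1 ≤ d2 + 1)]
    unfold Q1; push_cast; ring
  | succ d3 h3 ih =>
    rw [Finset.sum_Icc_succ_top (by omega : d2 ≤ d3 + 1), ih, Nat.card_Icc,
      Nat.cast_sub (by omega : c1 ≤ d3 + 1 + 1)]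
    unfold Q1; push_cast; ring

lemma sumE2 {d2 d3 : ℕ} (h : d2 ≤ d3) :
    ∑ c2 ∈ Finset.Icc (d2+1) d3, ((Finset.Icc d2 c2).card : ℚ) = Q2 d2 d3 := by
  induction d3, h using Nat.le_induction with
  | base =>
    rw [Finset.Icc_eq_empty (by omega), Finset.sum_empty]
    unfold Q2; ring
  | succ d3 h3 ih =>
    rw [Finset.sum_Icc_succ_top (by omega : d2 + 1 ≤ d3 + 1), ih, Nat.card_Icc,
      Nat.cast_sub (by omega : d2 ≤ d3 + 1 + 1)]
    unfold Q2; push_cast; ring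

lemma sumQ1 {d1 e : ℕ} (h : d1 ≤ e) (d2 d3 : ℕ) :
    ∑ c1 ∈ Finset.Icc d1 e, Q1 c1 d2 d3 = QT d1 e d2 d3 := by
  induction e, h using Nat.le_induction with
  | base =>
    rw [Finset.Icc_self, Finset.sum_singleton]
    unfold Q1 QT; ring
  | succ e he ih =>
    rw [Finset.sum_Icc_succ_top (by omega : d1 ≤ e + 1), ih]
    unfold Q1 QT; push_cast; ring

lemma sumLevel3 {d1 d2 d3 : ℕ} (h1 : 1 ≤ d1) (h2 : d1 < d2) (h3 : d2 < d3) :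
    ∑ c1 ∈ Finset.Icc d1 d2,
      (∑ c2 ∈ Finset.Icc (max d2 (c1+1)) d3, ((Finset.Icc c1 c2).card : ℚ))
      = Q3 d1 d2 d3 := by
  obtain ⟨e, rfl⟩ : ∃ e, d2 = e + 1 := ⟨d2 - 1, by omega⟩
  rw [Finset.sum_Icc_succ_top (by omega : d1 ≤ e + 1)]
  have hin : ∀ c1 ∈ Finset.Icc d1 e,
      (∑ c2 ∈ Finset.Icc (max (e+1) (c1+1)) d3, ((Finset.Icc c1 c2).card : ℚ))
        = Q1 c1 ((e+1 : ℕ) : ℚ) d3 := by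
    intro c1 hc1
    have hc1e := Finset.mem_Icc.1 hc1
    rw [show max (e+1) (c1+1) = e+1 from max_eq_left (by omega)]
    exact sumE1 (by omega) (by omega)
  rw [Finset.sum_congr rfl hin, sumQ1 (show d1 ≤ e by omega) (e+1) d3]
  rw [show max (e+1) ((e+1)+1) = (e+1)+1 from max_eq_right (by omega)]
  rw [sumE2 (show e + 1 ≤ d3 by omega)]
  unfold QT Q2 Q3; push_cast; ring

lemma sumQ3 (m d2 d3 : ℕ) :
    ∑ d1 ∈ Finset.Icc 1 m, Q3 d1 d2 d3 = QP4 m d2 d3 := by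
  induction m with
  | zero =>
    rw [Finset.Icc_eq_empty (by omega), Finset.sum_empty]
    unfold QP4; push_cast; ring
  | succ m ih =>
    rw [Finset.sum_Icc_succ_top (by omega : 1 ≤ m + 1), ih]
    unfold Q3 QP4; push_cast; ring

lemma sumLevel4 {d2 d3 : ℕ} (h2 : 2 ≤ d2) (h3 : d2 < d3) :
    ∑ d1 ∈ Finset.Icc 1 (d2-1), ∑ c1 ∈ Finset.Icc d1 d2,
      (∑ c2 ∈ Finset.Icc (max d2 (c1+1)) d3, ((Finset.Icc c1 c2).card : ℚ))
      = Q4 d2 d3 := by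
  have hin : ∀ d1 ∈ Finset.Icc 1 (d2-1),
      (∑ c1 ∈ Finset.Icc d1 d2,
        (∑ c2 ∈ Finset.Icc (max d2 (c1+1)) d3, ((Finset.Icc c1 c2).card : ℚ)))
        = Q3 d1 d2 d3 := by
    intro d1 hd1
    have hd1e := Finset.mem_Icc.1 hd1
    exact sumLevel3 (by omega) (by omega) h3
  rw [Finset.sum_congr rfl hin, sumQ3 (d2-1) d2 d3]
  obtain ⟨e, rfl⟩ : ∃ e, d2 = e + 1 := ⟨d2 - 1, by omega⟩
  rw [show (e+1) - 1 = e from by omega]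
  unfold QP4 Q4; push_cast; ring

lemma sumQ4 {m : ℕ} (h : 1 ≤ m) (d3 : ℕ) :
    ∑ d2 ∈ Finset.Icc 2 m, Q4 d2 d3 = QP5 m d3 := by
  induction m, h using Nat.le_induction with
  | base =>
    rw [Finset.Icc_eq_empty (by omega), Finset.sum_empty]
    unfold QP5; push_cast; ring
  | succ m hm ih =>
    rw [Finset.sum_Icc_succ_top (by omega : 2 ≤ m + 1), ih]
    unfold Q4 QP5; push_cast; ring

lemma sumLevel5 {d3 : ℕ} (h : 3 ≤ d3) :
    ∑ d2 ∈ Finset.Icc 2 (d3-1), ∑ d1 ∈ Finset.Icc 1 (d2-1), ∑ c1 ∈ Finset.Icc d1 d2,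
      (∑ c2 ∈ Finset.Icc (max d2 (c1+1)) d3, ((Finset.Icc c1 c2).card : ℚ))
      = Q5 d3 := by
  have hin : ∀ d2 ∈ Finset.Icc 2 (d3-1),
      (∑ d1 ∈ Finset.Icc 1 (d2-1), ∑ c1 ∈ Finset.Icc d1 d2,
        (∑ c2 ∈ Finset.Icc (max d2 (c1+1)) d3, ((Finset.Icc c1 c2).card : ℚ)))
        = Q4 d2 d3 := by
    intro d2 hd2
    have hd2e := Finset.mem_Icc.1 hd2
    exact sumLevel4 (by omega) (by omega)
  rw [Finset.sum_congr rfl hin, sumQ4 (by omega : 1 ≤ d3 - 1) d3]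
  obtain ⟨e, rfl⟩ : ∃ e, d3 = e + 1 := ⟨d3 - 1, by omega⟩
  rw [show (e+1) - 1 = e from by omega]
  unfold QP5 Q5; push_cast; ring

lemma sumQ5 {n : ℕ} (h : 2 ≤ n) :
    ∑ d3 ∈ Finset.Icc 3 n, Q5 d3 = Q6 n := by
  induction n, h using Nat.le_induction with
  | base =>
    rw [Finset.Icc_eq_empty (by omega), Finset.sum_empty]
    unfold Q6; push_cast; ring
  | succ n hn ih =>
    rw [Finset.sum_Icc_succ_top (by omega : 3 ≤ n + 1), ih]
    unfold Q5 Q6; push_cast; ring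

lemma card_TT_val (hn : 3 ≤ n) : ((TT n).card : ℚ) = Q6 n := by
  rw [card_TT]
  push_cast
  have hin : ∀ d3 ∈ Finset.Icc 3 n,
      (∑ d2 ∈ Finset.Icc 2 (d3-1), ∑ d1 ∈ Finset.Icc 1 (d2-1), ∑ c1 ∈ Finset.Icc d1 d2,
        (∑ c2 ∈ Finset.Icc (max d2 (c1+1)) d3, ((Finset.Icc c1 c2).card : ℚ)))
        = Q5 d3 := by
    intro d3 hd3
    have hd3e := Finset.mem_Icc.1 hd3
    exact sumLevel5 (by omega)
  rw [Finset.sum_congr rfl hin]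
  exact sumQ5 (by omega)

end Count

end S16

/-- For `I = {4, 5, …, n-1}`, `|ASM^I(n)| = (n-2)(n-1)n(n+1)(n² + 14n + 54)/360`. -/
theorem stmt16 (n : ℕ) (hn : 3 ≤ n) :
    {A : Matrix (Fin n) (Fin n) ℤ | InASMI n (Finset.Icc 4 (n - 1)) A}.ncard =
      (n - 2) * (n - 1) * n * (n + 1) * (n ^ 2 + 14 * n + 54) / 360 := by
  rw [S16.ncard_eq hn]
  obtain ⟨m, rfl⟩ : ∃ m, n = m + 3 := ⟨n - 3, by omega⟩
  have h1 : ((S16.TT (m+3)).card : ℚ) = S16.Q6 ((m+3 : ℕ) : ℚ) :=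
    S16.card_TT_val (by omega)
  have h2 : (S16.TT (m+3)).card * 360
      = (m+1) * (m+2) * (m+3) * (m+3+1) * ((m+3)^2 + 14*(m+3) + 54) := by
    have h3 : (((S16.TT (m+3)).card * 360 : ℕ) : ℚ)
        = (((m+1) * (m+2) * (m+3) * (m+3+1) * ((m+3)^2 + 14*(m+3) + 54) : ℕ) : ℚ) := by
      push_cast
      rw [h1]
      unfold S16.Q6
      push_cast
      ring
    exact_mod_cast h3
  rw [show m + 3 - 2 = m + 1 from by omega, show m + 3 - 1 = m + 2 from by omega]
  exact (Nat.div_eq_of_eq_mul_left (by norm_num) h2.symm).symm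
end

section
/- Let n ≥ 1 and let i_1, i_2, ..., i_l ∈ [n-1] be any finite sequence (in particular, a reduced word of any w ∈ S_n). Then the image of the composition π_{i_1} ∘ π_{i_2} ∘ ⋯ ∘ π_{i_l} : ASM(n) → ASM(n), equipped with the order induced from the Bruhat order on ASM(n), is a lattice; moreover, the join in ASM(n) of any two elements of this image again lies in the image, and the identity matrix is its minimum element. -/
/-!
The rank matrix of the join of two ASMs is the entrywise minimum of their rank matrices, and
the row update `r(i, j) ↦ min (r(i-1, j) + 1, r(i+1, j))` defining `π_i` commutes with entrywise
minima; so every `π_i`, hence every composite of them, commutes with joins. Each `π_i` also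
fixes the identity matrix, whose rank matrix `min i j` bounds that of every ASM from above, so
it is the minimum of `ASM(n)`. The image `S` of a composite thus contains this minimum and is
closed under joins. Meets exist in `S` because it is finite: the elements of `S` below both
`B` and `C` form a finite nonempty join-closed set, whose maximal element is its greatest one.
-/

section SupClosed

variable {α : Type*} [SemilatticeSup α] {s : Set α}

lemma SupClosed.exists_isGreatest_of_finite (hs : SupClosed s) (hfin : s.Finite)
    (hne : s.Nonempty) : ∃ a, IsGreatest s a := by
  obtain ⟨m, hm⟩ := hfin.exists_maximal hne
  exact ⟨m, hm.1, fun x hx => le_sup_right.trans (hm.2 (hs hm.1 hx) le_sup_left)⟩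

lemma SupClosed.exists_greatest_lowerBound_of_finite (hs : SupClosed s) (hfin : s.Finite)
    {a b c : α} (ha : a ∈ s) (hab : a ≤ b) (hac : a ≤ c) :
    ∃ e ∈ s, e ≤ b ∧ e ≤ c ∧ ∀ f ∈ s, f ≤ b → f ≤ c → f ≤ e := by
  have hs' : SupClosed {x | x ∈ s ∧ x ≤ b ∧ x ≤ c} :=
    fun _ ⟨hx, hxb, hxc⟩ _ ⟨hy, hyb, hyc⟩ => ⟨hs hx hy, sup_le hxb hyb, sup_le hxc hyc⟩
  obtain ⟨e, ⟨he, heb, hec⟩, hmax⟩ :=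
    hs'.exists_isGreatest_of_finite (hfin.subset fun _ hx => hx.1) ⟨a, ha, hab, hac⟩
  exact ⟨e, he, heb, hec, fun f hf hfb hfc => hmax ⟨hf, hfb, hfc⟩⟩

end SupClosed

lemma Fin.sum_ite_val_lt_succ {M : Type*} [AddCommMonoid M] {n : ℕ} (v : Fin n → M) {i : ℕ}
    (hi : i < n) :
    (∑ p : Fin n, if p.1 < i + 1 then v p else 0)
      = (∑ p : Fin n, if p.1 < i then v p else 0) + v ⟨i, hi⟩ := by
  have split : ∀ p : Fin n, (if p.1 < i + 1 then v p else 0)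
      = (if p.1 < i then v p else 0) + (if p = ⟨i, hi⟩ then v p else 0) := by
    intro p
    rcases eq_or_ne p ⟨i, hi⟩ with rfl | hp
    · simp
    · have : p.1 < i + 1 ↔ p.1 < i := by have : p.1 ≠ i := fun h => hp (Fin.ext h); omega
      simp [hp, this]
  rw [Finset.sum_congr rfl fun p _ => split p, Finset.sum_add_distrib, Finset.sum_ite_eq']
  simp

namespace ASM

open Matrix

variable {n : ℕ} (A : Matrix (Fin n) (Fin n) ℤ)

@[simp] lemma rk_zero_row (j : ℕ) : rk n A 0 j = 0 := by simp [rk]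

@[simp] lemma rk_zero_col (i : ℕ) : rk n A i 0 = 0 := by simp [rk]

lemma rk_transpose (i j : ℕ) : rk n Aᵀ i j = rk n A j i := by
  unfold rk
  rw [Finset.sum_comm]
  exact Finset.sum_congr rfl fun q _ => Finset.sum_congr rfl fun p _ => if_congr and_comm rfl rfl

lemma rk_succ_row (p : Fin n) (j : ℕ) :
    rk n A (p.1 + 1) j = rk n A p.1 j + ∑ q : Fin n, if q.1 < j then A p q else 0 := by
  have rows : ∀ i, rk n A i j
      = ∑ p : Fin n, if p.1 < i then ∑ q : Fin n, if q.1 < j then A p q else 0 else 0 := by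
    intro i
    refine Finset.sum_congr rfl fun p _ => ?_
    by_cases h : p.1 < i <;> simp [h]
  rw [rows, rows, Fin.sum_ite_val_lt_succ _ p.2]

lemma rk_succ_col (q : Fin n) (i : ℕ) :
    rk n A i (q.1 + 1) = rk n A i q.1 + ∑ p : Fin n, if p.1 < i then A p q else 0 := by
  simpa only [rk_transpose, Matrix.transpose_apply] using rk_succ_row Aᵀ q i

lemma rk_succ_succ (p q : Fin n) :
    rk n A (p.1 + 1) (q.1 + 1)
      = rk n A p.1 (q.1 + 1) + rk n A (p.1 + 1) q.1 - rk n A p.1 q.1 + A p q := by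
  rw [rk_succ_row A p (q.1 + 1), rk_succ_row A p q.1, Fin.sum_ite_val_lt_succ _ q.2]
  ring

lemma eq_of_rk_eq {A B : Matrix (Fin n) (Fin n) ℤ}
    (h : ∀ i j, 1 ≤ i → i ≤ n → 1 ≤ j → j ≤ n → rk n A i j = rk n B i j) : A = B := by
  have h' : ∀ i j, i ≤ n → j ≤ n → rk n A i j = rk n B i j := by
    intro i j hi hj
    rcases Nat.eq_zero_or_pos i with rfl | hi0
    · simp
    rcases Nat.eq_zero_or_pos j with rfl | hj0
    · simp
    exact h i j hi0 hi hj0 hj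
  ext p q
  have hA := rk_succ_succ A p q
  have hB := rk_succ_succ B p q
  rw [h' _ _ p.2 q.2, h' _ _ p.2 q.2.le, h' _ _ p.2.le q.2, h' _ _ p.2.le q.2.le] at hA
  linarith

def ofRank (n : ℕ) (r : ℕ → ℕ → ℤ) : Matrix (Fin n) (Fin n) ℤ :=
  Matrix.of fun p q => r (p.1 + 1) (q.1 + 1) - r p.1 (q.1 + 1) - r (p.1 + 1) q.1 + r p.1 q.1

lemma ofRank_apply (r : ℕ → ℕ → ℤ) (p q : Fin n) :
    ofRank n r p q = r (p.1 + 1) (q.1 + 1) - r p.1 (q.1 + 1) - r (p.1 + 1) q.1 + r p.1 q.1 :=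
  rfl

lemma rk_ofRank {r : ℕ → ℕ → ℤ} (hr_row : ∀ j, r 0 j = 0) (hr_col : ∀ i, r i 0 = 0)
    {i j : ℕ} (hi : i ≤ n) (hj : j ≤ n) : rk n (ofRank n r) i j = r i j := by
  induction i generalizing j with
  | zero => simp [hr_row]
  | succ i ihi =>
    induction j with
    | zero => simp [hr_col]
    | succ j ihj =>
      rw [rk_succ_succ (ofRank n r) ⟨i, hi⟩ ⟨j, hj⟩, ofRank_apply,
        ihi (by omega) hj, ihi (by omega) (by omega), ihj (by omega)]
      ring

structure IsASMRank (n : ℕ) (r : ℕ → ℕ → ℤ) : Prop where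
  zero_row : ∀ j ≤ n, r 0 j = 0
  zero_col : ∀ i ≤ n, r i 0 = 0
  step_row : ∀ i < n, ∀ j ≤ n, r i j ≤ r (i + 1) j ∧ r (i + 1) j ≤ r i j + 1
  step_col : ∀ i ≤ n, ∀ j < n, r i j ≤ r i (j + 1) ∧ r i (j + 1) ≤ r i j + 1
  full_rows : ∀ i ≤ n, r i n = i
  full_cols : ∀ j ≤ n, r n j = j

namespace IsASMRank

variable {r s : ℕ → ℕ → ℤ}

lemma congr (hr : IsASMRank n r) (hrs : ∀ i ≤ n, ∀ j ≤ n, r i j = s i j) : IsASMRank n s where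
  zero_row j hj := by rw [← hrs 0 (Nat.zero_le n) j hj, hr.zero_row j hj]
  zero_col i hi := by rw [← hrs i hi 0 (Nat.zero_le n), hr.zero_col i hi]
  step_row i hi j hj := by
    rw [← hrs i hi.le j hj, ← hrs (i + 1) hi j hj]; exact hr.step_row i hi j hj
  step_col i hi j hj := by
    rw [← hrs i hi j hj.le, ← hrs i hi (j + 1) hj]; exact hr.step_col i hi j hj
  full_rows i hi := by rw [← hrs i hi n le_rfl, hr.full_rows i hi]
  full_cols j hj := by rw [← hrs n le_rfl j hj, hr.full_cols j hj]

lemma min (hr : IsASMRank n r) (hs : IsASMRank n s) :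
    IsASMRank n (fun i j => min (r i j) (s i j)) where
  zero_row j hj := by simp [hr.zero_row j hj, hs.zero_row j hj]
  zero_col i hi := by simp [hr.zero_col i hi, hs.zero_col i hi]
  step_row i hi j hj := by
    have := hr.step_row i hi j hj; have := hs.step_row i hi j hj; omega
  step_col i hi j hj := by
    have := hr.step_col i hi j hj; have := hs.step_col i hi j hj; omega
  full_rows i hi := by simp [hr.full_rows i hi, hs.full_rows i hi]
  full_cols j hj := by simp [hr.full_cols j hj, hs.full_cols j hj]

lemma le_row (hr : IsASMRank n r) {i j : ℕ} (hi : i ≤ n) (hj : j ≤ n) : r i j ≤ i := by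
  induction i with
  | zero => simp [hr.zero_row j hj]
  | succ i ih => have := hr.step_row i hi j hj; push_cast; linarith [ih (by omega)]

lemma le_col (hr : IsASMRank n r) {i j : ℕ} (hi : i ≤ n) (hj : j ≤ n) : r i j ≤ j := by
  induction j with
  | zero => simp [hr.zero_col i hi]
  | succ j ih => have := hr.step_col i hi j hj; push_cast; linarith [ih (by omega)]

end IsASMRank

variable {A : Matrix (Fin n) (Fin n) ℤ}

lemma sum_row_prefix_eq (p : Fin n) (j : ℕ) :
    (∑ q : Fin n, if q.1 < j then A p q else 0) = rk n A (p.1 + 1) j - rk n A p.1 j := by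
  rw [rk_succ_row A p j]; ring

lemma sum_col_prefix_eq (q : Fin n) (i : ℕ) :
    (∑ p : Fin n, if p.1 < i then A p q else 0) = rk n A i (q.1 + 1) - rk n A i q.1 := by
  rw [rk_succ_col A q i]; ring

lemma sum_row_eq (p : Fin n) : ∑ q : Fin n, A p q = rk n A (p.1 + 1) n - rk n A p.1 n := by
  rw [← sum_row_prefix_eq]; exact Finset.sum_congr rfl fun q _ => (if_pos q.2).symm

lemma sum_col_eq (q : Fin n) : ∑ p : Fin n, A p q = rk n A n (q.1 + 1) - rk n A n q.1 := by
  rw [← sum_col_prefix_eq]; exact Finset.sum_congr rfl fun p _ => (if_pos p.2).symm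

lemma isASM_iff_isASMRank : IsASM n A ↔ IsASMRank n (rk n A) := by
  constructor
  · rintro ⟨-, hrow, hcol, hrow_sum, hcol_sum⟩
    refine ⟨fun _ _ => rk_zero_row A _, fun _ _ => rk_zero_col A _, ?_, ?_, ?_, ?_⟩
    · intro i hi j hj
      have := hrow ⟨i, hi⟩ j hj
      simp only [sum_row_prefix_eq] at this
      omega
    · intro i hi j hj
      have := hcol ⟨j, hj⟩ i hi
      simp only [sum_col_prefix_eq] at this
      omega
    · intro i hi
      induction i with
      | zero => simp
      | succ i ih =>
        have := hrow_sum ⟨i, hi⟩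
        rw [sum_row_eq] at this
        push_cast; linarith [ih (by omega)]
    · intro j hj
      induction j with
      | zero => simp
      | succ j ih =>
        have := hcol_sum ⟨j, hj⟩
        rw [sum_col_eq] at this
        push_cast; linarith [ih (by omega)]
  · intro hr
    refine ⟨fun p q => ?_, fun p j hj => ?_, fun q i hi => ?_, fun p => ?_, fun q => ?_⟩
    · have := rk_succ_succ A p q
      have := hr.step_row p p.2 q q.2.le
      have := hr.step_row p p.2 (q + 1) q.2
      omega
    · rw [sum_row_prefix_eq]; have := hr.step_row p p.2 j hj; omega
    · rw [sum_col_prefix_eq]; have := hr.step_col i hi q q.2; omega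
    · rw [sum_row_eq, hr.full_rows _ p.2, hr.full_rows _ p.2.le]; push_cast; ring
    · rw [sum_col_eq, hr.full_cols _ q.2, hr.full_cols _ q.2.le]; push_cast; ring

lemma rk_idMat {i : ℕ} (hi : i ≤ n) (j : ℕ) : rk n (idMat n) i j = min (i : ℤ) j := by
  induction i with
  | zero => simp
  | succ i ih =>
    have row : (∑ q : Fin n, if q.1 < j then idMat n ⟨i, hi⟩ q else 0)
        = if i < j then 1 else 0 := by
      rw [Finset.sum_eq_single ⟨i, hi⟩ (fun q _ hq => by simp [idMat, Ne.symm hq]) (by simp)]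
      simp [idMat]
    rw [rk_succ_row _ ⟨i, hi⟩, row, ih (by omega)]
    split_ifs <;> omega

lemma isASM_idMat : IsASM n (idMat n) := by
  have hmin : IsASMRank n fun i j => min (i : ℤ) j :=
    ⟨fun _ _ => by simp, fun _ _ => by simp, fun _ _ _ _ => by omega, fun _ _ _ _ => by omega,
      fun _ _ => by omega, fun _ _ => by omega⟩
  exact isASM_iff_isASMRank.mpr (hmin.congr fun _ hi j _ => (rk_idMat hi j).symm)

lemma idMat_blE (hA : IsASM n A) : blE n (idMat n) A := by
  intro i j _ hi _ hj
  have hr := isASM_iff_isASMRank.mp hA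
  rw [rk_idMat hi]
  exact le_min (hr.le_row hi hj) (hr.le_col hi hj)

def rankJoin (n : ℕ) (A B : Matrix (Fin n) (Fin n) ℤ) : Matrix (Fin n) (Fin n) ℤ :=
  ofRank n fun i j => min (rk n A i j) (rk n B i j)

variable {B : Matrix (Fin n) (Fin n) ℤ}

lemma rk_rankJoin {i j : ℕ} (hi : i ≤ n) (hj : j ≤ n) :
    rk n (rankJoin n A B) i j = min (rk n A i j) (rk n B i j) :=
  rk_ofRank (by simp) (by simp) hi hj

lemma isASM_rankJoin (hA : IsASM n A) (hB : IsASM n B) : IsASM n (rankJoin n A B) :=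
  isASM_iff_isASMRank.mpr <| ((isASM_iff_isASMRank.mp hA).min (isASM_iff_isASMRank.mp hB)).congr
    fun _ hi _ hj => (rk_rankJoin hi hj).symm

lemma blE_antisymm (hAB : blE n A B) (hBA : blE n B A) : A = B :=
  eq_of_rk_eq fun i j h₁ h₂ h₃ h₄ => le_antisymm (hBA i j h₁ h₂ h₃ h₄) (hAB i j h₁ h₂ h₃ h₄)

lemma blE_rankJoin_left : blE n A (rankJoin n A B) :=
  fun _ _ _ hi _ hj => (rk_rankJoin hi hj).trans_le (min_le_left _ _)

lemma blE_rankJoin_right : blE n B (rankJoin n A B) :=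
  fun _ _ _ hi _ hj => (rk_rankJoin hi hj).trans_le (min_le_right _ _)

lemma rankJoin_blE {C : Matrix (Fin n) (Fin n) ℤ} (hAC : blE n A C) (hBC : blE n B C) :
    blE n (rankJoin n A B) C := fun i j h₁ hi h₃ hj =>
  (le_min (hAC i j h₁ hi h₃ hj) (hBC i j h₁ hi h₃ hj)).trans_eq (rk_rankJoin hi hj).symm

def BruhatOrder (n : ℕ) : Type := Matrix (Fin n) (Fin n) ℤ

instance : SemilatticeSup (BruhatOrder n) where
  le := blE n
  le_refl _ _ _ _ _ _ _ := le_rfl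
  le_trans _ _ _ hAB hBC i j h₁ h₂ h₃ h₄ := (hBC i j h₁ h₂ h₃ h₄).trans (hAB i j h₁ h₂ h₃ h₄)
  le_antisymm _ _ := blE_antisymm
  sup := rankJoin n
  le_sup_left _ _ := blE_rankJoin_left
  le_sup_right _ _ := blE_rankJoin_right
  sup_le _ _ _ := rankJoin_blE

def IsPiOperator (n i : ℕ) (f : Matrix (Fin n) (Fin n) ℤ → Matrix (Fin n) (Fin n) ℤ) : Prop :=
  ∀ A, IsASM n A →
    IsASM n (f A) ∧
    (∀ a j, 1 ≤ a → a ≤ n → 1 ≤ j → j ≤ n → a ≠ i → rk n (f A) a j = rk n A a j) ∧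
    (∀ j, 1 ≤ j → j ≤ n → rk n (f A) i j = min (rk n A (i - 1) j + 1) (rk n A (i + 1) j))

namespace IsPiOperator

variable {i : ℕ} {f : Matrix (Fin n) (Fin n) ℤ → Matrix (Fin n) (Fin n) ℤ}

lemma map_idMat (hf : IsPiOperator n i f) (hi : i < n) : f (idMat n) = idMat n := by
  obtain ⟨-, hrows, hrow⟩ := hf _ isASM_idMat
  refine eq_of_rk_eq fun a j ha₁ ha hj₁ hj => ?_
  rcases eq_or_ne a i with rfl | hai
  · rw [hrow j hj₁ hj, rk_idMat ha, rk_idMat (by omega), rk_idMat hi]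
    omega
  · exact hrows a j ha₁ ha hj₁ hj hai

lemma map_rankJoin (hf : IsPiOperator n i f) (hi : i < n) (hA : IsASM n A) (hB : IsASM n B) :
    f (rankJoin n A B) = rankJoin n (f A) (f B) := by
  obtain ⟨-, hrows, hrow⟩ := hf _ (isASM_rankJoin hA hB)
  obtain ⟨-, hrowsA, hrowA⟩ := hf A hA
  obtain ⟨-, hrowsB, hrowB⟩ := hf B hB
  refine eq_of_rk_eq fun a j ha₁ ha hj₁ hj => ?_
  rw [rk_rankJoin ha hj]
  rcases eq_or_ne a i with rfl | hai
  · rw [hrow j hj₁ hj, hrowA j hj₁ hj, hrowB j hj₁ hj, rk_rankJoin (i := a - 1) (by omega) hj,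
      rk_rankJoin (i := a + 1) hi hj]
    omega
  · rw [hrows a j ha₁ ha hj₁ hj hai, hrowsA a j ha₁ ha hj₁ hj hai, hrowsB a j ha₁ ha hj₁ hj hai,
      rk_rankJoin ha hj]

end IsPiOperator

def wordOp (pi : ℕ → Matrix (Fin n) (Fin n) ℤ → Matrix (Fin n) (Fin n) ℤ) (l : List ℕ) :
    Matrix (Fin n) (Fin n) ℤ → Matrix (Fin n) (Fin n) ℤ :=
  l.foldr (fun i g => pi i ∘ g) id

section wordOp

variable {pi : ℕ → Matrix (Fin n) (Fin n) ℤ → Matrix (Fin n) (Fin n) ℤ} {l : List ℕ}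

lemma isASM_wordOp (hl : ∀ i ∈ l, IsPiOperator n i (pi i)) (hA : IsASM n A) :
    IsASM n (wordOp pi l A) := by
  induction l with
  | nil => exact hA
  | cons i l ih =>
    rw [List.forall_mem_cons] at hl
    exact (hl.1 _ (ih hl.2)).1

lemma wordOp_idMat (hl : ∀ i ∈ l, i < n ∧ IsPiOperator n i (pi i)) :
    wordOp pi l (idMat n) = idMat n := by
  induction l with
  | nil => rfl
  | cons i l ih =>
    rw [List.forall_mem_cons] at hl
    exact (congrArg (pi i) (ih hl.2)).trans (hl.1.2.map_idMat hl.1.1)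

lemma wordOp_rankJoin (hl : ∀ i ∈ l, i < n ∧ IsPiOperator n i (pi i)) (hA : IsASM n A)
    (hB : IsASM n B) :
    wordOp pi l (rankJoin n A B) = rankJoin n (wordOp pi l A) (wordOp pi l B) := by
  induction l with
  | nil => rfl
  | cons i l ih =>
    rw [List.forall_mem_cons] at hl
    have hASM : ∀ i ∈ l, IsPiOperator n i (pi i) := fun i hi => (hl.2 i hi).2
    exact (congrArg (pi i) (ih hl.2)).trans
      (hl.1.2.map_rankJoin hl.1.1 (isASM_wordOp hASM hA) (isASM_wordOp hASM hB))

end wordOp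

lemma setOf_isASM_finite : {A : Matrix (Fin n) (Fin n) ℤ | IsASM n A}.Finite := by
  refine (Set.Finite.pi fun _ => Set.Finite.pi fun _ => Set.toFinite ({-1, 0, 1} : Set ℤ)).subset
    fun A hA => ?_
  simpa [Set.mem_pi] using hA.1

end ASM

open ASM in
theorem stmt18_general (n : ℕ)
    (pi : ℕ → Matrix (Fin n) (Fin n) ℤ → Matrix (Fin n) (Fin n) ℤ)
    (hpi : ∀ i ∈ Finset.Icc 1 (n - 1), ∀ A, IsASM n A →
      IsASM n (pi i A) ∧
      (∀ a j, 1 ≤ a → a ≤ n → 1 ≤ j → j ≤ n → a ≠ i → rk n (pi i A) a j = rk n A a j) ∧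
      (∀ j, 1 ≤ j → j ≤ n →
        rk n (pi i A) i j = min (rk n A (i - 1) j + 1) (rk n A (i + 1) j)))
    (l : List ℕ) (hl : ∀ i ∈ l, i ∈ Finset.Icc 1 (n - 1))
    (S : Set (Matrix (Fin n) (Fin n) ℤ))
    (hS : S = {B | ∃ A, IsASM n A ∧
      B = (l.foldr (fun i g => pi i ∘ g) (id : Matrix (Fin n) (Fin n) ℤ → _)) A}) :
    (∀ B ∈ S, IsASM n B) ∧
    (idMat n ∈ S ∧ ∀ B ∈ S, blE n (idMat n) B) ∧
    (∀ B ∈ S, ∀ C ∈ S, ∀ D, IsASM n D → blE n B D → blE n C D →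
      (∀ E, IsASM n E → blE n B E → blE n C E → blE n D E) → D ∈ S) ∧
    (∀ B ∈ S, ∀ C ∈ S, ∃ J ∈ S, blE n B J ∧ blE n C J ∧
      ∀ F ∈ S, blE n B F → blE n C F → blE n J F) ∧
    (∀ B ∈ S, ∀ C ∈ S, ∃ E ∈ S, blE n E B ∧ blE n E C ∧
      ∀ F ∈ S, blE n F B → blE n F C → blE n F E) := by
  have hops : ∀ i ∈ l, i < n ∧ IsPiOperator n i (pi i) := fun i hi =>
    ⟨by have := Finset.mem_Icc.mp (hl i hi); omega, hpi i (hl i hi)⟩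
  change S = {B | ∃ A, IsASM n A ∧ B = wordOp pi l A} at hS
  have hASM : ∀ B ∈ S, IsASM n B := by
    rw [hS]
    rintro _ ⟨A, hA, rfl⟩
    exact isASM_wordOp (fun i hi => (hops i hi).2) hA
  have hid : idMat n ∈ S := hS ▸ ⟨idMat n, isASM_idMat, (wordOp_idMat hops).symm⟩
  have hjoin : ∀ B ∈ S, ∀ C ∈ S, rankJoin n B C ∈ S := by
    rw [hS]
    rintro _ ⟨A, hA, rfl⟩ _ ⟨B, hB, rfl⟩
    exact ⟨rankJoin n A B, isASM_rankJoin hA hB, (wordOp_rankJoin hops hA hB).symm⟩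
  refine ⟨hASM, ⟨hid, fun B hB => idMat_blE (hASM B hB)⟩, ?_, ?_, ?_⟩
  · intro B hB C hC D _ hBD hCD hD
    have hjoin_le : blE n (rankJoin n B C) D := rankJoin_blE hBD hCD
    have hle_join := hD _ (isASM_rankJoin (hASM B hB) (hASM C hC)) blE_rankJoin_left
      blE_rankJoin_right
    exact blE_antisymm hle_join hjoin_le ▸ hjoin B hB C hC
  · exact fun B hB C hC => ⟨_, hjoin B hB C hC, blE_rankJoin_left, blE_rankJoin_right,
      fun _ _ => rankJoin_blE⟩
  · intro B hB C hC
    have hsup : SupClosed (α := BruhatOrder n) S := fun B hB C hC => hjoin B hB C hC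
    exact hsup.exists_greatest_lowerBound_of_finite (setOf_isASM_finite.subset hASM) hid
      (idMat_blE (hASM B hB)) (idMat_blE (hASM C hC))

/-- For any operators `π_i` (`i ∈ [n-1]`) acting on `ASM(n)` as in the paper (fixing all rows
of the rank matrix except row `i`, where the value becomes
`min (r_A(i-1,j)+1) (r_A(i+1,j))`), and any finite sequence `i_1, …, i_l` of indices in
`[n-1]`, the image `S` of `π_{i_1} ∘ ⋯ ∘ π_{i_l}` on `ASM(n)`, with the induced Bruhat order,
is a lattice: joins computed in `ASM(n)` of elements of `S` lie in `S` (and are joins in `S`),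
pairwise meets exist in `S`, and the identity matrix is the minimum element of `S`. -/
theorem stmt18 (n : ℕ) (hn : 1 ≤ n)
    (pi : ℕ → Matrix (Fin n) (Fin n) ℤ → Matrix (Fin n) (Fin n) ℤ)
    (hpi : ∀ i ∈ Finset.Icc 1 (n - 1), ∀ A, IsASM n A →
      IsASM n (pi i A) ∧
      (∀ a j, 1 ≤ a → a ≤ n → 1 ≤ j → j ≤ n → a ≠ i → rk n (pi i A) a j = rk n A a j) ∧
      (∀ j, 1 ≤ j → j ≤ n →
        rk n (pi i A) i j = min (rk n A (i - 1) j + 1) (rk n A (i + 1) j)))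
    (l : List ℕ) (hl : ∀ i ∈ l, i ∈ Finset.Icc 1 (n - 1))
    (S : Set (Matrix (Fin n) (Fin n) ℤ))
    (hS : S = {B | ∃ A, IsASM n A ∧
      B = (l.foldr (fun i g => pi i ∘ g) (id : Matrix (Fin n) (Fin n) ℤ → _)) A}) :
    (∀ B ∈ S, IsASM n B) ∧
    (idMat n ∈ S ∧ ∀ B ∈ S, blE n (idMat n) B) ∧
    (∀ B ∈ S, ∀ C ∈ S, ∀ D, IsASM n D → blE n B D → blE n C D →
      (∀ E, IsASM n E → blE n B E → blE n C E → blE n D E) → D ∈ S) ∧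
    (∀ B ∈ S, ∀ C ∈ S, ∃ J ∈ S, blE n B J ∧ blE n C J ∧
      ∀ F ∈ S, blE n B F → blE n C F → blE n J F) ∧
    (∀ B ∈ S, ∀ C ∈ S, ∃ E ∈ S, blE n E B ∧ blE n E C ∧
      ∀ F ∈ S, blE n F B → blE n F C → blE n F E) :=
  stmt18_general n pi hpi l hl S hS
end
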